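/- arXiv:0903.5332 — 7 statements merged into one kernel-verified Lean document; each statement's English description precedes it below -/
import Mathlib

section
/- Let X be a real Banach space and f : X → ℝ ∪ {+∞} a proper convex lower semicontinuous function. For any x** ∈ X** there exists α > 0 such that f + δ_α is proper, convex, lower semicontinuous and f**(x**) = (f + δ_α)**(x**), where δ_α is the indicator function of the closed ball of radius α centered at 0 in X. -/
open Filter Topology NormedSpace

noncomputable section

/-- Convexity for extended-real-valued functions. -/
def ConvexFn {E : Type*} [AddCommMonoid E] [SMul ℝ E] (f : E → EReal) : Prop :=
  ∀ x y : E, ∀ a b : ℝ, 0 ≤ a → 0 ≤ b → a + b = 1 →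
    f (a • x + b • y) ≤ (a : EReal) * f x + (b : EReal) * f y

/-- Properness: not identically `⊤` and never `⊥`. -/
def ProperFn {E : Type*} (f : E → EReal) : Prop :=
  (∃ x, f x ≠ ⊤) ∧ ∀ x, f x ≠ ⊥

/-- Fenchel conjugate. -/
def fconj {X : Type*} [NormedAddCommGroup X] [NormedSpace ℝ X] (f : X → EReal) :
    StrongDual ℝ X → EReal :=
  fun p => ⨆ x : X, ((p x : ℝ) : EReal) - f x

/-- Indicator function of the closed ball of radius `α` centered at `0`. -/
def indBall {X : Type*} [NormedAddCommGroup X] (α : ℝ) : X → EReal :=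
  fun x => if ‖x‖ ≤ α then (0 : EReal) else ⊤

namespace Aux

lemma mul_ne_bot' (a : ℝ) (ha : 0 < a) (v : EReal) (hv : v ≠ ⊥) : (a:EReal) * v ≠ ⊥ := by
  induction v with
  | bot => simp at hv
  | coe y => simp [← EReal.coe_mul]
  | top => rw [EReal.mul_top_of_pos (by exact_mod_cast ha)]; simp

lemma distrib' (a : ℝ) (ha : 0 < a) (u v : EReal) (hu : u ≠ ⊥) (hv : v ≠ ⊥) :
    (a:EReal) * (u + v) = a * u + a * v := by
  induction u with
  | bot => simp at hu
  | coe x => induction v with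
    | bot => simp at hv
    | coe y => rw [← EReal.coe_add, ← EReal.coe_mul, ← EReal.coe_mul, ← EReal.coe_mul,
        ← EReal.coe_add, mul_add]
    | top => rw [EReal.add_top_of_ne_bot (by simp), EReal.mul_top_of_pos (by exact_mod_cast ha),
        EReal.add_top_of_ne_bot (mul_ne_bot' a ha _ (by simp))]
  | top => rw [EReal.top_add_of_ne_bot hv, EReal.mul_top_of_pos (by exact_mod_cast ha),
      EReal.top_add_of_ne_bot (mul_ne_bot' a ha _ hv)]

lemma mul_mono (a : ℝ) (ha : 0 ≤ a) {u v : EReal} (h : u ≤ v) : (a:EReal) * u ≤ a * v :=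
  mul_le_mul_of_nonneg_left h (by exact_mod_cast ha)

lemma sub_mono (w : EReal) {u v : EReal} (h : u ≤ v) : w - v ≤ w - u :=
  add_le_add le_rfl (EReal.neg_le_neg_iff.mpr h)

variable {X : Type*} [NormedAddCommGroup X] [NormedSpace ℝ X]

lemma indBall_nonneg (α : ℝ) (x : X) : (0:EReal) ≤ indBall α x := by
  unfold indBall; split <;> simp

lemma indBall_ne_bot (α : ℝ) (x : X) : indBall α x ≠ ⊥ := by
  unfold indBall; split <;> simp

lemma indBall_of_le {α : ℝ} {x : X} (h : ‖x‖ ≤ α) : indBall α x = 0 := if_pos h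

lemma indBall_of_gt {α : ℝ} {x : X} (h : α < ‖x‖) : indBall α x = ⊤ := if_neg (not_le.mpr h)

section gprops

variable (f : X → EReal) (α : ℝ)

lemma g_ne_bot (hfb : ∀ x, f x ≠ ⊥) (x : X) : f x + indBall α x ≠ ⊥ := by
  rw [Ne, EReal.add_eq_bot_iff]
  push_neg
  exact ⟨hfb x, indBall_ne_bot α x⟩

lemma g_eq_top_of_gt (hfb : ∀ x, f x ≠ ⊥) {x : X} (h : α < ‖x‖) :
    f x + indBall α x = ⊤ := by
  rw [indBall_of_gt h, EReal.add_top_of_ne_bot (hfb x)]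

lemma g_convex (hfb : ∀ x, f x ≠ ⊥) (hc : ConvexFn f) :
    ConvexFn (fun x => f x + indBall α x) := by
  intro x y a b ha hb hab
  show f (a • x + b • y) + indBall α (a • x + b • y) ≤
    (a : EReal) * (f x + indBall α x) + (b : EReal) * (f y + indBall α y)
  rcases eq_or_lt_of_le ha with rfl|ha'
  · simp only [zero_add] at hab; subst hab
    rw [zero_smul, one_smul, zero_add, EReal.coe_zero, zero_mul, zero_add, EReal.coe_one, one_mul]
  rcases eq_or_lt_of_le hb with rfl|hb'
  · simp only [add_zero] at hab; subst hab
    rw [zero_smul, one_smul, add_zero, EReal.coe_zero, zero_mul, add_zero, EReal.coe_one, one_mul]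
  by_cases hx : ‖x‖ ≤ α
  · by_cases hy : ‖y‖ ≤ α
    · have hz : ‖a • x + b • y‖ ≤ α := by
        calc ‖a • x + b • y‖ ≤ ‖a • x‖ + ‖b • y‖ := norm_add_le _ _
        _ = a * ‖x‖ + b * ‖y‖ := by
            rw [norm_smul, norm_smul, Real.norm_of_nonneg ha, Real.norm_of_nonneg hb]
        _ ≤ a * α + b * α := by gcongr
        _ = α := by rw [← add_mul, hab, one_mul]
      rw [indBall_of_le hz, indBall_of_le hx, indBall_of_le hy, add_zero, add_zero, add_zero]
      exact hc x y a b ha hb hab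
    · have : (a : EReal) * (f x + indBall α x) + (b : EReal) * (f y + indBall α y) = ⊤ := by
        rw [g_eq_top_of_gt f α hfb (not_le.mp hy), EReal.mul_top_of_pos (by exact_mod_cast hb'),
          EReal.add_top_of_ne_bot (mul_ne_bot' a ha' _ (g_ne_bot f α hfb x))]
      rw [this]; exact le_top
  · have : (a : EReal) * (f x + indBall α x) + (b : EReal) * (f y + indBall α y) = ⊤ := by
      rw [g_eq_top_of_gt f α hfb (not_le.mp hx), EReal.mul_top_of_pos (by exact_mod_cast ha'),
        EReal.top_add_of_ne_bot (mul_ne_bot' b hb' _ (g_ne_bot f α hfb y))]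
    rw [this]; exact le_top

lemma g_lsc (hfb : ∀ x, f x ≠ ⊥) (hl : LowerSemicontinuous f) :
    LowerSemicontinuous (fun x => f x + indBall α x) := by
  intro x y hy
  change y < f x + indBall α x at hy
  by_cases hx : ‖x‖ ≤ α
  · rw [indBall_of_le hx, add_zero] at hy
    filter_upwards [hl x y hy] with z hz
    exact lt_of_lt_of_le hz (le_add_of_nonneg_right (indBall_nonneg α z))
  · have hop : ∀ᶠ z in 𝓝 x, α < ‖z‖ := by
      have : IsOpen {z : X | α < ‖z‖} := isOpen_lt continuous_const continuous_norm
      exact this.mem_nhds (not_le.mp hx)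
    filter_upwards [hop] with z hz
    show y < f z + indBall α z
    rw [g_eq_top_of_gt f α hfb hz]
    rw [g_eq_top_of_gt f α hfb (not_le.mp hx)] at hy
    exact hy

end gprops

end Aux

namespace Aux
variable {X : Type*} [NormedAddCommGroup X] [NormedSpace ℝ X]

def epi (f : X → EReal) : Set (X × ℝ) := {z | f z.1 ≤ (z.2 : EReal)}

lemma epi_closed (f : X → EReal) (hl : LowerSemicontinuous f) : IsClosed (epi f) := by
  rw [← isOpen_compl_iff, isOpen_iff_mem_nhds]
  intro z hz
  have hz' : (z.2 : EReal) < f z.1 := not_le.mp hz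
  obtain ⟨r, hr1, hr2⟩ := EReal.exists_between_coe_real hz'
  have h1 : ∀ᶠ x in 𝓝 z.1, (r:EReal) < f x := hl z.1 r hr2
  have h2 : Set.Iio r ∈ 𝓝 z.2 := Iio_mem_nhds (by exact_mod_cast hr1)
  rw [show z = (z.1, z.2) from rfl, nhds_prod_eq]
  refine Filter.mem_of_superset (Filter.prod_mem_prod h1 h2) ?_
  rintro ⟨x, t⟩ ⟨hx, ht⟩
  simp only [Set.mem_compl_iff, epi, Set.mem_setOf_eq, not_le]
  exact lt_trans (by exact_mod_cast ht) hx

lemma epi_convex (f : X → EReal) (hfb : ∀ x, f x ≠ ⊥) (hc : ConvexFn f) :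
    Convex ℝ (epi f) := by
  intro z hz w hw a b ha hb hab
  simp only [epi, Set.mem_setOf_eq] at *
  have h1 : f (a • z.1 + b • w.1) ≤ (a:EReal) * f z.1 + (b:EReal) * f w.1 :=
    hc z.1 w.1 a b ha hb hab
  have h2 : (a:EReal) * f z.1 + (b:EReal) * f w.1 ≤ ((a * z.2 + b * w.2 : ℝ) : EReal) := by
    rw [EReal.coe_add, EReal.coe_mul, EReal.coe_mul]
    exact add_le_add (mul_mono a ha hz) (mul_mono b hb hw)
  exact le_trans h1 h2

lemma phi_decomp (φ : (X × ℝ) →L[ℝ] ℝ) (x : X) (t : ℝ) :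
    φ (x, t) = φ (x, 0) + t * φ (0, 1) := by
  have : (x, t) = (x, (0:ℝ)) + t • ((0:X), (1:ℝ)) := by
    simp [Prod.ext_iff]
  rw [this, map_add, map_smul, smul_eq_mul]

lemma affine_minorant (f : X → EReal) (hfb : ∀ x, f x ≠ ⊥) (hc : ConvexFn f)
    (hl : LowerSemicontinuous f) (xh : X) (fh : ℝ) (hxh : f xh = (fh : EReal)) :
    ∃ (p₀ : StrongDual ℝ X) (c₀ : ℝ), ∀ x, ((p₀ x - c₀ : ℝ) : EReal) ≤ f x := by
  have hz : (xh, fh - 1) ∉ epi f := by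
    simp only [epi, Set.mem_setOf_eq, hxh, not_le]
    exact_mod_cast sub_one_lt fh
  obtain ⟨φ, u, hS, hpt⟩ :=
    geometric_hahn_banach_closed_point (epi_convex f hfb hc) (epi_closed f hl) hz
  set μ := φ ((0:X), (1:ℝ)) with hμdef
  have hSm : ∀ (x : X) (r : ℝ), f x ≤ (r : EReal) → φ (x, 0) + r * μ < u := by
    intro x r h
    rw [← phi_decomp]
    exact hS (x, r) h
  -- μ ≤ 0
  have hμ0 : μ ≤ 0 := by
    by_contra hμ
    push_neg at hμ
    obtain ⟨n, hn⟩ := exists_nat_gt ((u - φ (xh, 0)) / μ - fh)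
    have h1 : φ (xh, 0) + (fh + n) * μ < u := hSm xh (fh + n) (by rw [hxh]; exact_mod_cast by linarith [n.cast_nonneg (α := ℝ)])
    have h2 : (u - φ (xh, 0)) / μ < fh + n := by linarith
    rw [div_lt_iff₀ hμ] at h2
    linarith
  have hμne : μ ≠ 0 := by
    intro h
    have h1 : φ (xh, 0) + fh * μ < u := hSm xh fh (le_of_eq hxh)
    have h2 : u < φ (xh, fh - 1) := hpt
    rw [phi_decomp, ← hμdef, h] at h2
    rw [h] at h1
    simp at h1 h2
    linarith
  have hμneg : μ < 0 := lt_of_le_of_ne hμ0 hμne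
  refine ⟨(-μ)⁻¹ • (φ.comp (ContinuousLinearMap.inl ℝ X ℝ)), u / (-μ), ?_⟩
  intro x
  rcases eq_or_ne (f x) ⊤ with htop | hne
  · rw [htop]; exact le_top
  obtain ⟨r, hfx⟩ : ∃ r : ℝ, f x = (r : EReal) :=
    ⟨(f x).toReal, (EReal.coe_toReal hne (hfb x)).symm⟩
  · have h1 : φ (x, 0) + r * μ < u := hSm x r (le_of_eq hfx)
    rw [hfx, EReal.coe_le_coe_iff]
    simp only [ContinuousLinearMap.smul_apply, ContinuousLinearMap.comp_apply,
      ContinuousLinearMap.inl_apply, smul_eq_mul]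
    rw [sub_le_iff_le_add]
    have hpos : (0:ℝ) < -μ := by linarith
    rw [inv_mul_le_iff₀ hpos]
    have h2 : -μ * (r + u / -μ) = -μ * r + u := by field_simp; ring
    rw [h2]
    nlinarith

lemma opnorm_ball {α : ℝ} (hα : 0 < α) (q : StrongDual ℝ X) (M : ℝ)
    (h : ∀ x : X, ‖x‖ < α → q x ≤ M) : α * ‖q‖ ≤ M := by
  have hM0 : 0 ≤ M := by simpa using h 0 (by simpa using hα)
  have hb : ‖q‖ ≤ M / α := by
    refine ContinuousLinearMap.opNorm_le_bound q (div_nonneg hM0 hα.le) fun x => ?_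
    by_cases hx : x = 0
    · simp [hx]
    have hxn : 0 < ‖x‖ := norm_pos_iff.mpr hx
    have key : ∀ r : ℝ, 0 ≤ r → r < α → r * ‖q x‖ ≤ M * ‖x‖ := by
      intro r hr hrα
      have hy : ‖(r / ‖x‖) • x‖ < α := by
        rw [norm_smul, Real.norm_of_nonneg (div_nonneg hr hxn.le), div_mul_cancel₀ _ hxn.ne']
        exact hrα
      have hy2 : ‖(-(r / ‖x‖)) • x‖ < α := by
        rw [norm_smul, norm_neg, Real.norm_of_nonneg (div_nonneg hr hxn.le),
          div_mul_cancel₀ _ hxn.ne']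
        exact hrα
      have e1 := h _ hy
      have e2 := h _ hy2
      rw [map_smul, smul_eq_mul] at e1
      rw [map_smul, smul_eq_mul] at e2
      have : (r / ‖x‖) * |q x| ≤ M := by
        rcases abs_cases (q x) with ⟨he, _⟩ | ⟨he, _⟩
        · rw [he]; exact e1
        · rw [he]; rw [neg_mul] at e2; rw [mul_neg]; linarith
      have := mul_le_mul_of_nonneg_right this hxn.le
      rw [div_mul_eq_mul_div, div_mul_eq_mul_div, div_le_iff₀ hxn] at this
      calc r * ‖q x‖ = r * |q x| := by rw [Real.norm_eq_abs]
      _ ≤ M * ‖x‖ := by nlinarith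
    by_contra hcon
    push_neg at hcon
    rw [div_mul_eq_mul_div, div_lt_iff₀ hα] at hcon
    -- hcon : M * ‖x‖ < ‖q x‖ * α
    have hqx : 0 < ‖q x‖ := by
      rcases le_or_gt ‖q x‖ 0 with h'|h'
      · nlinarith
      · exact h'
    set r := (M * ‖x‖ / ‖q x‖ + α) / 2 with hr
    have h1 : M * ‖x‖ / ‖q x‖ < α := by rw [div_lt_iff₀ hqx]; nlinarith
    have h2 : 0 ≤ r := by positivity
    have h3 : r < α := by rw [hr]; linarith
    have h4 : M * ‖x‖ / ‖q x‖ < r := by rw [hr]; linarith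
    have := key r h2 h3
    rw [div_lt_iff₀ hqx] at h4
    nlinarith
  calc α * ‖q‖ ≤ α * (M / α) := by nlinarith
  _ = M := by field_simp

end Aux

namespace Aux
variable {X : Type*} [NormedAddCommGroup X] [NormedSpace ℝ X]

lemma duality (f : X → EReal) {α : ℝ} (hα : 0 < α)
    (hfb : ∀ x, f x ≠ ⊥) (hc : ConvexFn f) (hl : LowerSemicontinuous f)
    (xh : X) (fh : ℝ) (hxh : f xh = (fh : EReal)) (hxhα : ‖xh‖ < α)
    (p : StrongDual ℝ X) (Cp : ℝ)
    (hCp : ∀ x : X, ‖x‖ ≤ α → ((p x : ℝ) : EReal) - f x ≤ (Cp : EReal)) :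
    ∃ q : StrongDual ℝ X, fconj f (p - q) + ((α * ‖q‖ : ℝ) : EReal) ≤ (Cp : EReal) := by
  set U : Set (X × ℝ) := {z | ‖z.1‖ < α ∧ z.2 < p z.1 - Cp} with hUdef
  have hUopen : IsOpen U := by
    have h1 : IsOpen {z : X × ℝ | ‖z.1‖ < α} :=
      isOpen_lt (continuous_norm.comp continuous_fst) continuous_const
    have h2 : IsOpen {z : X × ℝ | z.2 < p z.1 - Cp} :=
      isOpen_lt continuous_snd ((p.continuous.comp continuous_fst).sub continuous_const)
    exact h1.inter h2
  have hUconv : Convex ℝ U := by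
    intro z hz w hw a b ha hb hab
    rcases eq_or_lt_of_le ha with rfl|ha'
    · simp only [zero_add] at hab; subst hab
      simpa using hw
    rcases eq_or_lt_of_le hb with rfl|hb'
    · simp only [add_zero] at hab; subst hab
      simpa using hz
    refine ⟨?_, ?_⟩
    · show ‖(a • z + b • w).1‖ < α
      rw [Prod.fst_add, Prod.smul_fst, Prod.smul_fst]
      calc ‖a • z.1 + b • w.1‖ ≤ ‖a • z.1‖ + ‖b • w.1‖ := norm_add_le _ _
      _ = a * ‖z.1‖ + b * ‖w.1‖ := by
          rw [norm_smul, norm_smul, Real.norm_of_nonneg ha, Real.norm_of_nonneg hb]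
      _ < a * α + b * α :=
          add_lt_add (mul_lt_mul_of_pos_left hz.1 ha') (mul_lt_mul_of_pos_left hw.1 hb')
      _ = α := by rw [← add_mul, hab, one_mul]
    · show (a • z + b • w).2 < p (a • z + b • w).1 - Cp
      rw [Prod.snd_add, Prod.smul_snd, Prod.fst_add, Prod.smul_fst, Prod.smul_fst,
        Prod.smul_snd, map_add, map_smul, map_smul, smul_eq_mul, smul_eq_mul, smul_eq_mul,
        smul_eq_mul]
      have h1 : a * z.2 < a * (p z.1 - Cp) := mul_lt_mul_of_pos_left hz.2 ha'
      have h2 : b * w.2 < b * (p w.1 - Cp) := mul_lt_mul_of_pos_left hw.2 hb'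
      have h3 : a * Cp + b * Cp = Cp := by rw [← add_mul, hab, one_mul]
      linarith
  have hdisj : Disjoint U (epi f) := by
    rw [Set.disjoint_left]
    rintro ⟨x, t⟩ ⟨hx1, hx2⟩ hS
    simp only [epi, Set.mem_setOf_eq] at hS
    have hne : f x ≠ ⊤ := fun h => by rw [h] at hS; exact absurd hS (by simp)
    obtain ⟨r, hfx⟩ : ∃ r : ℝ, f x = (r : EReal) := ⟨_, (EReal.coe_toReal hne (hfb x)).symm⟩
    rw [hfx] at hS
    have hrt : r ≤ t := by exact_mod_cast hS
    have h3 := hCp x hx1.le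
    rw [hfx, ← EReal.coe_sub] at h3
    have h4 : p x - r ≤ Cp := by exact_mod_cast h3
    simp only [Set.mem_setOf_eq] at hx2
    linarith
  obtain ⟨φ, u, hU', hS'⟩ :=
    geometric_hahn_banach_open hUconv hUopen (epi_convex f hfb hc) hdisj
  set μ := φ ((0:X), (1:ℝ)) with hμdef
  have hUm : ∀ (x : X) (t : ℝ), ‖x‖ < α → t < p x - Cp → φ (x, 0) + t * μ < u := by
    intro x t h1 h2
    rw [← phi_decomp]
    exact hU' (x, t) ⟨h1, h2⟩
  have hSm : ∀ (x : X) (r : ℝ), f x ≤ (r : EReal) → u ≤ φ (x, 0) + r * μ := by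
    intro x r h
    rw [← phi_decomp]
    exact hS' (x, r) h
  have hμ0 : 0 ≤ μ := by
    by_contra hμ
    push_neg at hμ
    set t := min (p xh - Cp - 1) ((u - φ (xh, 0)) / μ - 1) with ht
    have h1 : φ (xh, 0) + t * μ < u :=
      hUm xh t hxhα (lt_of_le_of_lt (min_le_left _ _) (by linarith))
    have h2 : t ≤ (u - φ (xh, 0)) / μ - 1 := min_le_right _ _
    have h3 : ((u - φ (xh, 0)) / μ - 1) * μ ≤ t * μ := mul_le_mul_of_nonpos_right h2 hμ.le
    have h4 : ((u - φ (xh, 0)) / μ - 1) * μ = (u - φ (xh, 0)) - μ := by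
      rw [sub_mul, div_mul_cancel₀ _ (ne_of_lt hμ), one_mul]
    linarith
  have hμne : μ ≠ 0 := by
    intro h
    have h1 : u ≤ φ (xh, 0) + fh * μ := hSm xh fh (le_of_eq hxh)
    have h2 : φ (xh, 0) + (p xh - Cp - 1) * μ < u := hUm xh _ hxhα (by linarith)
    rw [h] at h1 h2
    simp only [mul_zero, add_zero] at h1 h2
    linarith
  have hμ : 0 < μ := lt_of_le_of_ne hμ0 (Ne.symm hμne)
  set ψ := φ.comp (ContinuousLinearMap.inl ℝ X ℝ) with hψdef
  have hψa : ∀ x : X, ψ x = φ (x, 0) := fun x => rfl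
  refine ⟨p + μ⁻¹ • ψ, ?_⟩
  set q := p + μ⁻¹ • ψ with hqdef
  have hqa : ∀ x : X, q x = p x + μ⁻¹ * ψ x := by
    intro x
    rw [hqdef]
    simp [ContinuousLinearMap.add_apply, ContinuousLinearMap.smul_apply, smul_eq_mul]
  have claim1 : ∀ x : X, ((u / μ - μ⁻¹ * ψ x : ℝ) : EReal) ≤ f x := by
    intro x
    rcases eq_or_ne (f x) ⊤ with h|h
    · rw [h]; exact le_top
    obtain ⟨r, hfx⟩ : ∃ r : ℝ, f x = (r : EReal) := ⟨_, (EReal.coe_toReal h (hfb x)).symm⟩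
    rw [hfx, EReal.coe_le_coe_iff]
    have h1 := hSm x r (le_of_eq hfx)
    rw [← hψa x] at h1
    rw [sub_le_iff_le_add, div_le_iff₀ hμ]
    have h2 : (r + μ⁻¹ * ψ x) * μ = r * μ + ψ x := by field_simp
    rw [h2]
    linarith
  have claim2 : α * ‖q‖ ≤ u / μ + Cp := by
    apply opnorm_ball hα
    intro x hx
    have key : ψ x + (p x - Cp) * μ ≤ u := by
      by_contra hk
      push_neg at hk
      set d := ψ x + (p x - Cp) * μ - u with hd
      have hd0 : 0 < d := by linarith
      have hdd : 0 < d / (2 * μ) := by positivity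
      have h1 := hUm x (p x - Cp - d / (2 * μ)) hx (by linarith)
      rw [← hψa x] at h1
      have hexp : (p x - Cp - d / (2 * μ)) * μ = (p x - Cp) * μ - d / 2 := by
        field_simp
      rw [hexp] at h1
      linarith
    have h2 : μ⁻¹ * ψ x ≤ μ⁻¹ * (u - (p x - Cp) * μ) :=
      mul_le_mul_of_nonneg_left (by linarith) (inv_nonneg.mpr hμ.le)
    have h3 : μ⁻¹ * (u - (p x - Cp) * μ) = u / μ - (p x - Cp) := by
      field_simp
    rw [hqa x]
    linarith
  have hpq : ∀ x : X, (p - q) x = -(μ⁻¹ * ψ x) := by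
    intro x
    rw [ContinuousLinearMap.sub_apply, hqa x]
    ring
  have claim3 : fconj f (p - q) ≤ ((-(u / μ) : ℝ) : EReal) := by
    apply iSup_le
    intro x
    rw [hpq x]
    rcases eq_or_ne (f x) ⊤ with h|h
    · rw [h]
      simp
    obtain ⟨r, hfx⟩ : ∃ r : ℝ, f x = (r : EReal) := ⟨_, (EReal.coe_toReal h (hfb x)).symm⟩
    rw [hfx, ← EReal.coe_sub, EReal.coe_le_coe_iff]
    have h1 := claim1 x
    rw [hfx, EReal.coe_le_coe_iff] at h1
    linarith
  calc fconj f (p - q) + ((α * ‖q‖ : ℝ) : EReal)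
      ≤ ((-(u / μ) : ℝ) : EReal) + ((α * ‖q‖ : ℝ) : EReal) := add_le_add_left claim3 _
  _ = ((-(u / μ) + α * ‖q‖ : ℝ) : EReal) := by rw [← EReal.coe_add]
  _ ≤ (Cp : EReal) := by exact_mod_cast (by linarith : -(u / μ) + α * ‖q‖ ≤ Cp)

end Aux

theorem statement2 {X : Type*} [NormedAddCommGroup X] [NormedSpace ℝ X] [CompleteSpace X]
    (f : X → EReal) (hp : ProperFn f) (hc : ConvexFn f) (hl : LowerSemicontinuous f)
    (xss : StrongDual ℝ (StrongDual ℝ X)) :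
    ∃ α : ℝ, 0 < α ∧
      ProperFn (fun x => f x + indBall α x) ∧
      ConvexFn (fun x => f x + indBall α x) ∧
      LowerSemicontinuous (fun x => f x + indBall α x) ∧
      fconj (fconj f) xss = fconj (fconj (fun x => f x + indBall α x)) xss := by
  classical
  obtain ⟨⟨x₀, hx₀⟩, hfb⟩ := hp
  set fh := (f x₀).toReal with hfh
  have hxh : f x₀ = (fh : EReal) := (EReal.coe_toReal hx₀ (hfb x₀)).symm
  set α := ‖xss‖ + ‖x₀‖ + 1 with hαdef
  have hα : 0 < α := by positivity
  have hxhα : ‖x₀‖ < α := by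
    have := norm_nonneg xss
    rw [hαdef]; linarith
  have hxssα : ‖xss‖ ≤ α := by
    have := norm_nonneg x₀
    rw [hαdef]; linarith
  set g : X → EReal := fun x => f x + indBall α x with hgdef
  have hgx₀ : g x₀ = (fh : EReal) := by
    rw [hgdef]
    simp only
    rw [Aux.indBall_of_le hxhα.le, add_zero, hxh]
  refine ⟨α, hα, ⟨⟨x₀, by show g x₀ ≠ ⊤; rw [hgx₀]; simp⟩, Aux.g_ne_bot f α hfb⟩,
    Aux.g_convex f α hfb hc, Aux.g_lsc f α hfb hl, le_antisymm ?_ ?_⟩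
  · -- easy direction
    have hfg : ∀ p : StrongDual ℝ X, fconj g p ≤ fconj f p := by
      intro p
      apply iSup_le
      intro x
      have h1 : ((p x : ℝ) : EReal) - g x ≤ ((p x : ℝ) : EReal) - f x :=
        Aux.sub_mono _ (le_add_of_nonneg_right (Aux.indBall_nonneg α x))
      exact le_trans h1 (le_iSup (fun y => ((p y : ℝ) : EReal) - f y) x)
    apply iSup_le
    intro p
    have h1 : ((xss p : ℝ) : EReal) - fconj f p ≤ ((xss p : ℝ) : EReal) - fconj g p :=
      Aux.sub_mono _ (hfg p)
    exact le_trans h1 (le_iSup (fun P => ((xss P : ℝ) : EReal) - fconj g P) p)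
  · -- hard direction
    obtain ⟨p₀, c₀, hmin⟩ := Aux.affine_minorant f hfb hc hl x₀ fh hxh
    apply iSup_le
    intro p
    -- fconj g p is a real number
    set M := α * ‖p‖ + α * ‖p₀‖ + c₀ with hM
    have hub : ∀ x : X, ((p x : ℝ) : EReal) - g x ≤ (M : EReal) := by
      intro x
      by_cases hx : ‖x‖ ≤ α
      · have hgx : g x = f x := by rw [hgdef]; simp only; rw [Aux.indBall_of_le hx, add_zero]
        rw [hgx]
        have h1 : ((p x : ℝ) : EReal) - f x ≤ ((p x : ℝ) : EReal) - ((p₀ x - c₀ : ℝ) : EReal) :=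
          Aux.sub_mono _ (hmin x)
        refine le_trans h1 ?_
        rw [← EReal.coe_sub, EReal.coe_le_coe_iff]
        have h2 : p x ≤ ‖p‖ * α :=
          le_trans (le_trans (le_abs_self _) (p.le_opNorm x))
            (mul_le_mul_of_nonneg_left hx (norm_nonneg p))
        have h3 : -(p₀ x) ≤ ‖p₀‖ * α :=
          le_trans (le_trans (neg_le_abs _) (p₀.le_opNorm x))
            (mul_le_mul_of_nonneg_left hx (norm_nonneg p₀))
        rw [hM]
        nlinarith
      · have hgx : g x = ⊤ := Aux.g_eq_top_of_gt f α hfb (not_le.mp hx)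
        rw [hgx]
        simp
    have hfgp_ub : fconj g p ≤ (M : EReal) := iSup_le hub
    have hfgp_lb : ((p x₀ - fh : ℝ) : EReal) ≤ fconj g p := by
      have : ((p x₀ : ℝ) : EReal) - g x₀ = ((p x₀ - fh : ℝ) : EReal) := by
        rw [hgx₀, ← EReal.coe_sub]
      rw [← this]
      exact le_iSup (fun y => ((p y : ℝ) : EReal) - g y) x₀
    have hne_top : fconj g p ≠ ⊤ := fun h => by
      rw [h, top_le_iff] at hfgp_ub
      exact EReal.coe_ne_top M hfgp_ub
    have hne_bot : fconj g p ≠ ⊥ := fun h => by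
      rw [h, le_bot_iff] at hfgp_lb
      exact EReal.coe_ne_bot _ hfgp_lb
    set Cp := (fconj g p).toReal with hCpdef
    have hCpe : fconj g p = (Cp : EReal) := (EReal.coe_toReal hne_top hne_bot).symm
    have hCp : ∀ x : X, ‖x‖ ≤ α → ((p x : ℝ) : EReal) - f x ≤ (Cp : EReal) := by
      intro x hx
      have hgx : g x = f x := by rw [hgdef]; simp only; rw [Aux.indBall_of_le hx, add_zero]
      rw [← hgx, ← hCpe]
      exact le_iSup (fun y => ((p y : ℝ) : EReal) - g y) x
    obtain ⟨q, hdual⟩ := Aux.duality f hα hfb hc hl x₀ fh hxh hxhα p Cp hCp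
    set A := fconj f (p - q) with hAdef
    have hAb : A ≠ ⊥ := by
      intro h
      have h1 : (((p - q) x₀ - fh : ℝ) : EReal) ≤ A := by
        have : (((p - q) x₀ : ℝ) : EReal) - f x₀ = (((p - q) x₀ - fh : ℝ) : EReal) := by
          rw [hxh, ← EReal.coe_sub]
        rw [← this, hAdef]
        exact le_iSup (fun y => (((p - q) y : ℝ) : EReal) - f y) x₀
      rw [h, le_bot_iff] at h1
      exact EReal.coe_ne_bot _ h1
    have hAt : A ≠ ⊤ := by
      intro h
      rw [h, EReal.top_add_of_ne_bot (EReal.coe_ne_bot _), top_le_iff] at hdual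
      exact EReal.coe_ne_top _ hdual
    set a := A.toReal with hadef
    have hAe : A = (a : EReal) := (EReal.coe_toReal hAt hAb).symm
    have hreal : a + α * ‖q‖ ≤ Cp := by
      rw [hAe, ← EReal.coe_add, EReal.coe_le_coe_iff] at hdual
      exact hdual
    have h1 : ((xss (p - q) - a : ℝ) : EReal) ≤ fconj (fconj f) xss := by
      have heq : ((xss (p - q) : ℝ) : EReal) - fconj f (p - q) = ((xss (p - q) - a : ℝ) : EReal) := by
        rw [← hAdef, hAe, ← EReal.coe_sub]
      rw [← heq]
      exact le_iSup (fun P => ((xss P : ℝ) : EReal) - fconj f P) (p - q)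
    have h2 : xss p - Cp ≤ xss (p - q) - a := by
      have h3 : xss (p - q) = xss p - xss q := by rw [map_sub]
      have h4 : xss q ≤ α * ‖q‖ :=
        le_trans (le_trans (le_abs_self _) (xss.le_opNorm q))
          (mul_le_mul_of_nonneg_right hxssα (norm_nonneg q))
      linarith
    calc ((xss p : ℝ) : EReal) - fconj g p = ((xss p - Cp : ℝ) : EReal) := by
          rw [hCpe, ← EReal.coe_sub]
    _ ≤ ((xss (p - q) - a : ℝ) : EReal) := by exact_mod_cast h2
    _ ≤ fconj (fconj f) xss := h1
end
end

section
/- Let X be a real Banach space and let f : X × X* → ℝ ∪ {+∞} be proper convex and lower semicontinuous in the strong topology. Extend f to f̃ : X** × X* → ℝ ∪ {+∞} by setting f̃(x**, x*) = f(x**, x*) if x** ∈ ι(X) and +∞ otherwise. Then the convex lower semicontinuous closure of f̃ with respect to the topology σ(X**, X*) × strong on X** × X* equals the biconjugate: cl_{w*×s} conv f̃ (x**, x*) = f**(x**, x*) for all (x**, x*) ∈ X** × X*. -/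
open Filter Topology NormedSpace
noncomputable section

variable {X : Type*} [NormedAddCommGroup X] [NormedSpace ℝ X]

/-- Fenchel conjugate of `f : X × X* → EReal` with respect to the pairing
`⟨(x,x*),(y*,y**)⟩ = ⟨x,y*⟩ + ⟨x*,y**⟩`, yielding a function on `X* × X**`. -/
def pconj (f : X × StrongDual ℝ X → EReal) : StrongDual ℝ X × StrongDual ℝ (StrongDual ℝ X) → EReal :=
  fun p => ⨆ q : X × StrongDual ℝ X, ((p.1 q.1 + p.2 q.2 : ℝ) : EReal) - f q

/-- Fenchel conjugate of `g : X* × X** → EReal` with respect to the pairing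
`⟨(y*,y**),(x**,x*)⟩ = ⟨y*,x**⟩ + ⟨x*,y**⟩`, yielding a function on `X** × X*`. -/
def pconj2 (g : StrongDual ℝ X × StrongDual ℝ (StrongDual ℝ X) → EReal) :
    StrongDual ℝ (StrongDual ℝ X) × StrongDual ℝ X → EReal :=
  fun p => ⨆ q : StrongDual ℝ X × StrongDual ℝ (StrongDual ℝ X), ((p.1 q.1 + q.2 p.2 : ℝ) : EReal) - g q

/-- The extension of `f : X × X* → EReal` to `X** × X*` (with `X**` carrying the
weak-star topology `σ(X**,X*)`), equal to `f` on the canonical image of `X` and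
`⊤` elsewhere. -/
def extFn [CompleteSpace X] (f : X × StrongDual ℝ X → EReal) :
    WeakDual ℝ (StrongDual ℝ X) × StrongDual ℝ X → EReal :=
  fun p => ⨅ x : {x : X // StrongDual.toWeakDual (inclusionInDoubleDual ℝ X x) = p.1},
    f (x.1, p.2)

namespace S4Aux

lemma ereal_real {x : EReal} (hb : x ≠ ⊥) (ht : x ≠ ⊤) : ∃ c : ℝ, x = (c : EReal) := by
  induction x using EReal.rec with
  | bot => exact absurd rfl hb
  | coe c => exact ⟨c, rfl⟩
  | top => exact absurd rfl ht

lemma er_coe_sub_top (x : ℝ) : (x : EReal) - ⊤ = ⊥ := by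
  rw [sub_eq_add_neg, EReal.neg_top, EReal.add_bot]

variable {Y : Type*} [NormedAddCommGroup Y] [NormedSpace ℝ Y]

/-- Every continuous linear functional on the weak-star dual is evaluation at a point. -/
lemma weakDual_repr (φ : WeakDual ℝ Y →L[ℝ] ℝ) :
    ∃ y : Y, ∀ x : WeakDual ℝ Y, φ x = x y := by
  obtain ⟨y, hy⟩ := LinearMap.dualEmbedding_surjective (topDualPairing ℝ Y) φ
  exact ⟨y, fun x => by rw [← hy]; rfl⟩

/-- The pairing between `X** × X*` and `X* × X**`. -/
def pairE (p : WeakDual ℝ Y × Y) (q : Y × StrongDual ℝ Y) : ℝ := p.1 q.1 + q.2 p.2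

/-- Conjugate of a function on `X** × X*`. -/
def econjF (g : WeakDual ℝ Y × Y → EReal) (q : Y × StrongDual ℝ Y) : EReal :=
  ⨆ p : WeakDual ℝ Y × Y, ((pairE p q : ℝ) : EReal) - g p

/-- Conjugate of a function on `X* × X**`, landing on `X** × X*`. -/
def econjF2 (k : Y × StrongDual ℝ Y → EReal) (p : WeakDual ℝ Y × Y) : EReal :=
  ⨆ q : Y × StrongDual ℝ Y, ((pairE p q : ℝ) : EReal) - k q

lemma pairE_repr (φ : (WeakDual ℝ Y × Y) →L[ℝ] ℝ) :
    ∃ q : Y × StrongDual ℝ Y, ∀ p, φ p = pairE p q := by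
  obtain ⟨y, hy⟩ := weakDual_repr (φ.comp (ContinuousLinearMap.inl ℝ (WeakDual ℝ Y) Y))
  refine ⟨(y, φ.comp (ContinuousLinearMap.inr ℝ (WeakDual ℝ Y) Y)), fun p => ?_⟩
  have hp : p = (p.1, (0:Y)) + ((0 : WeakDual ℝ Y), p.2) := by
    ext <;> simp
  calc φ p = φ (p.1, (0:Y)) + φ ((0 : WeakDual ℝ Y), p.2) := by rw [← map_add, ← hp]
  _ = pairE p (y, φ.comp (ContinuousLinearMap.inr ℝ (WeakDual ℝ Y) Y)) := by
      have h1 : φ (p.1, (0:Y)) = p.1 y := hy p.1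
      rw [h1]; rfl

lemma pairE_smul_add (p p' : WeakDual ℝ Y × Y) (q : Y × StrongDual ℝ Y) (a b : ℝ) :
    pairE (a • p + b • p') q = a * pairE p q + b * pairE p' q := by
  have h1 : (a • p + b • p').1 q.1 = a * p.1 q.1 + b * p'.1 q.1 := by
    show (a • p.1 + b • p'.1) q.1 = _
    rfl
  have h2 : q.2 ((a • p + b • p').2) = a * q.2 p.2 + b * q.2 p'.2 := by
    show q.2 (a • p.2 + b • p'.2) = _
    rw [map_add, map_smul, map_smul, smul_eq_mul, smul_eq_mul]
  simp only [pairE, h1, h2]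
  ring

lemma pairE_add_right (p : WeakDual ℝ Y × Y) (q q' : Y × StrongDual ℝ Y) :
    pairE p (q + q') = pairE p q + pairE p q' := by
  simp only [pairE, Prod.fst_add, Prod.snd_add, map_add, ContinuousLinearMap.add_apply]
  ring

lemma pairE_smul_right (p : WeakDual ℝ Y × Y) (c : ℝ) (q : Y × StrongDual ℝ Y) :
    pairE p (c • q) = c * pairE p q := by
  simp only [pairE, Prod.smul_fst, Prod.smul_snd, map_smul, ContinuousLinearMap.smul_apply,
    smul_eq_mul]
  ring

lemma er_affine (c₁ c₂ : ℝ) (d : EReal) {a b : ℝ} (ha : 0 ≤ a) (hb : 0 ≤ b) (hab : a + b = 1) :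
    ((a * c₁ + b * c₂ : ℝ) : EReal) - d
      ≤ (a : EReal) * ((c₁ : EReal) - d) + (b : EReal) * ((c₂ : EReal) - d) := by
  induction d using EReal.rec with
  | bot =>
    rw [EReal.coe_sub_bot, EReal.coe_sub_bot, EReal.coe_sub_bot]
    rcases eq_or_lt_of_le ha with h | h
    · rw [← h]
      have hb1 : b = 1 := by linarith
      simp [hb1]
    · rw [EReal.coe_mul_top_of_pos h]
      have : ((b:EReal) * ⊤) ≠ ⊥ := by
        rcases eq_or_lt_of_le hb with h' | h'
        · rw [← h']; simp
        · rw [EReal.coe_mul_top_of_pos h']; simp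
      rw [EReal.top_add_of_ne_bot this]
  | coe c =>
    rw [← EReal.coe_sub, ← EReal.coe_sub, ← EReal.coe_sub, ← EReal.coe_mul, ← EReal.coe_mul,
      ← EReal.coe_add, EReal.coe_le_coe_iff]
    apply le_of_eq
    linear_combination c * hab
  | top =>
    rw [er_coe_sub_top]
    exact bot_le

lemma econjF2_convex (k : Y × StrongDual ℝ Y → EReal) : ConvexFn (econjF2 k) := by
  intro x y a b ha hb hab
  refine iSup_le fun q => ?_
  have key : ((pairE (a • x + b • y) q : ℝ) : EReal) - k q
      ≤ (a : EReal) * (((pairE x q : ℝ) : EReal) - k q)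
        + (b : EReal) * (((pairE y q : ℝ) : EReal) - k q) := by
    rw [pairE_smul_add]
    exact er_affine _ _ _ ha hb hab
  refine key.trans (add_le_add ?_ ?_)
  · exact mul_le_mul_of_nonneg_left
      (le_iSup (fun q' => ((pairE x q' : ℝ) : EReal) - k q') q) (EReal.coe_nonneg.mpr ha)
  · exact mul_le_mul_of_nonneg_left
      (le_iSup (fun q' => ((pairE y q' : ℝ) : EReal) - k q') q) (EReal.coe_nonneg.mpr hb)

lemma econjF2_lsc (k : Y × StrongDual ℝ Y → EReal) : LowerSemicontinuous (econjF2 k) := by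
  have hterm : ∀ q : Y × StrongDual ℝ Y,
      LowerSemicontinuous fun p : WeakDual ℝ Y × Y => ((pairE p q : ℝ) : EReal) - k q := by
    intro q
    have hcont : Continuous fun p : WeakDual ℝ Y × Y => pairE p q :=
      ((WeakDual.eval_continuous q.1).comp continuous_fst).add
        (q.2.continuous.comp continuous_snd)
    generalize k q = d
    induction d using EReal.rec with
    | bot =>
      have : (fun p : WeakDual ℝ Y × Y => ((pairE p q : ℝ) : EReal) - ⊥)
          = fun _ => (⊤ : EReal) := by
        funext p; rw [EReal.coe_sub_bot]
      rw [this]; exact lowerSemicontinuous_const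
    | coe c =>
      have : (fun p : WeakDual ℝ Y × Y => ((pairE p q : ℝ) : EReal) - (c : EReal))
          = fun p => ((pairE p q - c : ℝ) : EReal) := by
        funext p; rw [EReal.coe_sub]
      rw [this]
      exact (continuous_coe_real_ereal.comp (hcont.sub continuous_const)).lowerSemicontinuous
    | top =>
      have : (fun p : WeakDual ℝ Y × Y => ((pairE p q : ℝ) : EReal) - ⊤)
          = fun _ => (⊥ : EReal) := by
        funext p; rw [er_coe_sub_top]
      rw [this]; exact lowerSemicontinuous_const
  rw [lowerSemicontinuous_iff_isOpen_preimage]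
  intro y
  have : econjF2 k ⁻¹' Set.Ioi y
      = ⋃ q : Y × StrongDual ℝ Y, (fun p => ((pairE p q : ℝ) : EReal) - k q) ⁻¹' Set.Ioi y := by
    ext p
    simp only [Set.mem_preimage, Set.mem_Ioi, Set.mem_iUnion, econjF2, lt_iSup_iff]
  rw [this]
  exact isOpen_iUnion fun q => (hterm q).isOpen_preimage y

lemma econjF_le (g : WeakDual ℝ Y × Y → EReal) (q : Y × StrongDual ℝ Y) (β : ℝ)
    (h : ∀ p, ((pairE p q - β : ℝ) : EReal) ≤ g p) : econjF g q ≤ (β : EReal) := by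
  refine iSup_le fun p => ?_
  rcases eq_or_ne (g p) ⊤ with ht | ht
  · rw [ht, er_coe_sub_top]; exact bot_le
  · have hb : g p ≠ ⊥ := by
      intro hb0
      have := h p
      rw [hb0, le_bot_iff] at this
      exact EReal.coe_ne_bot _ this
    obtain ⟨c, hc⟩ := ereal_real hb ht
    have := h p
    rw [hc, EReal.coe_le_coe_iff] at this
    rw [hc, ← EReal.coe_sub, EReal.coe_le_coe_iff]
    linarith

lemma biconj_ge (g : WeakDual ℝ Y × Y → EReal) (p : WeakDual ℝ Y × Y) (q : Y × StrongDual ℝ Y) (β : ℝ)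
    (h : ∀ p', ((pairE p' q - β : ℝ) : EReal) ≤ g p') :
    ((pairE p q - β : ℝ) : EReal) ≤ econjF2 (econjF g) p := by
  refine le_trans ?_ (le_iSup (fun q' => ((pairE p q' : ℝ) : EReal) - econjF g q') q)
  rw [EReal.coe_sub]
  exact EReal.sub_le_sub le_rfl (econjF_le g q β h)


instance : LocallyConvexSpace ℝ (WeakDual ℝ Y) := WeakBilin.locallyConvexSpace

theorem fenchelMoreau (g : WeakDual ℝ Y × Y → EReal) (hconv : ConvexFn g)
    (hlsc : LowerSemicontinuous g) (p₀ : WeakDual ℝ Y × Y) :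
    g p₀ ≤ econjF2 (econjF g) p₀ := by
  by_cases hbot : ∃ a, g a = ⊥
  · obtain ⟨a, ha⟩ := hbot
    have hgp : g p₀ = ⊥ := by
      have key := hconv a ((2:ℝ) • p₀ - a) (1/2) (1/2) (by norm_num) (by norm_num) (by norm_num)
      have heq : (1/2:ℝ) • a + (1/2:ℝ) • ((2:ℝ) • p₀ - a) = p₀ := by module
      rw [heq, ha] at key
      have h2 : ((1/2 : ℝ) : EReal) * (⊥ : EReal) = ⊥ := EReal.coe_mul_bot_of_pos (by norm_num)
      rw [h2, EReal.bot_add] at key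
      exact le_bot_iff.mp key
    rw [hgp]
    exact bot_le
  push_neg at hbot
  by_cases htop : ∀ a, g a = ⊤
  · refine le_trans ?_ (le_iSup (fun q => ((pairE p₀ q : ℝ) : EReal) - econjF g q)
      ((0:Y), (0 : StrongDual ℝ Y)))
    have hconj : econjF g ((0:Y), (0 : StrongDual ℝ Y)) = ⊥ := by
      refine le_bot_iff.mp (iSup_le fun p => ?_)
      rw [htop p, er_coe_sub_top]
    rw [hconj, EReal.coe_sub_bot]
    exact le_top
  push_neg at htop
  obtain ⟨q₀, hq₀⟩ := htop
  obtain ⟨c₀, hc₀⟩ := ereal_real (hbot q₀) hq₀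
  set S : Set ((WeakDual ℝ Y × Y) × ℝ) := {pt | g pt.1 ≤ (pt.2 : EReal)} with hS
  have hmem : ∀ (p : WeakDual ℝ Y × Y) (c : ℝ), g p = (c : EReal) → (p, c) ∈ S := by
    intro p c h
    simp only [hS, Set.mem_setOf_eq]
    rw [h]
  have hSconv : Convex ℝ S := by
    rintro ⟨p, t⟩ hpt ⟨p', t'⟩ hpt' a b ha hb hab
    simp only [hS, Set.mem_setOf_eq] at hpt hpt' ⊢
    show g (a • p + b • p') ≤ ((a * t + b * t' : ℝ) : EReal)
    calc g (a • p + b • p') ≤ (a : EReal) * g p + (b : EReal) * g p' :=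
          hconv p p' a b ha hb hab
    _ ≤ (a : EReal) * (t : EReal) + (b : EReal) * (t' : EReal) :=
        add_le_add (mul_le_mul_of_nonneg_left hpt (EReal.coe_nonneg.mpr ha))
          (mul_le_mul_of_nonneg_left hpt' (EReal.coe_nonneg.mpr hb))
    _ = ((a * t + b * t' : ℝ) : EReal) := by
        rw [← EReal.coe_mul, ← EReal.coe_mul, ← EReal.coe_add]
  have hSclosed : IsClosed S := by
    rw [← isOpen_compl_iff, isOpen_iff_mem_nhds]
    rintro ⟨p, t⟩ hpt
    have h1 : ((t : ℝ) : EReal) < g p := by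
      simpa only [hS, Set.mem_compl_iff, Set.mem_setOf_eq, not_le] using hpt
    obtain ⟨t', ht1, ht2⟩ := EReal.exists_between_coe_real h1
    have htt : t < t' := EReal.coe_lt_coe_iff.mp ht1
    have hopen : IsOpen {p' : WeakDual ℝ Y × Y | ((t' : ℝ) : EReal) < g p'} :=
      hlsc.isOpen_preimage _
    have hnn : {p' : WeakDual ℝ Y × Y | ((t' : ℝ) : EReal) < g p'} ×ˢ Set.Iio t'
        ∈ 𝓝 ((p, t) : (WeakDual ℝ Y × Y) × ℝ) :=
      prod_mem_nhds (hopen.mem_nhds ht2) (Iio_mem_nhds htt)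
    refine Filter.mem_of_superset hnn ?_
    rintro ⟨a, b⟩ ⟨ha, hb⟩
    simp only [hS, Set.mem_compl_iff, Set.mem_setOf_eq, not_le]
    exact lt_trans (EReal.coe_lt_coe_iff.mpr hb) ha
  -- separation
  have hsep : ∀ (x₀ : WeakDual ℝ Y × Y) (r₀ : ℝ), (x₀, r₀) ∉ S →
      ∃ (φ : (WeakDual ℝ Y × Y) →L[ℝ] ℝ) (k u : ℝ),
        k ≤ 0 ∧ (∀ pt ∈ S, φ pt.1 + pt.2 * k < u) ∧ u < φ x₀ + r₀ * k := by
    intro x₀ r₀ hx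
    obtain ⟨Φ, u, hlt, hgt⟩ := geometric_hahn_banach_closed_point hSconv hSclosed hx
    set φ := Φ.comp (ContinuousLinearMap.inl ℝ (WeakDual ℝ Y × Y) ℝ) with hφ
    set k := Φ ((0 : WeakDual ℝ Y × Y), (1:ℝ)) with hkdef
    have hΦ : ∀ pt : (WeakDual ℝ Y × Y) × ℝ, Φ pt = φ pt.1 + pt.2 * k := by
      intro pt
      have hsplit : pt = (pt.1, (0:ℝ)) + ((0 : WeakDual ℝ Y × Y), pt.2) := by
        ext <;> simp
      have h2 : ((0 : WeakDual ℝ Y × Y), pt.2) = pt.2 • ((0 : WeakDual ℝ Y × Y), (1:ℝ)) := by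
        ext <;> simp
      calc Φ pt = Φ (pt.1, (0:ℝ)) + Φ ((0 : WeakDual ℝ Y × Y), pt.2) := by
            rw [← map_add, ← hsplit]
      _ = φ pt.1 + pt.2 * k := by
            congr 1
            rw [h2, map_smul, smul_eq_mul]
    have hk : k ≤ 0 := by
      by_contra hk
      push_neg at hk
      set t := max c₀ ((u - φ q₀) / k) with htdef
      have htS : (q₀, t) ∈ S := by
        simp only [hS, Set.mem_setOf_eq]
        rw [hc₀]
        exact EReal.coe_le_coe_iff.mpr (le_max_left _ _)
      have h3 := hlt (q₀, t) htS
      rw [hΦ] at h3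
      have h4 : (u - φ q₀) / k ≤ t := le_max_right _ _
      rw [div_le_iff₀ hk] at h4
      simp only at h3
      linarith
    refine ⟨φ, k, u, hk, fun pt hpt => ?_, ?_⟩
    · have := hlt pt hpt
      rwa [hΦ] at this
    · have := hgt
      rwa [hΦ (x₀, r₀)] at this
  -- affine minorants from strict separation with k < 0
  have hmino : ∀ (φ : (WeakDual ℝ Y × Y) →L[ℝ] ℝ) (k u : ℝ), k < 0 →
      (∀ pt ∈ S, φ pt.1 + pt.2 * k < u) →
      ∃ (q : Y × StrongDual ℝ Y) (β : ℝ), (∀ p, ((pairE p q - β : ℝ) : EReal) ≤ g p) ∧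
        ∀ p, pairE p q - β = (φ p - u) / (-k) := by
    intro φ k u hk hlt
    obtain ⟨qφ, hqφ⟩ := pairE_repr φ
    have hnk : (0:ℝ) < -k := by linarith
    refine ⟨(-k)⁻¹ • qφ, u / (-k), ?_, ?_⟩
    · intro p
      rcases eq_or_ne (g p) ⊤ with ht | ht
      · rw [ht]; exact le_top
      · obtain ⟨c, hc⟩ := ereal_real (hbot p) ht
        have hpS : (p, c) ∈ S := hmem p c hc
        have h3 := hlt (p, c) hpS
        simp only at h3
        rw [hc, EReal.coe_le_coe_iff, pairE_smul_right, ← hqφ p]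
        rw [div_eq_mul_inv, mul_comm u]
        have h5 : φ p - u ≤ c * (-k) := by linarith
        calc (-k)⁻¹ * φ p - (-k)⁻¹ * u = (φ p - u) * (-k)⁻¹ := by ring
        _ ≤ (c * (-k)) * (-k)⁻¹ := by
            exact mul_le_mul_of_nonneg_right h5 (le_of_lt (inv_pos.mpr hnk))
        _ = c := by rw [mul_assoc, mul_inv_cancel₀ (ne_of_gt hnk), mul_one]
    · intro p
      rw [pairE_smul_right, ← hqφ p]
      ring
  -- a global affine minorant
  have hA : ∃ (q : Y × StrongDual ℝ Y) (β : ℝ), ∀ p, ((pairE p q - β : ℝ) : EReal) ≤ g p := by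
    have hnot : ((q₀, c₀ - 1) : (WeakDual ℝ Y × Y) × ℝ) ∉ S := by
      simp only [hS, Set.mem_setOf_eq, not_le, hc₀]
      exact EReal.coe_lt_coe_iff.mpr (by linarith)
    obtain ⟨φ, k, u, hk, hlt, hgt⟩ := hsep q₀ (c₀ - 1) hnot
    have hklt : k < 0 := by
      rcases lt_or_eq_of_le hk with h | h
      · exact h
      · exfalso
        have h1 := hlt (q₀, c₀) (hmem q₀ c₀ hc₀)
        simp only at h1 hgt
        rw [h] at h1 hgt
        simp only [mul_zero, add_zero] at h1 hgt
        linarith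
    obtain ⟨q, β, hmin, _⟩ := hmino φ k u hklt hlt
    exact ⟨q, β, hmin⟩
  obtain ⟨qA, βA, hqA⟩ := hA
  -- main argument
  by_contra hcon
  push_neg at hcon
  obtain ⟨r, hr1, hr2⟩ := EReal.exists_between_coe_real hcon
  have hkey : (r : EReal) ≤ econjF2 (econjF g) p₀ := by
    have hnot : ((p₀, r) : (WeakDual ℝ Y × Y) × ℝ) ∉ S := by
      simp only [hS, Set.mem_setOf_eq, not_le]
      exact hr2
    obtain ⟨φ, k, u, hk, hlt, hgt⟩ := hsep p₀ r hnot
    rcases lt_or_eq_of_le hk with hklt | hkeq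
    · -- k < 0 : direct affine minorant through (p₀, r)
      obtain ⟨q, β, hmin, hval⟩ := hmino φ k u hklt hlt
      have h1 : r < pairE p₀ q - β := by
        rw [hval p₀]
        rw [lt_div_iff₀ (by linarith : (0:ℝ) < -k)]
        linarith
      calc (r : EReal) ≤ ((pairE p₀ q - β : ℝ) : EReal) :=
            EReal.coe_le_coe_iff.mpr (le_of_lt h1)
      _ ≤ econjF2 (econjF g) p₀ := biconj_ge g p₀ q β hmin
    · -- k = 0 : tilt the global minorant
      rw [hkeq] at hlt hgt
      simp only [mul_zero, add_zero] at hlt hgt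
      obtain ⟨qφ, hqφ⟩ := pairE_repr φ
      set d : ℝ := φ p₀ - u with hd
      have hdpos : 0 < d := by simp only [hd]; linarith
      set A : ℝ := pairE p₀ qA - βA with hA2
      set lam : ℝ := max 0 ((r - A) / d) with hlam
      have hlam0 : 0 ≤ lam := le_max_left _ _
      set q' : Y × StrongDual ℝ Y := qA + lam • qφ with hq'
      set β' : ℝ := βA + lam * u with hβ'
      have hmin' : ∀ p, ((pairE p q' - β' : ℝ) : EReal) ≤ g p := by
        intro p
        rcases eq_or_ne (g p) ⊤ with ht | ht
        · rw [ht]; exact le_top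
        · obtain ⟨c, hc⟩ := ereal_real (hbot p) ht
          have hpS : (p, c) ∈ S := hmem p c hc
          have h3 := hlt (p, c) hpS
          simp only at h3
          have h4 := hqA p
          rw [hc, EReal.coe_le_coe_iff] at h4 ⊢
          rw [hq', hβ', pairE_add_right, pairE_smul_right, ← hqφ p]
          have h5 : lam * φ p ≤ lam * u := mul_le_mul_of_nonneg_left (le_of_lt h3) hlam0
          linarith
      have hval' : r ≤ pairE p₀ q' - β' := by
        rw [hq', hβ', pairE_add_right, pairE_smul_right, ← hqφ p₀]
        have h6 : (r - A) / d ≤ lam := le_max_right _ _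
        have h7 : ((r - A) / d) * d ≤ lam * d :=
          mul_le_mul_of_nonneg_right h6 (le_of_lt hdpos)
        rw [div_mul_cancel₀ _ (ne_of_gt hdpos)] at h7
        have h8 : lam * φ p₀ - lam * u = lam * d := by rw [hd]; ring
        have h9 : pairE p₀ qA + lam * φ p₀ - (βA + lam * u) = A + lam * d := by
          rw [hA2, hd]; ring
        linarith [h9, h7]
      calc (r : EReal) ≤ ((pairE p₀ q' - β' : ℝ) : EReal) := EReal.coe_le_coe_iff.mpr hval'
      _ ≤ econjF2 (econjF g) p₀ := biconj_ge g p₀ q' β' hmin'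
  exact absurd hr1 (not_lt.mpr hkey)

section Bridge

variable {X : Type*} [NormedAddCommGroup X] [NormedSpace ℝ X] [CompleteSpace X]

/-- The canonical embedding of `X` into its double dual with the weak-star topology. -/
abbrev iota (x : X) : WeakDual ℝ (StrongDual ℝ X) := StrongDual.toWeakDual (inclusionInDoubleDual ℝ X x)

lemma iota_inj : Function.Injective (iota (X := X)) := by
  intro x y h
  refine (SeparatingDual.eq_iff_forall_dual_eq (R := ℝ)).mpr fun g => ?_
  have h2 : inclusionInDoubleDual ℝ X x = inclusionInDoubleDual ℝ X y :=
    (StrongDual.toWeakDual_inj _ _).mp h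
  calc g x = inclusionInDoubleDual ℝ X x g := (NormedSpace.dual_def ℝ X x g).symm
  _ = inclusionInDoubleDual ℝ X y g := by rw [h2]
  _ = g y := NormedSpace.dual_def ℝ X y g

lemma extFn_iota (f : X × StrongDual ℝ X → EReal) (x : X) (y : StrongDual ℝ X) :
    extFn f (iota x, y) = f (x, y) := by
  unfold extFn
  refine le_antisymm (iInf_le (fun z : {x' : X // StrongDual.toWeakDual (inclusionInDoubleDual ℝ X x') = (iota x, y).1} => f (z.1, y)) ⟨x, rfl⟩) (le_iInf fun z => ?_)
  have hz : z.1 = x := iota_inj z.2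
  rw [hz]

lemma extFn_notin (f : X × StrongDual ℝ X → EReal) {w : WeakDual ℝ (StrongDual ℝ X)}
    (hw : ∀ x : X, iota x ≠ w) (y : StrongDual ℝ X) : extFn f (w, y) = ⊤ := by
  have : IsEmpty {x : X // StrongDual.toWeakDual (inclusionInDoubleDual ℝ X x) = ((w, y)).1} :=
    ⟨fun z => hw z.1 z.2⟩
  exact iInf_of_empty _

lemma pairE_iota (x : X) (y : StrongDual ℝ X) (q : StrongDual ℝ X × StrongDual ℝ (StrongDual ℝ X)) :
    pairE ((iota x, y)) q = q.1 x + q.2 y := rfl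

lemma econjF_extFn (f : X × StrongDual ℝ X → EReal) (q : StrongDual ℝ X × StrongDual ℝ (StrongDual ℝ X)) :
    econjF (extFn f) q = pconj f q := by
  apply le_antisymm
  · refine iSup_le fun p => ?_
    obtain ⟨p1, p2⟩ := p
    by_cases h : ∃ x : X, iota x = p1
    · obtain ⟨x, rfl⟩ := h
      rw [extFn_iota, pairE_iota]
      exact le_iSup (fun v : X × StrongDual ℝ X => ((q.1 v.1 + q.2 v.2 : ℝ) : EReal) - f v) (x, p2)
    · push_neg at h
      rw [extFn_notin f h, er_coe_sub_top]
      exact bot_le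
  · refine iSup_le fun v => ?_
    refine le_trans ?_
      (le_iSup (fun p : WeakDual ℝ (StrongDual ℝ X) × StrongDual ℝ X =>
        ((pairE p q : ℝ) : EReal) - extFn f p) ((iota v.1, v.2)))
    rw [extFn_iota, pairE_iota]

lemma biconj_le_extFn (f : X × StrongDual ℝ X → EReal) (hb : ∀ v, f v ≠ ⊥)
    (p : WeakDual ℝ (StrongDual ℝ X) × StrongDual ℝ X) : econjF2 (pconj f) p ≤ extFn f p := by
  obtain ⟨p1, p2⟩ := p
  by_cases h : ∃ x : X, iota x = p1
  · obtain ⟨x, rfl⟩ := h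
    rw [extFn_iota]
    refine iSup_le fun q => ?_
    have h1 : ((q.1 x + q.2 p2 : ℝ) : EReal) - f (x, p2) ≤ pconj f q :=
      le_iSup (fun v : X × StrongDual ℝ X => ((q.1 v.1 + q.2 v.2 : ℝ) : EReal) - f v) (x, p2)
    rw [pairE_iota]
    rcases eq_or_ne (f (x, p2)) ⊤ with ht | ht
    · rw [ht]; exact le_top
    · obtain ⟨d, hd⟩ := ereal_real (hb _) ht
      rw [hd] at h1 ⊢
      calc ((q.1 x + q.2 p2 : ℝ) : EReal) - pconj f q
          ≤ ((q.1 x + q.2 p2 : ℝ) : EReal) - (((q.1 x + q.2 p2) - d : ℝ) : EReal) :=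
            EReal.sub_le_sub le_rfl (by exact_mod_cast h1)
      _ = (d : EReal) := by rw [← EReal.coe_sub]; norm_num
  · push_neg at h
    rw [extFn_notin f h]
    exact le_top

lemma pconj2_eq (k : StrongDual ℝ X × StrongDual ℝ (StrongDual ℝ X) → EReal)
    (p : WeakDual ℝ (StrongDual ℝ X) × StrongDual ℝ X) :
    pconj2 k (StrongDual.toWeakDual.symm p.1, p.2) = econjF2 k p := rfl

end Bridge

lemma econjF_anti {g g' : WeakDual ℝ Y × Y → EReal} (h : ∀ p, g p ≤ g' p)
    (q : Y × StrongDual ℝ Y) : econjF g' q ≤ econjF g q :=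
  iSup_mono fun p => EReal.sub_le_sub le_rfl (h p)

lemma econjF2_anti {k k' : Y × StrongDual ℝ Y → EReal} (h : ∀ q, k q ≤ k' q)
    (p : WeakDual ℝ Y × Y) : econjF2 k' p ≤ econjF2 k p :=
  iSup_mono fun q => EReal.sub_le_sub le_rfl (h q)

end S4Aux

/-- The convex lower semicontinuous hull (largest convex lsc minorant), here with
respect to the topology of `E`. -/
def clConvHull {E : Type*} [AddCommMonoid E] [SMul ℝ E] [TopologicalSpace E]
    (f : E → EReal) : E → EReal :=
  fun x => ⨆ g : {g : E → EReal //
    ConvexFn g ∧ LowerSemicontinuous g ∧ ∀ y, g y ≤ f y}, g.1 x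

theorem statement4 {X : Type*} [NormedAddCommGroup X] [NormedSpace ℝ X] [CompleteSpace X]
    (f : X × StrongDual ℝ X → EReal) (hp : ProperFn f) (hc : ConvexFn f)
    (hl : LowerSemicontinuous f) :
    ∀ p : WeakDual ℝ (StrongDual ℝ X) × StrongDual ℝ X,
      clConvHull (extFn f) p = pconj2 (pconj f) (StrongDual.toWeakDual.symm p.1, p.2) := by
  intro p
  rw [S4Aux.pconj2_eq]
  unfold clConvHull
  apply le_antisymm
  · refine iSup_le fun gs => ?_
    obtain ⟨g, hgconv, hglsc, hgle⟩ := gs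
    have h1 := S4Aux.fenchelMoreau g hgconv hglsc p
    have h2 : ∀ q, pconj f q ≤ S4Aux.econjF g q := fun q =>
      (S4Aux.econjF_extFn f q) ▸ S4Aux.econjF_anti hgle q
    exact h1.trans (S4Aux.econjF2_anti h2 p)
  · exact le_iSup
      (fun gs : {g : WeakDual ℝ (StrongDual ℝ X) × StrongDual ℝ X → EReal //
        ConvexFn g ∧ LowerSemicontinuous g ∧ ∀ y, g y ≤ extFn f y} => gs.1 p)
      ⟨S4Aux.econjF2 (pconj f), S4Aux.econjF2_convex _, S4Aux.econjF2_lsc _,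
        fun y => S4Aux.biconj_le_extFn f hp.2 y⟩
end
end

section
/- Let X be a real Banach space and f : X × X* → ℝ ∪ {+∞} proper convex lower semicontinuous. For every (x**, x*) ∈ X** × X*, f**(x**, x*) = lim inf f(y, y*), where the lim inf is taken over all nets in X × X* converging to (x**, x*) in the σ(X**, X*) × strong topology of X** × X*. -/
open Filter Topology NormedSpace

noncomputable section

variable {X : Type*} [NormedAddCommGroup X] [NormedSpace ℝ X]

/-! ### Auxiliary material -/

section ERealAux

lemma ereal_eq_coe {x : EReal} (h1 : x ≠ ⊤) (h2 : x ≠ ⊥) : ∃ v : ℝ, x = (v : EReal) := by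
  induction x using EReal.rec with
  | bot => exact absurd rfl h2
  | coe v => exact ⟨v, rfl⟩
  | top => exact absurd rfl h1

lemma ereal_le_of_real_lt {a b : EReal} (h : ∀ r : ℝ, (r : EReal) < a → (r : EReal) ≤ b) :
    a ≤ b := by
  induction a using EReal.rec with
  | bot => exact bot_le
  | coe v =>
    by_contra hb
    rw [not_le] at hb
    obtain ⟨r, hr1, hr2⟩ := EReal.exists_between_coe_real hb
    exact absurd (h r hr2) (not_le.2 hr1)
  | top =>
    by_contra hb
    rw [not_le] at hb
    induction b using EReal.rec with
    | bot =>
      have := h 0 (by simp)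
      simp at this
    | coe v =>
      have := h (v + 1) (EReal.coe_lt_top _)
      rw [EReal.coe_le_coe_iff] at this
      linarith
    | top => exact absurd hb (lt_irrefl _)

lemma ereal_sub_le_of_le {a c : ℝ} {x : EReal} (h : ((a + c : ℝ) : EReal) ≤ x) :
    (a : EReal) - x ≤ ((-c : ℝ) : EReal) := by
  induction x using EReal.rec with
  | bot => simp at h
  | coe v =>
    rw [← EReal.coe_sub, EReal.coe_le_coe_iff]
    rw [EReal.coe_le_coe_iff] at h
    linarith
  | top => rw [EReal.sub_top]; exact bot_le

lemma ereal_fenchel_young {a : ℝ} {x c : EReal} (h : (a : EReal) - x ≤ c) :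
    (a : EReal) - c ≤ x := by
  induction c using EReal.rec with
  | top => rw [EReal.sub_top]; exact bot_le
  | bot =>
    induction x using EReal.rec with
    | bot => rw [EReal.coe_sub_bot] at h; exact absurd h (by simp)
    | coe v =>
      rw [← EReal.coe_sub] at h
      exact absurd (le_bot_iff.mp h) (EReal.coe_ne_bot _)
    | top => exact le_top
  | coe u =>
    induction x using EReal.rec with
    | bot =>
      rw [EReal.coe_sub_bot] at h
      exact absurd (top_le_iff.mp h) (EReal.coe_ne_top u)
    | coe v =>
      rw [← EReal.coe_sub, EReal.coe_le_coe_iff] at h ⊢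
      linarith
    | top => exact le_top

end ERealAux

section EpiAux

lemma epi_convex {V : Type*} [AddCommGroup V] [Module ℝ V] {g : V → EReal} (hg : ConvexFn g) :
    Convex ℝ {w : V × ℝ | g w.1 ≤ (w.2 : EReal)} := by
  rintro w₁ h₁ w₂ h₂ a b ha hb hab
  simp only [Set.mem_setOf_eq] at h₁ h₂ ⊢
  have h5 : (a • w₁ + b • w₂).1 = a • w₁.1 + b • w₂.1 := rfl
  have h6 : (a • w₁ + b • w₂).2 = a * w₁.2 + b * w₂.2 := rfl
  rw [h5, h6]
  calc g (a • w₁.1 + b • w₂.1) ≤ (a : EReal) * g w₁.1 + (b : EReal) * g w₂.1 :=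
        hg _ _ a b ha hb hab
    _ ≤ (a : EReal) * (w₁.2 : EReal) + (b : EReal) * (w₂.2 : EReal) :=
        add_le_add (mul_le_mul_of_nonneg_left h₁ (by exact_mod_cast ha))
          (mul_le_mul_of_nonneg_left h₂ (by exact_mod_cast hb))
    _ = ((a * w₁.2 + b * w₂.2 : ℝ) : EReal) := by
        rw [← EReal.coe_mul, ← EReal.coe_mul, ← EReal.coe_add]

lemma lsc_epi_closed {V : Type*} [TopologicalSpace V] {g : V → EReal}
    (hg : LowerSemicontinuous g) : IsClosed {w : V × ℝ | g w.1 ≤ (w.2 : EReal)} := by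
  rw [← isOpen_compl_iff, isOpen_iff_mem_nhds]
  rintro ⟨p, t⟩ hpt
  simp only [Set.mem_compl_iff, Set.mem_setOf_eq, not_le] at hpt
  obtain ⟨t', ht1, ht2⟩ := EReal.exists_between_coe_real hpt
  have h1 : ∀ᶠ z in 𝓝 p, (t' : EReal) < g z := hg p _ ht2
  have h2 : Set.Iio t' ∈ 𝓝 t := Iio_mem_nhds (by exact_mod_cast ht1)
  have h3 := Filter.prod_mem_prod h1 h2
  rw [← nhds_prod_eq] at h3
  filter_upwards [h3] with w hw
  simp only [Set.mem_compl_iff, Set.mem_setOf_eq, not_le]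
  exact lt_trans (by exact_mod_cast hw.2) hw.1

/-- Separation of a point from a closed convex upward-closed set (an "epigraph"). -/
lemma sep_epi {V : Type*} [AddCommGroup V] [Module ℝ V] [TopologicalSpace V]
    [IsTopologicalAddGroup V] [ContinuousSMul ℝ V] [LocallyConvexSpace ℝ V]
    {C : Set (V × ℝ)} (hconv : Convex ℝ C) (hcl : IsClosed C) (hne : C.Nonempty)
    (hup : ∀ w ∈ C, ∀ t, w.2 ≤ t → (w.1, t) ∈ C)
    {p : V} {r : ℝ} (hpr : (p, r) ∉ C) :
    ∃ (ℓ : V →L[ℝ] ℝ) (s u : ℝ), s ≤ 0 ∧ (∀ w ∈ C, ℓ w.1 + s * w.2 < u) ∧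
      u < ℓ p + s * r := by
  obtain ⟨φ, u, hC, hx⟩ := geometric_hahn_banach_closed_point hconv hcl hpr
  have hdec : ∀ (z : V) (t : ℝ), φ (z, t) = φ (z, 0) + t * φ (0, 1) := by
    intro z t
    have h : (z, t) = (z, (0 : ℝ)) + t • ((0 : V), (1 : ℝ)) := by
      simp [Prod.ext_iff]
    rw [h, map_add, map_smul, smul_eq_mul]
  refine ⟨φ.comp (ContinuousLinearMap.inl ℝ V ℝ), φ (0, 1), u, ?_, ?_, ?_⟩
  · by_contra hs
    push_neg at hs
    obtain ⟨w₀, hw₀⟩ := hne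
    obtain ⟨n, hn⟩ := exists_nat_gt ((u - φ (w₀.1, 0) - w₀.2 * φ (0, 1)) / φ (0, 1))
    have hmem : (w₀.1, w₀.2 + n) ∈ C :=
      hup w₀ hw₀ _ (by linarith [Nat.cast_nonneg (α := ℝ) n])
    have h1 := hC _ hmem
    rw [hdec] at h1
    rw [div_lt_iff₀ hs] at hn
    have hexp : (w₀.2 + (n : ℝ)) * φ (0, 1) = w₀.2 * φ (0, 1) + (n : ℝ) * φ (0, 1) := by ring
    rw [hexp] at h1
    linarith
  · intro w hw
    have h1 := hC w hw
    rw [← Prod.mk.eta (p := w), hdec] at h1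
    simpa [mul_comm] using h1
  · rw [hdec] at hx
    simpa [mul_comm] using hx
end EpiAux

section Rep

variable {X : Type*} [NormedAddCommGroup X] [NormedSpace ℝ X]

/-- The canonical embedding of `X × X*` into `(X**, w*) × X*`. -/
def emb (z : X × StrongDual ℝ X) : WeakDual ℝ (StrongDual ℝ X) × StrongDual ℝ X :=
  (StrongDual.toWeakDual (inclusionInDoubleDual ℝ X z.1), z.2)

/-- The pairing between `X* × X**` and `(X**,w*) × X*`. -/
def pr (q : StrongDual ℝ X × StrongDual ℝ (StrongDual ℝ X)) (p : WeakDual ℝ (StrongDual ℝ X) × StrongDual ℝ X) : ℝ :=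
  p.1 q.1 + q.2 p.2

lemma pr_emb (q : StrongDual ℝ X × StrongDual ℝ (StrongDual ℝ X)) (z : X × StrongDual ℝ X) :
    pr q (emb z) = q.1 z.1 + q.2 z.2 := rfl

lemma pr_cont (q : StrongDual ℝ X × StrongDual ℝ (StrongDual ℝ X)) : Continuous fun p => pr (X := X) q p :=
  ((WeakDual.eval_continuous q.1).comp continuous_fst).add (q.2.continuous.comp continuous_snd)

lemma pr_add (q q' : StrongDual ℝ X × StrongDual ℝ (StrongDual ℝ X)) (p : WeakDual ℝ (StrongDual ℝ X) × StrongDual ℝ X) :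
    pr (q + q') p = pr q p + pr q' p := by
  simp only [pr, Prod.fst_add, Prod.snd_add, map_add, ContinuousLinearMap.add_apply]
  ring

lemma pr_smul (c : ℝ) (q : StrongDual ℝ X × StrongDual ℝ (StrongDual ℝ X)) (p : WeakDual ℝ (StrongDual ℝ X) × StrongDual ℝ X) :
    pr (c • q) p = c * pr q p := by
  simp only [pr, Prod.smul_fst, Prod.smul_snd, map_smul, ContinuousLinearMap.coe_smul',
    Pi.smul_apply, smul_eq_mul]
  ring

lemma emb_lin (a b : ℝ) (z₁ z₂ : X × StrongDual ℝ X) :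
    emb (a • z₁ + b • z₂) = a • emb z₁ + b • emb z₂ := by
  apply Prod.ext <;> simp [emb, map_add, map_smul]

/-- Every continuous linear functional on the weak-star dual is an evaluation. -/
lemma weak_rep {F : Type*} [NormedAddCommGroup F] [NormedSpace ℝ F]
    (ℓ : WeakDual ℝ F →L[ℝ] ℝ) : ∃ y : F, ∀ x : WeakDual ℝ F, ℓ x = x y := by
  classical
  have h0 : ℓ ⁻¹' Metric.ball (0 : ℝ) 1 ∈ 𝓝 (0 : WeakDual ℝ F) := by
    have hcont := ℓ.continuous.continuousAt (x := (0 : WeakDual ℝ F))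
    apply hcont.preimage_mem_nhds
    rw [map_zero]
    exact Metric.ball_mem_nhds _ one_pos
  have h1 : 𝓝 (0 : WeakDual ℝ F) =
      Filter.comap (fun (x : WeakDual ℝ F) (y : F) => topDualPairing ℝ F x y)
        (𝓝 (fun (y : F) => topDualPairing ℝ F 0 y)) :=
    nhds_induced _ _
  rw [h1] at h0
  obtain ⟨T, hT, hsub⟩ := Filter.mem_comap.mp h0
  have hzero : (fun (y : F) => topDualPairing ℝ F 0 y) = fun (_ : F) => (0 : ℝ) := by
    funext y; simp
  rw [hzero, nhds_pi] at hT
  obtain ⟨I, hIfin, V, hV, hVsub⟩ := Filter.mem_pi.mp hT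
  have key : ∀ x : WeakDual ℝ F, (∀ y ∈ I, topDualPairing ℝ F x y = 0) → ℓ x = 0 := by
    intro x hx
    by_contra hne
    have hmem : ((2 / ℓ x) • x) ∈ ℓ ⁻¹' Metric.ball (0 : ℝ) 1 := by
      apply hsub
      show (fun (y : F) => topDualPairing ℝ F ((2 / ℓ x) • x) y) ∈ T
      apply hVsub
      intro y hy
      have : topDualPairing ℝ F ((2 / ℓ x) • x) y = (2 / ℓ x) * topDualPairing ℝ F x y := by
        rfl
      show topDualPairing ℝ F ((2 / ℓ x) • x) y ∈ V y
      rw [this, hx y hy, mul_zero]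
      exact mem_of_mem_nhds (hV y)
    have happ : ℓ ((2 / ℓ x) • x) = 2 := by
      rw [map_smul, smul_eq_mul, div_mul_cancel₀]
      exact hne
    simp only [Set.mem_preimage, Metric.mem_ball, happ] at hmem
    rw [Real.dist_eq] at hmem
    norm_num at hmem
  -- linear algebra: ℓ is a combination of evaluations at points of I
  haveI := hIfin.to_subtype
  haveI := Fintype.ofFinite (↥I)
  let L : ↥I → (StrongDual ℝ F →ₗ[ℝ] ℝ) := fun i => (topDualPairing ℝ F).flip (i : F)
  let K : StrongDual ℝ F →ₗ[ℝ] ℝ :=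
    { toFun := fun x => ℓ (StrongDual.toWeakDual x)
      map_add' := fun a b => by
        show ℓ (StrongDual.toWeakDual (a + b)) = ℓ (StrongDual.toWeakDual a) + ℓ (StrongDual.toWeakDual b)
        rw [map_add, map_add]
      map_smul' := fun c a => by
        show ℓ (StrongDual.toWeakDual (c • a)) = c • ℓ (StrongDual.toWeakDual a)
        rw [map_smul, map_smul] }
  have hker : ⨅ i, LinearMap.ker (L i) ≤ LinearMap.ker K := by
    intro x hx
    rw [LinearMap.mem_ker]
    show ℓ (StrongDual.toWeakDual x) = 0
    apply key
    intro y hy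
    have h := (Submodule.mem_iInf _).mp hx ⟨y, hy⟩
    rw [LinearMap.mem_ker] at h
    exact h
  have hspan := mem_span_of_iInf_ker_le_ker hker
  obtain ⟨c, hc⟩ := (Submodule.mem_span_range_iff_exists_fun ℝ).mp hspan
  refine ⟨∑ i, c i • (i : F), ?_⟩
  intro x
  have hx := congrArg (fun (g : StrongDual ℝ F →ₗ[ℝ] ℝ) => g (WeakDual.toStrongDual x)) hc
  simp only [LinearMap.coe_sum, Finset.sum_apply, LinearMap.smul_apply, smul_eq_mul] at hx
  have hK : K (WeakDual.toStrongDual x) = ℓ x := rfl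
  rw [hK] at hx
  rw [← hx]
  rw [map_sum]
  congr 1
  funext i
  rw [map_smul, smul_eq_mul]
  rfl

/-- Representation of continuous linear functionals on `(X**,w*) × X*`. -/
lemma dual_rep (ℓ : (WeakDual ℝ (StrongDual ℝ X) × StrongDual ℝ X) →L[ℝ] ℝ) :
    ∃ q : StrongDual ℝ X × StrongDual ℝ (StrongDual ℝ X), ∀ p, ℓ p = pr q p := by
  obtain ⟨y, hy⟩ := weak_rep (ℓ.comp (ContinuousLinearMap.inl ℝ _ _))
  refine ⟨(y, ℓ.comp (ContinuousLinearMap.inr ℝ _ _)), ?_⟩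
  intro p
  have hsplit : p = (p.1, 0) + (0, p.2) := by simp
  calc ℓ p = ℓ ((p.1, 0) + (0, p.2)) := by rw [← hsplit]
    _ = ℓ (p.1, 0) + ℓ (0, p.2) := map_add _ _ _
    _ = p.1 y + ℓ.comp (ContinuousLinearMap.inr ℝ _ _) p.2 := by
        have := hy p.1
        simp only [ContinuousLinearMap.comp_apply, ContinuousLinearMap.inl_apply] at this
        rw [this]
        rfl
    _ = pr (y, ℓ.comp (ContinuousLinearMap.inr ℝ _ _)) p := rfl

end Rep

section Minorant

variable {X : Type*} [NormedAddCommGroup X] [NormedSpace ℝ X]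

/-- A proper convex lsc function on `X × X*` admits a continuous affine minorant. -/
lemma f_minorant {f : X × StrongDual ℝ X → EReal} (hp : ProperFn f) (hc : ConvexFn f)
    (hl : LowerSemicontinuous f) :
    ∃ (q : StrongDual ℝ X × StrongDual ℝ (StrongDual ℝ X)) (c : ℝ),
      ∀ z, ((q.1 z.1 + q.2 z.2 + c : ℝ) : EReal) ≤ f z := by
  obtain ⟨z₀, hz₀⟩ := hp.1
  obtain ⟨v₀, hv₀⟩ := ereal_eq_coe hz₀ (hp.2 z₀)
  have hconv : Convex ℝ {w : (X × StrongDual ℝ X) × ℝ | f w.1 ≤ (w.2 : EReal)} := epi_convex hc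
  have hcl : IsClosed {w : (X × StrongDual ℝ X) × ℝ | f w.1 ≤ (w.2 : EReal)} := lsc_epi_closed hl
  have hne : {w : (X × StrongDual ℝ X) × ℝ | f w.1 ≤ (w.2 : EReal)}.Nonempty :=
    ⟨(z₀, v₀), le_of_eq hv₀⟩
  have hup : ∀ w ∈ {w : (X × StrongDual ℝ X) × ℝ | f w.1 ≤ (w.2 : EReal)}, ∀ t, w.2 ≤ t →
      (w.1, t) ∈ {w : (X × StrongDual ℝ X) × ℝ | f w.1 ≤ (w.2 : EReal)} := by
    intro w hw t ht
    simp only [Set.mem_setOf_eq] at hw ⊢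
    exact le_trans hw (by exact_mod_cast ht)
  have hpr : ((z₀, v₀ - 1) : (X × StrongDual ℝ X) × ℝ) ∉
      {w : (X × StrongDual ℝ X) × ℝ | f w.1 ≤ (w.2 : EReal)} := by
    simp only [Set.mem_setOf_eq, hv₀]
    intro h
    rw [EReal.coe_le_coe_iff] at h
    linarith
  obtain ⟨ℓ, s, u, hs, hCb, hpu⟩ := sep_epi hconv hcl hne hup hpr
  have hslt : s < 0 := by
    rcases lt_or_eq_of_le hs with h | h
    · exact h
    · exfalso
      have h1 := hCb (z₀, v₀) (le_of_eq hv₀)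
      rw [h] at h1 hpu
      simp only [zero_mul, add_zero] at h1 hpu
      linarith
  have hτpos : 0 < (-s)⁻¹ := inv_pos.2 (by linarith)
  have hτs : (-s)⁻¹ * s = -1 := by
    field_simp
    rw [div_self hslt.ne]
  refine ⟨((-s)⁻¹ • (ℓ.comp (ContinuousLinearMap.inl ℝ _ _)),
      (-s)⁻¹ • (ℓ.comp (ContinuousLinearMap.inr ℝ _ _))), -((-s)⁻¹ * u), ?_⟩
  intro z
  rcases eq_or_ne (f z) ⊤ with h | h
  · rw [h]; exact le_top
  obtain ⟨v, hv⟩ := ereal_eq_coe h (hp.2 z)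
  have h1 := hCb (z, v) (le_of_eq hv)
  rw [hv, EReal.coe_le_coe_iff]
  have happ : ((-s)⁻¹ • (ℓ.comp (ContinuousLinearMap.inl ℝ X (StrongDual ℝ X)))) z.1 +
      ((-s)⁻¹ • (ℓ.comp (ContinuousLinearMap.inr ℝ X (StrongDual ℝ X)))) z.2 = (-s)⁻¹ * ℓ z := by
    have hz : ((z.1, 0) : X × StrongDual ℝ X) + (0, z.2) = z := by
      ext <;> simp
    rw [ContinuousLinearMap.smul_apply, ContinuousLinearMap.smul_apply,
      ContinuousLinearMap.comp_apply, ContinuousLinearMap.comp_apply,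
      ContinuousLinearMap.inl_apply, ContinuousLinearMap.inr_apply, smul_eq_mul, smul_eq_mul,
      ← mul_add, ← map_add, hz]
  rw [happ]
  have h2 : (-s)⁻¹ * (ℓ (z, v).1 + s * v) ≤ (-s)⁻¹ * u := (mul_lt_mul_of_pos_left h1 hτpos).le
  have h3 : (-s)⁻¹ * (ℓ (z, v).1 + s * v) = (-s)⁻¹ * ℓ z + ((-s)⁻¹ * s) * v := by ring
  rw [h3, hτs] at h2
  linarith

end Minorant

instance (priority := 100) weakDualLCS (Y : Type*) [NormedAddCommGroup Y] [NormedSpace ℝ Y] :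
    LocallyConvexSpace ℝ (WeakDual ℝ Y) :=
  WeakBilin.locallyConvexSpace (B := topDualPairing ℝ Y)

set_option maxHeartbeats 2000000 in
theorem statement5 {X : Type*} [NormedAddCommGroup X] [NormedSpace ℝ X] [CompleteSpace X]
    (f : X × StrongDual ℝ X → EReal) (hp : ProperFn f) (hc : ConvexFn f)
    (hl : LowerSemicontinuous f) :
    ∀ p : WeakDual ℝ (StrongDual ℝ X) × StrongDual ℝ X,
      pconj2 (pconj f) (StrongDual.toWeakDual.symm p.1, p.2) =
        Filter.liminf (fun q : X × StrongDual ℝ X => f q)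
          (Filter.comap
            (fun q : X × StrongDual ℝ X =>
              (StrongDual.toWeakDual (inclusionInDoubleDual ℝ X q.1), q.2))
            (𝓝 p)) := by
  classical
  obtain ⟨z₀, hz₀⟩ := hp.1
  obtain ⟨v₀, hv₀⟩ := ereal_eq_coe hz₀ (hp.2 z₀)
  obtain ⟨q₀, c₀, hq₀⟩ := f_minorant hp hc hl
  have hq₀' : ∀ z, ((pr q₀ (emb z) + c₀ : ℝ) : EReal) ≤ f z := fun z => by
    rw [pr_emb]; exact hq₀ z
  have hpc : ∀ q, pconj f q = ⨆ z : X × StrongDual ℝ X, ((pr q (emb z) : ℝ) : EReal) - f z := by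
    intro q
    simp only [pconj, pr_emb]
  have hpconj_ne_bot : ∀ q, pconj f q ≠ ⊥ := by
    intro q hbot
    have h1 : ((pr q (emb z₀) : ℝ) : EReal) - f z₀ ≤ pconj f q := by
      rw [hpc]
      exact le_iSup (fun z : X × StrongDual ℝ X => ((pr q (emb z) : ℝ) : EReal) - f z) z₀
    rw [hbot, le_bot_iff, hv₀, ← EReal.coe_sub] at h1
    exact EReal.coe_ne_bot _ h1
  intro p
  rw [Filter.liminf_eq]
  have hGf : ∀ z : X × StrongDual ℝ X,
      sSup {a : EReal | ∀ᶠ z' in Filter.comap emb (𝓝 (emb z)), a ≤ f z'} ≤ f z := by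
    intro z
    apply sSup_le
    intro a ha
    obtain ⟨t, ht, hsub⟩ := Filter.mem_comap.mp ha
    exact hsub (show emb z ∈ t from mem_of_mem_nhds ht)
  have key_ge : ∀ (q : StrongDual ℝ X × StrongDual ℝ (StrongDual ℝ X)) (c : ℝ),
      (∀ z, ((pr q (emb z) - c : ℝ) : EReal) ≤ f z) →
      ∀ P : WeakDual ℝ (StrongDual ℝ X) × StrongDual ℝ X,
        ((pr q P - c : ℝ) : EReal) ≤
          sSup {a : EReal | ∀ᶠ z in Filter.comap emb (𝓝 P), a ≤ f z} := by
    intro q c hzs P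
    apply ereal_le_of_real_lt
    intro ρ hρ
    rw [EReal.coe_lt_coe_iff] at hρ
    apply le_sSup
    have htend : Filter.Tendsto (fun z => pr q (emb z)) (Filter.comap emb (𝓝 P))
        (𝓝 (pr q P)) := ((pr_cont q).tendsto P).comp Filter.tendsto_comap
    have hev : ∀ᶠ z in Filter.comap emb (𝓝 P), pr q (emb z) ∈ Set.Ioi (ρ + c) :=
      htend.eventually (eventually_mem_set.mpr (Ioi_mem_nhds (by linarith)))
    show ∀ᶠ z in Filter.comap emb (𝓝 P), ((ρ : ℝ) : EReal) ≤ f z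
    filter_upwards [hev] with z hz
    refine le_trans ?_ (hzs z)
    rw [EReal.coe_le_coe_iff]
    have : ρ + c < pr q (emb z) := hz
    linarith
  have hGbot : ∀ P : WeakDual ℝ (StrongDual ℝ X) × StrongDual ℝ X,
      sSup {a : EReal | ∀ᶠ z in Filter.comap emb (𝓝 P), a ≤ f z} ≠ ⊥ := by
    intro P hbot
    have h1 := key_ge q₀ (-c₀) (fun z => by
      rw [show pr q₀ (emb z) - -c₀ = pr q₀ (emb z) + c₀ by ring]
      exact hq₀' z) P
    rw [hbot, le_bot_iff] at h1
    exact EReal.coe_ne_bot _ h1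
  set S : Set ((WeakDual ℝ (StrongDual ℝ X) × StrongDual ℝ X) × ℝ) :=
    {w | ∃ z : X × StrongDual ℝ X, f z ≤ (w.2 : EReal) ∧ emb z = w.1} with hSdef
  have hSconv : Convex ℝ S := by
    rintro w₁ ⟨z₁, hz₁, he₁⟩ w₂ ⟨z₂, hz₂, he₂⟩ a b ha hb hab
    refine ⟨a • z₁ + b • z₂, ?_, ?_⟩
    · have h6 : (a • w₁ + b • w₂).2 = a * w₁.2 + b * w₂.2 := rfl
      rw [h6]
      calc f (a • z₁ + b • z₂) ≤ (a : EReal) * f z₁ + (b : EReal) * f z₂ :=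
            hc z₁ z₂ a b ha hb hab
        _ ≤ (a : EReal) * (w₁.2 : EReal) + (b : EReal) * (w₂.2 : EReal) :=
            add_le_add (mul_le_mul_of_nonneg_left hz₁ (by exact_mod_cast ha))
              (mul_le_mul_of_nonneg_left hz₂ (by exact_mod_cast hb))
        _ = ((a * w₁.2 + b * w₂.2 : ℝ) : EReal) := by
            rw [← EReal.coe_mul, ← EReal.coe_mul, ← EReal.coe_add]
    · show emb (a • z₁ + b • z₂) = a • w₁.1 + b • w₂.1
      rw [← he₁, ← he₂]
      exact emb_lin a b z₁ z₂
  have hepi1 : ∀ (P : WeakDual ℝ (StrongDual ℝ X) × StrongDual ℝ X) (t : ℝ), (P, t) ∈ closure S →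
      sSup {a : EReal | ∀ᶠ z in Filter.comap emb (𝓝 P), a ≤ f z} ≤ (t : EReal) := by
    intro P t hmem
    apply sSup_le
    intro a ha
    by_contra hcon
    rw [not_le] at hcon
    obtain ⟨ρ, hρ1, hρ2⟩ := EReal.exists_between_coe_real hcon
    obtain ⟨T, hT, hsub⟩ := Filter.mem_comap.mp ha
    have hN : T ×ˢ Set.Iio ρ ∈ 𝓝 ((P, t) : (WeakDual ℝ (StrongDual ℝ X) × StrongDual ℝ X) × ℝ) :=
      prod_mem_nhds hT (Iio_mem_nhds (by exact_mod_cast hρ1))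
    obtain ⟨w, hwN, hwS⟩ := (mem_closure_iff_nhds.mp hmem) _ hN
    obtain ⟨z, hfz, hez⟩ := hwS
    have hz : a ≤ f z := hsub (by rw [Set.mem_preimage, hez]; exact hwN.1)
    have hlt : f z < a :=
      lt_of_le_of_lt hfz (lt_trans (by exact_mod_cast hwN.2) hρ2)
    exact absurd hz (not_le.2 hlt)
  have hepi2 : ∀ (P : WeakDual ℝ (StrongDual ℝ X) × StrongDual ℝ X) (t : ℝ),
      sSup {a : EReal | ∀ᶠ z in Filter.comap emb (𝓝 P), a ≤ f z} ≤ (t : EReal) →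
      (P, t) ∈ closure S := by
    intro P t hPt
    rw [mem_closure_iff_nhds]
    intro N hN
    rw [mem_nhds_prod_iff] at hN
    obtain ⟨V, hV, W, hW, hVW⟩ := hN
    obtain ⟨ε, hε, hball⟩ := Metric.mem_nhds_iff.mp hW
    have hnot : ¬ (∀ᶠ z in Filter.comap emb (𝓝 P), ((t + ε/2 : ℝ) : EReal) ≤ f z) := by
      intro hcon
      have h1 : ((t + ε/2 : ℝ) : EReal) ≤ (t : EReal) := le_trans (le_sSup hcon) hPt
      rw [EReal.coe_le_coe_iff] at h1
      linarith
    have hfreq := Filter.not_eventually.mp hnot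
    have hevV : ∀ᶠ z in Filter.comap emb (𝓝 P), emb z ∈ V := Filter.preimage_mem_comap hV
    obtain ⟨z, hz1, hz2⟩ := (hfreq.and_eventually hevV).exists
    rw [not_le] at hz1
    have hlt : max (f z) ((t - ε/2 : ℝ) : EReal) < ((t + ε/2 : ℝ) : EReal) :=
      max_lt hz1 (by rw [EReal.coe_lt_coe_iff]; linarith)
    obtain ⟨sv, hsv1, hsv2⟩ := EReal.exists_between_coe_real hlt
    have hfz : f z ≤ (sv : EReal) := le_of_lt (lt_of_le_of_lt (le_max_left _ _) hsv1)
    have hsv3 : t - ε/2 < sv := by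
      have := lt_of_le_of_lt (le_max_right (f z) ((t - ε/2 : ℝ) : EReal)) hsv1
      exact_mod_cast this
    have hsv4 : sv < t + ε/2 := by exact_mod_cast hsv2
    refine ⟨(emb z, sv), hVW ⟨hz2, hball ?_⟩, z, hfz, rfl⟩
    rw [Metric.mem_ball, Real.dist_eq, abs_lt]
    constructor <;> linarith
  have hL : pconj2 (pconj f) (StrongDual.toWeakDual.symm p.1, p.2) =
      ⨆ q : StrongDual ℝ X × StrongDual ℝ (StrongDual ℝ X), ((pr q p : ℝ) : EReal) - pconj f q := rfl
  rw [hL]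
  apply le_antisymm
  · apply iSup_le
    intro q
    rcases eq_or_ne (pconj f q) ⊤ with h | h
    · rw [h, EReal.sub_top]; exact bot_le
    obtain ⟨c, hcq⟩ := ereal_eq_coe h (hpconj_ne_bot q)
    have hzs : ∀ z, ((pr q (emb z) - c : ℝ) : EReal) ≤ f z := by
      intro z
      have h1 : ((pr q (emb z) : ℝ) : EReal) - f z ≤ pconj f q := by
        rw [hpc]
        exact le_iSup (fun z : X × StrongDual ℝ X => ((pr q (emb z) : ℝ) : EReal) - f z) z
      rw [hcq] at h1
      have h2 := ereal_fenchel_young h1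
      rwa [← EReal.coe_sub] at h2
    have h3 := key_ge q c hzs p
    rw [hcq, ← EReal.coe_sub]
    exact h3
  · apply ereal_le_of_real_lt
    intro r hr
    have hnotin : ((p, r) : (WeakDual ℝ (StrongDual ℝ X) × StrongDual ℝ X) × ℝ) ∉ closure S := by
      intro hmem
      exact absurd (hepi1 p r hmem) (not_le.2 hr)
    have hclconv : Convex ℝ (closure S) := Convex.closure (𝕜 := ℝ) (E := (WeakDual ℝ (StrongDual ℝ X) × StrongDual ℝ X) × ℝ) hSconv
    have hclne : (closure S).Nonempty := ⟨(emb z₀, v₀), subset_closure ⟨z₀, le_of_eq hv₀, rfl⟩⟩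
    have hup : ∀ w ∈ closure S, ∀ t, w.2 ≤ t → (w.1, t) ∈ closure S := by
      intro w hw t ht
      have h1 := hepi1 w.1 w.2 (by rwa [Prod.mk.eta])
      exact hepi2 w.1 t (h1.trans (by exact_mod_cast ht))
    obtain ⟨ℓ, s, u, hs, hCb, hpu⟩ := sep_epi hclconv isClosed_closure hclne hup hnotin
    obtain ⟨qℓ, hqℓ⟩ := dual_rep ℓ
    rcases lt_or_eq_of_le hs with hslt | hs0
    · have hτpos : 0 < (-s)⁻¹ := inv_pos.2 (by linarith)
      have hτs : (-s)⁻¹ * s = -1 := by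
        field_simp
        rw [div_self hslt.ne]
      have hmin : ∀ P : WeakDual ℝ (StrongDual ℝ X) × StrongDual ℝ X,
          (((-s)⁻¹ * ℓ P - (-s)⁻¹ * u : ℝ) : EReal) ≤
            sSup {a : EReal | ∀ᶠ z in Filter.comap emb (𝓝 P), a ≤ f z} := by
        intro P
        rcases eq_or_ne (sSup {a : EReal | ∀ᶠ z in Filter.comap emb (𝓝 P), a ≤ f z}) ⊤ with
          h | h
        · rw [h]; exact le_top
        obtain ⟨v, hv⟩ := ereal_eq_coe h (hGbot P)
        have hPC : ((P, v) : _ × ℝ) ∈ closure S := hepi2 P v (le_of_eq hv)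
        have h1 := hCb _ hPC
        rw [hv, EReal.coe_le_coe_iff]
        have h2 : (-s)⁻¹ * (ℓ (P, v).1 + s * v) ≤ (-s)⁻¹ * u :=
          (mul_lt_mul_of_pos_left h1 hτpos).le
        have h3 : (-s)⁻¹ * (ℓ (P, v).1 + s * v) = (-s)⁻¹ * ℓ P + ((-s)⁻¹ * s) * v := by ring
        rw [h3, hτs] at h2
        linarith
      have hfz : ∀ z, ((pr ((-s)⁻¹ • qℓ) (emb z) - (-s)⁻¹ * u : ℝ) : EReal) ≤ f z := by
        intro z
        have heq : pr ((-s)⁻¹ • qℓ) (emb z) - (-s)⁻¹ * u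
            = (-s)⁻¹ * ℓ (emb z) - (-s)⁻¹ * u := by
          rw [pr_smul, ← hqℓ]
        rw [heq]
        exact (hmin (emb z)).trans (hGf z)
      have hconj : pconj f ((-s)⁻¹ • qℓ) ≤ (((-s)⁻¹ * u : ℝ) : EReal) := by
        rw [hpc]
        apply iSup_le
        intro z
        have h4 := ereal_sub_le_of_le (a := pr ((-s)⁻¹ • qℓ) (emb z)) (c := -((-s)⁻¹ * u))
          (x := f z) (by rw [show pr ((-s)⁻¹ • qℓ) (emb z) + -((-s)⁻¹ * u)
            = pr ((-s)⁻¹ • qℓ) (emb z) - (-s)⁻¹ * u by ring]; exact hfz z)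
        rwa [neg_neg] at h4
      have hrlt : r < pr ((-s)⁻¹ • qℓ) p - (-s)⁻¹ * u := by
        rw [pr_smul, ← hqℓ]
        have h2 : (-s)⁻¹ * u < (-s)⁻¹ * (ℓ p + s * r) := mul_lt_mul_of_pos_left hpu hτpos
        have h3 : (-s)⁻¹ * (ℓ p + s * r) = (-s)⁻¹ * ℓ p + ((-s)⁻¹ * s) * r := by ring
        rw [h3, hτs] at h2
        linarith
      refine le_trans ?_
        (le_iSup (fun q : StrongDual ℝ X × StrongDual ℝ (StrongDual ℝ X) => ((pr q p : ℝ) : EReal) - pconj f q)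
          ((-s)⁻¹ • qℓ))
      calc ((r : ℝ) : EReal) ≤ ((pr ((-s)⁻¹ • qℓ) p - (-s)⁻¹ * u : ℝ) : EReal) := by
            rw [EReal.coe_le_coe_iff]; exact hrlt.le
        _ = ((pr ((-s)⁻¹ • qℓ) p : ℝ) : EReal) - (((-s)⁻¹ * u : ℝ) : EReal) := by
            rw [← EReal.coe_sub]
        _ ≤ ((pr ((-s)⁻¹ • qℓ) p : ℝ) : EReal) - pconj f ((-s)⁻¹ • qℓ) :=
            EReal.sub_le_sub le_rfl hconj
    · rw [hs0] at hCb hpu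
      simp only [zero_mul, add_zero] at hCb hpu
      have hdom : ∀ (z : X × StrongDual ℝ X) (v : ℝ), f z = (v : EReal) → ℓ (emb z) < u := by
        intro z v hv
        exact hCb (emb z, v) (subset_closure ⟨z, le_of_eq hv, rfl⟩)
      have hbound : ∀ n : ℕ, pconj f (q₀ + (n : ℝ) • qℓ) ≤ ((-c₀ + n * u : ℝ) : EReal) := by
        intro n
        rw [hpc]
        apply iSup_le
        intro z
        rcases eq_or_ne (f z) ⊤ with h | h
        · rw [h, EReal.sub_top]; exact bot_le
        obtain ⟨v, hv⟩ := ereal_eq_coe h (hp.2 z)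
        have h1 : pr q₀ (emb z) + c₀ ≤ v := by
          have h1' := hq₀' z
          rw [hv, EReal.coe_le_coe_iff] at h1'
          exact h1'
        have h2 : ℓ (emb z) < u := hdom z v hv
        have h3 : pr (q₀ + (n : ℝ) • qℓ) (emb z) ≤ v + (-c₀ + n * u) := by
          rw [pr_add, pr_smul, ← hqℓ]
          have h4 : (n : ℝ) * ℓ (emb z) ≤ (n : ℝ) * u :=
            mul_le_mul_of_nonneg_left h2.le (Nat.cast_nonneg n)
          linarith
        rw [hv, ← EReal.coe_sub, EReal.coe_le_coe_iff]
        linarith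
      obtain ⟨n, hn⟩ := exists_nat_gt ((r - pr q₀ p - c₀) / (ℓ p - u))
      have hℓu : 0 < ℓ p - u := by linarith
      rw [div_lt_iff₀ hℓu] at hn
      have hA : r ≤ pr (q₀ + (n : ℝ) • qℓ) p - (-c₀ + n * u) := by
        rw [pr_add, pr_smul, ← hqℓ]
        have h4 : (n : ℝ) * (ℓ p - u) = n * ℓ p - n * u := by ring
        rw [h4] at hn
        linarith
      refine le_trans ?_
        (le_iSup (fun q : StrongDual ℝ X × StrongDual ℝ (StrongDual ℝ X) => ((pr q p : ℝ) : EReal) - pconj f q)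
          (q₀ + (n : ℝ) • qℓ))
      calc ((r : ℝ) : EReal) ≤ ((pr (q₀ + (n : ℝ) • qℓ) p - (-c₀ + n * u) : ℝ) : EReal) := by
            rw [EReal.coe_le_coe_iff]; exact hA
        _ = ((pr (q₀ + (n : ℝ) • qℓ) p : ℝ) : EReal) - ((-c₀ + n * u : ℝ) : EReal) := by
            rw [← EReal.coe_sub]
        _ ≤ _ := EReal.sub_le_sub le_rfl (hbound n)
end
end

section
/- Let X be a real Banach space and h : X × X* → ℝ ∪ {+∞} proper convex lower semicontinuous with h(x, x*) ≥ ⟨x, x*⟩ for all (x, x*) ∈ X × X* and h*(x*, x**) ≥ ⟨x*, x**⟩ for all (x*, x**) ∈ X* × X**. If h(z, z*) − ⟨z, z*⟩ ≤ ε < ∞, then for any η, μ > 0 with η·μ > 1 there exists (y, y*) ∈ X × X* with h(y, y*) = ⟨y, y*⟩, ‖y − z‖ ≤ η√ε and ‖y* − z*‖ ≤ μ√ε, with strict inequalities when ε > 0. -/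
set_option maxHeartbeats 1000000

open Filter Topology NormedSpace

noncomputable section

variable {X : Type*} [NormedAddCommGroup X] [NormedSpace ℝ X]

lemma erealReal (x : EReal) (h1 : x ≠ ⊥) (h2 : x ≠ ⊤) : ∃ r : ℝ, x = (r : EReal) := by
  lift x to ℝ using ⟨h2, h1⟩; exact ⟨x, rfl⟩

lemma sq_norm_cvx {W : Type*} [SeminormedAddCommGroup W] [NormedSpace ℝ W]
    (x y : W) (a b : ℝ) (ha : 0 ≤ a) (hb : 0 ≤ b) (hab : a + b = 1) :
    ‖a • x + b • y‖^2 ≤ a * ‖x‖^2 + b * ‖y‖^2 := by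
  have h1 : ‖a • x + b • y‖ ≤ a * ‖x‖ + b * ‖y‖ := by
    calc ‖a • x + b • y‖ ≤ ‖a • x‖ + ‖b • y‖ := norm_add_le _ _
    _ = a * ‖x‖ + b * ‖y‖ := by
        rw [norm_smul, norm_smul, Real.norm_of_nonneg ha, Real.norm_of_nonneg hb]
  have h2 : ‖a • x + b • y‖^2 ≤ (a * ‖x‖ + b * ‖y‖)^2 :=
    pow_le_pow_left₀ (norm_nonneg _) h1 2
  nlinarith [mul_nonneg (mul_nonneg ha hb) (sq_nonneg (‖x‖ - ‖y‖))]

lemma near_min {Y : Type*} [NormedAddCommGroup Y] [NormedSpace ℝ Y]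
    (g : Y →L[ℝ] ℝ) (a γ : ℝ) (ha : 0 < a) (hγ : 0 < γ) :
    ∃ u : Y, g u + a * ‖u‖^2 ≤ -(‖g‖^2/(4*a)) + γ := by
  rcases le_or_gt (‖g‖^2/(4*a)) γ with hle | hlt
  · exact ⟨0, by simp; linarith⟩
  · have hg : 0 < ‖g‖ := by
      rcases eq_or_lt_of_le (norm_nonneg g) with h | h
      · exfalso; rw [← h] at hlt; simp at hlt; linarith
      · exact h
    have h4a : γ * (4*a) < ‖g‖^2 := by
      rw [lt_div_iff₀ (by positivity)] at hlt; linarith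
    set ι := 2*a*γ/‖g‖ with hι
    have hι0 : 0 < ι := by positivity
    have key : ι * ‖g‖ = 2*a*γ := by rw [hι]; exact div_mul_cancel₀ _ hg.ne'
    have hιg : ι < ‖g‖ := by nlinarith [key, h4a, mul_pos ha hγ, hg]
    obtain ⟨x, hx1, hx2⟩ := g.exists_lt_apply_of_lt_opNorm (show ‖g‖ - ι < ‖g‖ by linarith)
    set e : Y := if 0 ≤ g x then x else -x with he
    have hge : |g x| = g e := by
      rcases le_or_gt 0 (g x) with hh | hh
      · rw [abs_of_nonneg hh, he, if_pos hh]
      · rw [abs_of_neg hh, he, if_neg (not_le.mpr hh)]; simp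
    have hne : ‖e‖ = ‖x‖ := by
      rcases le_or_gt 0 (g x) with hh | hh
      · rw [he, if_pos hh]
      · rw [he, if_neg (not_le.mpr hh)]; simp
    have hge2 : ‖g‖ - ι < g e := by rw [← hge]; exact hx2
    set c := ‖g‖/(2*a) with hc
    have hc0 : 0 < c := by positivity
    refine ⟨(-c) • e, ?_⟩
    have h3 : g ((-c) • e) = -c * g e := by simp
    have h4 : ‖(-c) • e‖ = c * ‖e‖ := by
      rw [norm_smul]; simp [abs_of_pos hc0]
    rw [h3, h4]
    have hx1' : ‖e‖ ≤ 1 := by rw [hne]; exact le_of_lt hx1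
    have hn : 0 ≤ ‖e‖ := norm_nonneg e
    have h5 : 0 ≤ 1 - ‖e‖^2 := by nlinarith
    have e1 : -c * g e ≤ -c * (‖g‖ - ι) := by nlinarith
    have e2 : a * (c * ‖e‖)^2 ≤ a * c^2 := by
      nlinarith [mul_nonneg (mul_nonneg ha.le (sq_nonneg c)) h5]
    have e3 : -c * (‖g‖ - ι) + a * c^2 = -(‖g‖^2/(4*a)) + γ := by
      rw [hc, hι]; field_simp; ring
    linarith

lemma lemmaA (h : X × StrongDual ℝ X → EReal) (hp : ProperFn h) (hc : ConvexFn h)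
    (hmaj' : ∀ p : StrongDual ℝ X × StrongDual ℝ (StrongDual ℝ X), ((p.2 p.1 : ℝ) : EReal) ≤ pconj h p)
    (w : X × StrongDual ℝ X) (lam δ : ℝ) (hlam : 0 < lam) (hδ : 0 < δ) :
    ∃ p : X × StrongDual ℝ X, h p < ((w.2 p.1 + p.2 w.1 - w.2 w.1 + δ
      - lam/2 * ‖p.1 - w.1‖^2 - 1/(2*lam) * ‖p.2 - w.2‖^2 : ℝ) : EReal) := by
  by_contra hcon
  push_neg at hcon
  set c : X × StrongDual ℝ X → ℝ := fun p => w.2 p.1 + p.2 w.1 - w.2 w.1 + δ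
      - lam/2 * ‖p.1 - w.1‖^2 - 1/(2*lam) * ‖p.2 - w.2‖^2 with hcdef
  -- concavity of c
  have hconc : ∀ (p q : X × StrongDual ℝ X) (a b : ℝ), 0 ≤ a → 0 ≤ b → a + b = 1 →
      a * c p + b * c q ≤ c (a • p + b • q) := by
    intro p q a b ha hb hab
    have hfst : (a • p + b • q).1 = a • p.1 + b • q.1 := rfl
    have hsnd : (a • p + b • q).2 = a • p.2 + b • q.2 := rfl
    have hw1 : a • p.1 + b • q.1 - w.1 = a • (p.1 - w.1) + b • (q.1 - w.1) := by
      have hw : w.1 = a • w.1 + b • w.1 := by rw [← add_smul, hab, one_smul]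
      rw [smul_sub, smul_sub]; nth_rewrite 1 [hw]; abel
    have hw2 : a • p.2 + b • q.2 - w.2 = a • (p.2 - w.2) + b • (q.2 - w.2) := by
      have hw : w.2 = a • w.2 + b • w.2 := by rw [← add_smul, hab, one_smul]
      rw [smul_sub, smul_sub]; nth_rewrite 1 [hw]; abel
    have sq1 : ‖a • p.1 + b • q.1 - w.1‖^2 ≤ a * ‖p.1 - w.1‖^2 + b * ‖q.1 - w.1‖^2 := by
      rw [hw1]; exact sq_norm_cvx _ _ a b ha hb hab
    have sq2 : ‖a • p.2 + b • q.2 - w.2‖^2 ≤ a * ‖p.2 - w.2‖^2 + b * ‖q.2 - w.2‖^2 := by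
      rw [hw2]; exact sq_norm_cvx _ _ a b ha hb hab
    have lin1 : w.2 (a • p.1 + b • q.1) = a * w.2 p.1 + b * w.2 q.1 := by
      rw [map_add, map_smul, map_smul]; rfl
    have lin2 : (a • p.2 + b • q.2) w.1 = a * p.2 w.1 + b * q.2 w.1 := by
      rw [ContinuousLinearMap.add_apply, ContinuousLinearMap.smul_apply,
        ContinuousLinearMap.smul_apply]; rfl
    have q1 : lam/2 * ‖a • p.1 + b • q.1 - w.1‖^2
        ≤ lam/2 * (a * ‖p.1 - w.1‖^2 + b * ‖q.1 - w.1‖^2) :=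
      mul_le_mul_of_nonneg_left sq1 (by positivity)
    have q2 : 1/(2*lam) * ‖a • p.2 + b • q.2 - w.2‖^2
        ≤ 1/(2*lam) * (a * ‖p.2 - w.2‖^2 + b * ‖q.2 - w.2‖^2) :=
      mul_le_mul_of_nonneg_left sq2 (by positivity)
    have hds : a*δ + b*δ = δ := by rw [← add_mul, hab, one_mul]
    have hw21 : a*(w.2 w.1) + b*(w.2 w.1) = w.2 w.1 := by rw [← add_mul, hab, one_mul]
    simp only [hcdef, hfst, hsnd, lin1, lin2]
    linarith [q1, q2, hds, hw21]
  -- the two sets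
  set A : Set ((X × StrongDual ℝ X) × ℝ) := {q | q.2 < c q.1} with hAdef
  set B : Set ((X × StrongDual ℝ X) × ℝ) := {q | h q.1 ≤ ((q.2 : ℝ) : EReal)} with hBdef
  have hc_cont : Continuous c := by
    have h1 : Continuous fun p : X × StrongDual ℝ X => w.2 p.1 := w.2.continuous.comp continuous_fst
    have h2 : Continuous fun p : X × StrongDual ℝ X => p.2 w.1 :=
      (ContinuousLinearMap.apply ℝ ℝ w.1).continuous.comp continuous_snd
    have h3 : Continuous fun p : X × StrongDual ℝ X => ‖p.1 - w.1‖^2 :=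
      ((continuous_fst.sub continuous_const).norm.pow 2)
    have h4 : Continuous fun p : X × StrongDual ℝ X => ‖p.2 - w.2‖^2 :=
      ((continuous_snd.sub continuous_const).norm.pow 2)
    exact ((((h1.add h2).sub continuous_const).add continuous_const).sub
      (continuous_const.mul h3)).sub (continuous_const.mul h4)
  have openA : IsOpen A := isOpen_lt continuous_snd (hc_cont.comp continuous_fst)
  have convA : Convex ℝ A := by
    intro q hq q' hq' a b ha hb hab
    rcases eq_or_lt_of_le ha with rfl | ha'
    · simp only [zero_add] at hab; subst hab; simpa only [zero_smul, one_smul, zero_add] using hq'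
    rcases eq_or_lt_of_le hb with rfl | hb'
    · simp only [add_zero] at hab; subst hab; simpa only [zero_smul, one_smul, add_zero] using hq
    have h1 : (a • q + b • q').2 = a * q.2 + b * q'.2 := rfl
    have h2 : (a • q + b • q').1 = a • q.1 + b • q'.1 := rfl
    show (a • q + b • q').2 < c (a • q + b • q').1
    rw [h1, h2]
    calc a * q.2 + b * q'.2 < a * c q.1 + b * c q'.1 := by
          have := hq; have := hq'
          have e1 : a * q.2 < a * c q.1 := by exact mul_lt_mul_of_pos_left hq ha'
          have e2 : b * q'.2 < b * c q'.1 := by exact mul_lt_mul_of_pos_left hq' hb'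
          linarith
    _ ≤ c (a • q.1 + b • q'.1) := hconc _ _ a b ha hb hab
  have convB : Convex ℝ B := by
    intro q hq q' hq' a b ha hb hab
    have hq1 : h q.1 ≤ ((q.2 : ℝ) : EReal) := hq
    have hq1' : h q'.1 ≤ ((q'.2 : ℝ) : EReal) := hq'
    obtain ⟨r, hr⟩ := erealReal (h q.1) (hp.2 _) (lt_of_le_of_lt hq1 (EReal.coe_lt_top _)).ne
    obtain ⟨r', hr'⟩ := erealReal (h q'.1) (hp.2 _) (lt_of_le_of_lt hq1' (EReal.coe_lt_top _)).ne
    have hrle : r ≤ q.2 := by rw [hr] at hq1; exact_mod_cast hq1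
    have hrle' : r' ≤ q'.2 := by rw [hr'] at hq1'; exact_mod_cast hq1'
    show h (a • q + b • q').1 ≤ (((a • q + b • q').2 : ℝ) : EReal)
    have h2 : (a • q + b • q').1 = a • q.1 + b • q'.1 := rfl
    have h1 : (a • q + b • q').2 = a * q.2 + b * q'.2 := rfl
    rw [h1, h2]
    calc h (a • q.1 + b • q'.1) ≤ (a : EReal) * h q.1 + (b : EReal) * h q'.1 :=
          hc _ _ a b ha hb hab
    _ = ((a * r + b * r' : ℝ) : EReal) := by
          rw [hr, hr', ← EReal.coe_mul, ← EReal.coe_mul, ← EReal.coe_add]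
    _ ≤ ((a * q.2 + b * q'.2 : ℝ) : EReal) := by
          apply EReal.coe_le_coe_iff.mpr
          have := mul_le_mul_of_nonneg_left hrle ha
          have := mul_le_mul_of_nonneg_left hrle' hb
          linarith
  have disjAB : Disjoint A B := by
    rw [Set.disjoint_left]
    intro q hqA hqB
    have h1 : ((c q.1 : ℝ) : EReal) ≤ h q.1 := hcon q.1
    have h2 : h q.1 ≤ ((q.2 : ℝ) : EReal) := hqB
    have : c q.1 ≤ q.2 := by exact_mod_cast le_trans h1 h2
    exact absurd hqA (not_lt.mpr this)
  obtain ⟨f, s, hfA, hfB⟩ := geometric_hahn_banach_open convA openA convB disjAB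
  obtain ⟨p₀, hp₀⟩ := hp.1
  obtain ⟨r₀, hr₀⟩ := erealReal (h p₀) (hp.2 _) hp₀
  have hp₀B : ((p₀, r₀) : (X × StrongDual ℝ X) × ℝ) ∈ B := by
    show h p₀ ≤ ((r₀ : ℝ) : EReal); rw [hr₀]
  set β := f (0, 1) with hβdef
  have flin : ∀ (v : X × StrongDual ℝ X) (t : ℝ), f (v, t) = f (v, 0) + t * β := by
    intro v t
    have hdec : ((v, t) : (X × StrongDual ℝ X) × ℝ) = (v, 0) + t • (0, 1) := by
      simp [Prod.ext_iff]
    rw [hdec, map_add, map_smul, smul_eq_mul]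
  have hβ0 : 0 ≤ β := by
    by_contra hneg
    push_neg at hneg
    obtain ⟨n, hn⟩ := exists_nat_gt ((f (p₀, r₀) - s) / (-β))
    have hmem : ((p₀, r₀ + n) : (X × StrongDual ℝ X) × ℝ) ∈ B := by
      show h p₀ ≤ ((r₀ + (n : ℝ) : ℝ) : EReal)
      rw [hr₀]; exact_mod_cast (by positivity : (0:ℝ) ≤ (n:ℝ)) |> fun hz =>
        EReal.coe_le_coe_iff.mpr (by linarith)
    have h1 : s ≤ f (p₀, r₀ + n) := hfB _ hmem
    rw [flin] at h1
    have h2 : f (p₀, r₀) - s < n * (-β) := (div_lt_iff₀ (by linarith)).mp hn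
    have h3 : f (p₀, r₀) = f (p₀, 0) + r₀ * β := flin p₀ r₀
    nlinarith
  have hβne : β ≠ 0 := by
    intro hzero
    have hA0 : ∀ v : X × StrongDual ℝ X, f (v, 0) < s := by
      intro v
      have hmem : ((v, c v - 1) : (X × StrongDual ℝ X) × ℝ) ∈ A := by
        show c v - 1 < c v; linarith
      have := hfA _ hmem
      rwa [flin, hzero, mul_zero, add_zero] at this
    have hle : ∀ v : X × StrongDual ℝ X, f (v, 0) ≤ 0 := by
      intro v
      by_contra hpos
      push_neg at hpos
      obtain ⟨n, hn⟩ := exists_nat_gt (s / f (v, 0))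
      have h1 : f ((n : ℝ) • v, 0) < s := hA0 _
      have h2 : (((n : ℝ) • v, (0:ℝ)) : (X × StrongDual ℝ X) × ℝ) = (n : ℝ) • (v, 0) := by
        simp [Prod.ext_iff]
      rw [h2, map_smul, smul_eq_mul] at h1
      have h3 : s < n * f (v, 0) := by
        have := (div_lt_iff₀ hpos).mp hn; linarith
      linarith
    have hzero' : ∀ v : X × StrongDual ℝ X, f (v, 0) = 0 := by
      intro v
      have h1 := hle v
      have h2 := hle (-v)
      have h3 : ((-v, (0:ℝ)) : (X × StrongDual ℝ X) × ℝ) = -(v, 0) := by simp [Prod.ext_iff]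
      rw [h3, map_neg] at h2
      linarith
    have h1 : (0:ℝ) < s := by have := hA0 0; rwa [hzero' 0] at this
    have h2 : s ≤ 0 := by
      have := hfB _ hp₀B
      rw [flin, hzero, mul_zero, add_zero, hzero'] at this; linarith
    linarith
  have hβ : 0 < β := lt_of_le_of_ne hβ0 (Ne.symm hβne)
  clear_value β
  -- the dual elements
  set j1 : X →L[ℝ] (X × StrongDual ℝ X) × ℝ :=
    (ContinuousLinearMap.inl ℝ (X × StrongDual ℝ X) ℝ).comp (ContinuousLinearMap.inl ℝ X (StrongDual ℝ X))
    with hj1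
  set j2 : StrongDual ℝ X →L[ℝ] (X × StrongDual ℝ X) × ℝ :=
    (ContinuousLinearMap.inl ℝ (X × StrongDual ℝ X) ℝ).comp (ContinuousLinearMap.inr ℝ X (StrongDual ℝ X))
    with hj2
  set ys1 : StrongDual ℝ X := (-β⁻¹) • (f.comp j1) with hys1
  set ys2 : StrongDual ℝ (StrongDual ℝ X) := (-β⁻¹) • (f.comp j2) with hys2
  have hys1app : ∀ x : X, ys1 x = -β⁻¹ * f ((x, 0), 0) := by
    intro x; simp [hys1, hj1]
  have hys2app : ∀ g : StrongDual ℝ X, ys2 g = -β⁻¹ * f ((0, g), 0) := by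
    intro g; simp [hys2, hj2]
  have hsplit : ∀ v : X × StrongDual ℝ X, f (v, 0) = -β * (ys1 v.1 + ys2 v.2) := by
    intro v
    have hdec : ((v, (0:ℝ)) : (X × StrongDual ℝ X) × ℝ) = ((v.1, 0), 0) + ((0, v.2), 0) := by
      simp [Prod.ext_iff]
    rw [hdec, map_add, hys1app, hys2app]
    field_simp
    ring
  clear_value ys1 ys2
  have hAff : ∀ p : X × StrongDual ℝ X, ((ys1 p.1 + ys2 p.2 + s/β : ℝ) : EReal) ≤ h p := by
    intro p
    by_cases htp : h p = ⊤
    · rw [htp]; exact le_top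
    obtain ⟨r, hr⟩ := erealReal (h p) (hp.2 _) htp
    have hmem : ((p, r) : (X × StrongDual ℝ X) × ℝ) ∈ B := by
      show h p ≤ ((r : ℝ) : EReal); rw [hr]
    have h1 : s ≤ f (p, r) := hfB _ hmem
    rw [flin, hsplit] at h1
    have h3 : s/β ≤ r - (ys1 p.1 + ys2 p.2) := by
      rw [div_le_iff₀ hβ]; nlinarith [h1]
    rw [hr]
    apply EReal.coe_le_coe_iff.mpr
    linarith
  have hkey1 : ys2 ys1 ≤ -(s/β) := by
    have hconj : pconj h (ys1, ys2) ≤ ((-(s/β) : ℝ) : EReal) := by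
      apply iSup_le
      intro q
      by_cases htp : h q = ⊤
      · rw [htp, EReal.sub_top]; exact bot_le
      obtain ⟨r, hr⟩ := erealReal (h q) (hp.2 _) htp
      rw [hr, ← EReal.coe_sub]
      apply EReal.coe_le_coe_iff.mpr
      have h2 := hAff q
      rw [hr] at h2
      have h3 := EReal.coe_le_coe_iff.mp h2
      linarith
    have h2 := hmaj' (ys1, ys2)
    exact EReal.coe_le_coe_iff.mp (le_trans h2 hconj)
  have hUpper : ∀ p : X × StrongDual ℝ X, c p ≤ ys1 p.1 + ys2 p.2 + s/β := by
    intro p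
    by_contra hlt
    push_neg at hlt
    obtain ⟨t, ht1, ht2⟩ := exists_between hlt
    have hmem : ((p, t) : (X × StrongDual ℝ X) × ℝ) ∈ A := ht2
    have h1 : f (p, t) < s := hfA _ hmem
    rw [flin, hsplit] at h1
    have hsβ : s/β * β = s := div_mul_cancel₀ s hβne
    have hprod := mul_lt_mul_of_pos_right ht1 hβ
    linarith only [h1, hprod, hsβ]
  set vstar : StrongDual ℝ X := ys1 - w.2 with hvstardef
  set Vbb : StrongDual ℝ (StrongDual ℝ X) := ys2 - inclusionInDoubleDual ℝ X w.1 with hVbbdef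
  obtain ⟨u, hu⟩ := near_min vstar (lam/2) (δ/4) (by positivity) (by positivity)
  obtain ⟨v, hv⟩ := near_min Vbb (1/(2*lam)) (δ/4) (by positivity) (by positivity)
  have hup := hUpper (w.1 + u, w.2 + v)
  have hcval : c (w.1 + u, w.2 + v) = w.2 w.1 + w.2 u + (w.2 w.1 + v w.1) - w.2 w.1 + δ
      - lam/2*‖u‖^2 - 1/(2*lam)*‖v‖^2 := by
    simp only [hcdef]
    rw [map_add, ContinuousLinearMap.add_apply, add_sub_cancel_left, add_sub_cancel_left]
  have hr1 : ys1 (w.1 + u) = ys1 w.1 + ys1 u := map_add _ _ _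
  have hr2 : ys2 (w.2 + v) = ys2 w.2 + ys2 v := map_add _ _ _
  have hvs : ∀ x : X, ys1 x = vstar x + w.2 x := by
    intro x; rw [hvstardef]; simp
  have hVb : ∀ g : StrongDual ℝ X, ys2 g = Vbb g + g w.1 := by
    intro g; rw [hVbbdef]; simp
  have hysum : vstar + w.2 = ys1 := sub_add_cancel ys1 w.2
  have hys2ys1 : ys2 ys1 = Vbb vstar + Vbb w.2 + ys1 w.1 := by
    rw [hVb ys1, ← hysum, map_add]
  have hbound : -(Vbb vstar) ≤ ‖Vbb‖ * ‖vstar‖ := by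
    have h2 : |Vbb vstar| ≤ ‖Vbb‖ * ‖vstar‖ := by
      rw [← Real.norm_eq_abs]; exact Vbb.le_opNorm vstar
    linarith [neg_abs_le (Vbb vstar)]
  have amgm : ‖Vbb‖ * ‖vstar‖ ≤ lam/2 * ‖Vbb‖^2 + 1/(2*lam) * ‖vstar‖^2 := by
    rw [← sub_nonneg]
    have key : lam/2*‖Vbb‖^2 + 1/(2*lam)*‖vstar‖^2 - ‖Vbb‖*‖vstar‖
        = (lam*‖Vbb‖ - ‖vstar‖)^2/(2*lam) := by field_simp; ring
    rw [key]; positivity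
  have hu' : vstar u + lam/2*‖u‖^2 ≤ -(1/(2*lam)*‖vstar‖^2) + δ/4 := by
    have he : ‖vstar‖^2/(4*(lam/2)) = 1/(2*lam)*‖vstar‖^2 := by field_simp; ring
    rw [← he]; exact hu
  have hv' : Vbb v + 1/(2*lam)*‖v‖^2 ≤ -(lam/2*‖Vbb‖^2) + δ/4 := by
    have he : ‖Vbb‖^2/(4*(1/(2*lam))) = lam/2*‖Vbb‖^2 := by field_simp; ring
    rw [← he]; exact hv
  rw [hcval, hr1, hr2] at hup
  rw [hvs u, hvs w.1, hVb v, hVb w.2] at hup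
  -- hup : ... ≤ (vstar w.1 + w.2 w.1) + (vstar u + w.2 u) + ((Vbb w.2 + w.2 w.1) + (Vbb v + v w.1)) + s/β
  have hfinal : δ ≤ (vstar u + lam/2*‖u‖^2) + (Vbb v + 1/(2*lam)*‖v‖^2) - Vbb vstar := by
    have hk : s/β ≤ -(Vbb vstar + Vbb w.2 + ys1 w.1) := by
      rw [← hys2ys1]; linarith [hkey1]
    rw [hvs w.1] at hk
    linarith [hup, hk]
  linarith [hfinal, hu', hv', hbound, amgm, hδ]


lemma mono_est (h : X × StrongDual ℝ X → EReal) (hbot : ∀ x, h x ≠ ⊥) (hc : ConvexFn h)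
    (hmaj : ∀ p : X × StrongDual ℝ X, ((p.2 p.1 : ℝ) : EReal) ≤ h p)
    (p q : X × StrongDual ℝ X) (A B a b : ℝ) (ha : 0 < a) (hb : 0 < b) (hab : a + b = 1)
    (hq : h q ≤ ((q.2 q.1 + A : ℝ) : EReal)) (hp' : h p ≤ ((p.2 p.1 + B : ℝ) : EReal)) :
    -(A/b + B/a) ≤ (p.2 - q.2) (p.1 - q.1) := by
  obtain ⟨rq, hrq⟩ := erealReal (h q) (hbot q) (lt_of_le_of_lt hq (EReal.coe_lt_top _)).ne
  obtain ⟨rp, hrp⟩ := erealReal (h p) (hbot p) (lt_of_le_of_lt hp' (EReal.coe_lt_top _)).ne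
  have hrqle : rq ≤ q.2 q.1 + A := by rw [hrq] at hq; exact_mod_cast hq
  have hrple : rp ≤ p.2 p.1 + B := by rw [hrp] at hp'; exact_mod_cast hp'
  have hmix := hc q p a b ha.le hb.le hab
  have hmaj2 := hmaj (a • q + b • p)
  rw [hrq, hrp, ← EReal.coe_mul, ← EReal.coe_mul, ← EReal.coe_add] at hmix
  have hππ : ((a • q + b • p).2 (a • q + b • p).1) ≤ a*rq + b*rp :=
    EReal.coe_le_coe_iff.mp (le_trans hmaj2 hmix)
  have hexp : (a • q + b • p).2 (a • q + b • p).1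
      = a^2*(q.2 q.1) + a*b*(q.2 p.1) + a*b*(p.2 q.1) + b^2*(p.2 p.1) := by
    have h1 : (a • q + b • p).2 = a • q.2 + b • p.2 := rfl
    have h2 : (a • q + b • p).1 = a • q.1 + b • p.1 := rfl
    rw [h1, h2, ContinuousLinearMap.add_apply, ContinuousLinearMap.smul_apply,
      ContinuousLinearMap.smul_apply, map_add, map_add, map_smul, map_smul, map_smul, map_smul]
    simp only [smul_eq_mul]
    ring
  rw [hexp] at hππ
  have hpair : (p.2 - q.2) (p.1 - q.1) = p.2 p.1 - p.2 q.1 - q.2 p.1 + q.2 q.1 := by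
    rw [ContinuousLinearMap.sub_apply, map_sub, map_sub]; ring
  have haux1 : a*(a+b) = a := by rw [hab, mul_one]
  have haux2 : b*(a+b) = b := by rw [hab, mul_one]
  have e1 : a^2*(q.2 q.1) + a*b*(q.2 q.1) = a*(q.2 q.1) := by
    linear_combination (q.2 q.1) * haux1
  have e2 : a*b*(p.2 p.1) + b^2*(p.2 p.1) = b*(p.2 p.1) := by
    linear_combination (p.2 p.1) * haux2
  have hsc1 : a*rq ≤ a*(q.2 q.1 + A) := mul_le_mul_of_nonneg_left hrqle ha.le
  have hsc2 : b*rp ≤ b*(p.2 p.1 + B) := mul_le_mul_of_nonneg_left hrple hb.le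
  have keylin : a*b*(q.2 p.1) + a*b*(p.2 q.1) - a*b*(q.2 q.1) - a*b*(p.2 p.1)
      ≤ a*A + b*B := by nlinarith [hππ, hsc1, hsc2, e1, e2]
  have habm : 0 < a*b := mul_pos ha hb
  rw [hpair]
  rw [← mul_le_mul_iff_of_pos_right habm]
  have hfi : (A/b + B/a)*(a*b) = a*A + b*B := by field_simp
  nlinarith [keylin, hfi]

lemma aux_st (s t q0 d0 : ℝ) (hs : 0 ≤ s) (ht : 0 ≤ t) (hq00 : 0 ≤ q0) (hd00 : 0 ≤ d0)
    (hdq : d0 ≤ q0) (hQ : s^2 + t^2 ≤ 2*q0^2) (hD : (s-t)^2 ≤ 4*d0^2) : s ≤ q0 + d0 := by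
  by_cases hcase : s ≤ 2*d0
  · linarith
  · push_neg at hcase
    have ht1 : s - 2*d0 ≤ t := by nlinarith [hD]
    have ht2 : (s-2*d0)^2 ≤ t^2 := by nlinarith [ht1, hcase]
    nlinarith [hQ, ht2, sq_nonneg (s - d0 + q0)]

lemma sqrt_subadd (x y : ℝ) (hx : 0 ≤ x) (hy : 0 ≤ y) :
    Real.sqrt (x+y) ≤ Real.sqrt x + Real.sqrt y := by
  rw [show Real.sqrt x + Real.sqrt y = Real.sqrt ((Real.sqrt x + Real.sqrt y)^2) from
    (Real.sqrt_sq (by positivity)).symm]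
  apply Real.sqrt_le_sqrt
  nlinarith [Real.sq_sqrt hx, Real.sq_sqrt hy,
    mul_nonneg (Real.sqrt_nonneg x) (Real.sqrt_nonneg y)]

lemma stepLemma (h : X × StrongDual ℝ X → EReal) (hp : ProperFn h) (hc : ConvexFn h)
    (hmaj : ∀ p : X × StrongDual ℝ X, ((p.2 p.1 : ℝ) : EReal) ≤ h p)
    (hmaj' : ∀ p : StrongDual ℝ X × StrongDual ℝ (StrongDual ℝ X), ((p.2 p.1 : ℝ) : EReal) ≤ pconj h p)
    (w : X × StrongDual ℝ X) (lam δ α σ : ℝ)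
    (hlam : 0 < lam) (hδ : 0 < δ) (hα : 0 ≤ α) (hσ0 : 0 < σ) (hσ1 : σ < 1)
    (hw : h w ≤ ((w.2 w.1 + α : ℝ) : EReal)) :
    ∃ w' : X × StrongDual ℝ X, h w' ≤ ((w'.2 w'.1 + δ : ℝ) : EReal) ∧
      Real.sqrt lam * ‖w'.1 - w.1‖
        ≤ Real.sqrt (α/(1-σ)) + Real.sqrt δ * (Real.sqrt (1+1/σ) + 1) ∧
      ‖w'.2 - w.2‖ / Real.sqrt lam
        ≤ Real.sqrt (α/(1-σ)) + Real.sqrt δ * (Real.sqrt (1+1/σ) + 1) := by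
  obtain ⟨p, hpA⟩ := lemmaA h hp hc hmaj' w lam δ hlam hδ
  obtain ⟨r, hr⟩ := erealReal (h p) (hp.2 _) (hpA.trans_le le_top).ne
  have hrlt : r < w.2 p.1 + p.2 w.1 - w.2 w.1 + δ
      - lam/2*‖p.1-w.1‖^2 - 1/(2*lam)*‖p.2-w.2‖^2 := by
    rw [hr] at hpA; exact_mod_cast hpA
  have hπp : p.2 p.1 ≤ r := by
    have := hmaj p; rw [hr] at this; exact_mod_cast this
  have hvu : (p.2 - w.2) (p.1 - w.1) = p.2 p.1 - p.2 w.1 - w.2 p.1 + w.2 w.1 := by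
    rw [ContinuousLinearMap.sub_apply, map_sub, map_sub]; ring
  have hIV : (r - p.2 p.1) + (p.2 - w.2) (p.1 - w.1)
      + lam/2*‖p.1-w.1‖^2 + 1/(2*lam)*‖p.2-w.2‖^2 < δ := by
    rw [hvu]; linarith [hrlt]
  have hpB : h p ≤ ((p.2 p.1 + (r - p.2 p.1) : ℝ) : EReal) := by
    rw [hr]; norm_num
  have hmono := mono_est h hp.2 hc hmaj p w α (r - p.2 p.1) σ (1-σ) hσ0 (by linarith)
    (by ring) hw hpB
  have hopn : |(p.2 - w.2) (p.1 - w.1)| ≤ ‖p.2 - w.2‖ * ‖p.1 - w.1‖ := by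
    rw [← Real.norm_eq_abs]; exact (p.2 - w.2).le_opNorm (p.1 - w.1)
  have hvge : -(‖p.1 - w.1‖ * ‖p.2 - w.2‖) ≤ (p.2 - w.2) (p.1 - w.1) := by
    rw [mul_comm]
    linarith [neg_abs_le ((p.2 - w.2) (p.1 - w.1))]
  set s := Real.sqrt lam * ‖p.1 - w.1‖ with hsdef
  set t := ‖p.2 - w.2‖ / Real.sqrt lam with htdef
  have hsl : 0 < Real.sqrt lam := Real.sqrt_pos.mpr hlam
  have hsq : Real.sqrt lam ^ 2 = lam := Real.sq_sqrt hlam.le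
  have hs2 : s^2 = lam * ‖p.1 - w.1‖^2 := by rw [hsdef, mul_pow, hsq]
  have ht2 : t^2 = ‖p.2 - w.2‖^2 / lam := by rw [htdef, div_pow, hsq]
  have hst : s * t = ‖p.1 - w.1‖ * ‖p.2 - w.2‖ := by
    rw [hsdef, htdef]; field_simp
  have hs0 : 0 ≤ s := by positivity
  have ht0 : 0 ≤ t := by positivity
  have hFp0 : 0 ≤ r - p.2 p.1 := by linarith
  have hquad : ‖p.1 - w.1‖ * ‖p.2 - w.2‖
      ≤ lam/2*‖p.1-w.1‖^2 + 1/(2*lam)*‖p.2-w.2‖^2 := by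
    rw [← sub_nonneg]
    have key : lam/2*‖p.1-w.1‖^2 + 1/(2*lam)*‖p.2-w.2‖^2 - ‖p.1-w.1‖*‖p.2-w.2‖
        = (lam*‖p.1-w.1‖ - ‖p.2-w.2‖)^2/(2*lam) := by field_simp; ring
    rw [key]; positivity
  have hFpδ : r - p.2 p.1 < δ := by linarith
  have hdiv : (r - p.2 p.1)/σ ≤ δ/σ := by gcongr
  have fact1 : s^2 + t^2 ≤ 2*(δ + α/(1-σ) + δ/σ) := by
    rw [hs2, ht2]
    have hV : -(α/(1-σ) + δ/σ) ≤ (p.2 - w.2) (p.1 - w.1) := by linarith [hmono, hdiv]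
    have expand : lam * ‖p.1 - w.1‖^2 + ‖p.2 - w.2‖^2/lam
        = 2*(lam/2*‖p.1-w.1‖^2 + 1/(2*lam)*‖p.2-w.2‖^2) := by field_simp
    rw [expand]; linarith [hIV, hV, hFp0]
  have fact2 : (s-t)^2 ≤ 4*(δ/2) := by
    have expand : (s-t)^2 = s^2 - 2*(s*t) + t^2 := by ring
    rw [expand, hs2, ht2, hst]
    have expand2 : lam * ‖p.1 - w.1‖^2 + ‖p.2 - w.2‖^2/lam
        = 2*(lam/2*‖p.1-w.1‖^2 + 1/(2*lam)*‖p.2-w.2‖^2) := by field_simp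
    linarith [hIV, hvge, hFp0, expand2]
  set Q := δ + α/(1-σ) + δ/σ with hQdef
  have hα1σ : 0 ≤ α/(1-σ) := div_nonneg hα (by linarith)
  have hδσ : 0 < δ/σ := div_pos hδ hσ0
  have hQ0 : 0 ≤ Q := by rw [hQdef]; linarith
  set q0 := Real.sqrt Q with hq0def
  set d0 := Real.sqrt (δ/2) with hd0def
  have hq02 : q0^2 = Q := Real.sq_sqrt hQ0
  have hd02 : d0^2 = δ/2 := Real.sq_sqrt (by positivity)
  have hdq : d0 ≤ q0 := by
    apply Real.sqrt_le_sqrt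
    rw [hQdef]; linarith
  have hsle : s ≤ q0 + d0 := by
    apply aux_st s t q0 d0 hs0 ht0 (Real.sqrt_nonneg _) (Real.sqrt_nonneg _) hdq
    · rw [hq02]; exact fact1
    · rw [hd02]; exact fact2
  have htle : t ≤ q0 + d0 := by
    apply aux_st t s q0 d0 ht0 hs0 (Real.sqrt_nonneg _) (Real.sqrt_nonneg _) hdq
    · rw [hq02]; linarith [fact1]
    · rw [hd02]; rw [show (t-s)^2 = (s-t)^2 by ring]; exact fact2
  -- bound q0 + d0
  have hq0b : q0 ≤ Real.sqrt (α/(1-σ)) + Real.sqrt δ * Real.sqrt (1+1/σ) := by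
    have hsplit : Q = α/(1-σ) + δ*(1+1/σ) := by rw [hQdef]; ring
    rw [hq0def, hsplit]
    calc Real.sqrt (α/(1-σ) + δ*(1+1/σ))
        ≤ Real.sqrt (α/(1-σ)) + Real.sqrt (δ*(1+1/σ)) := by
          apply sqrt_subadd _ _ hα1σ
            (mul_nonneg hδ.le (by have := one_div_pos.mpr hσ0; linarith))
    _ = Real.sqrt (α/(1-σ)) + Real.sqrt δ * Real.sqrt (1+1/σ) := by
          rw [Real.sqrt_mul hδ.le]
  have hd0b : d0 ≤ Real.sqrt δ := Real.sqrt_le_sqrt (by linarith)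
  refine ⟨p, ?_, ?_, ?_⟩
  · rw [hr]; apply EReal.coe_le_coe_iff.mpr; linarith [hFpδ]
  · show Real.sqrt lam * ‖p.1 - w.1‖ ≤ _
    rw [← hsdef]; linarith [hsle, hq0b, hd0b]
  · show ‖p.2 - w.2‖ / Real.sqrt lam ≤ _
    rw [← htdef]; linarith [htle, hq0b, hd0b]

theorem statement8 {X : Type*} [NormedAddCommGroup X] [NormedSpace ℝ X] [CompleteSpace X]
    (h : X × StrongDual ℝ X → EReal) (hp : ProperFn h) (hc : ConvexFn h)
    (hl : LowerSemicontinuous h)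
    (hmaj : ∀ p : X × StrongDual ℝ X, ((p.2 p.1 : ℝ) : EReal) ≤ h p)
    (hmaj' : ∀ p : StrongDual ℝ X × StrongDual ℝ (StrongDual ℝ X), ((p.2 p.1 : ℝ) : EReal) ≤ pconj h p)
    (z : X) (zs : StrongDual ℝ X) (ε : ℝ)
    (hε : h (z, zs) ≤ (((zs z + ε : ℝ)) : EReal)) :
    ∀ η μ : ℝ, 0 < η → 0 < μ → 1 < η * μ →
      ∃ (y : X) (ys : StrongDual ℝ X),
        h (y, ys) = ((ys y : ℝ) : EReal) ∧
        ‖y - z‖ ≤ η * Real.sqrt ε ∧ ‖ys - zs‖ ≤ μ * Real.sqrt ε ∧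
        (0 < ε → ‖y - z‖ < η * Real.sqrt ε ∧ ‖ys - zs‖ < μ * Real.sqrt ε) := by
  intro η μ hη hμ hημ
  have hε0 : 0 ≤ ε := by
    have h1 := hmaj (z, zs)
    have h2 := le_trans h1 hε
    have h3 : zs z ≤ zs z + ε := by exact_mod_cast h2
    linarith
  rcases eq_or_lt_of_le hε0 with heq | hεpos
  · refine ⟨z, zs, ?_, ?_, ?_, ?_⟩
    · apply le_antisymm
      · rw [← heq] at hε; simpa using hε
      · exact hmaj (z, zs)
    · rw [← heq]; simp
    · rw [← heq]; simp
    · intro hc0; rw [← heq] at hc0; exact absurd hc0 (lt_irrefl 0)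
  · -- main case, ε > 0
    have hsε : 0 < Real.sqrt ε := Real.sqrt_pos.mpr hεpos
    set T := Real.sqrt (η*μ) with hTdef
    have hT1 : 1 < T := by
      have : Real.sqrt 1 < T := Real.sqrt_lt_sqrt (by norm_num) hημ
      simpa using this
    have hT0 : 0 < T := by linarith
    have hT2 : 1 < T^2 := by nlinarith
    have hiT2 : 0 < 1/T^2 := by positivity
    have hiT2' : 1/T^2 < 1 := by rw [div_lt_one (by positivity)]; exact hT2
    set σ := (1 - 1/T^2)/2 with hσdef
    have hσ0 : 0 < σ := by rw [hσdef]; linarith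
    have hσ1 : σ < 1 := by rw [hσdef]; linarith
    have h1σ : 0 < 1 - σ := by linarith
    set A0 := 1/Real.sqrt (1-σ) with hA0def
    have hs1σ : 0 < Real.sqrt (1-σ) := Real.sqrt_pos.mpr h1σ
    have hA0pos : 0 < A0 := by positivity
    have hA0T : A0 < T := by
      have k1 : 1/T^2 < 1-σ := by rw [hσdef]; linarith
      have k2 : Real.sqrt (1/T^2) < Real.sqrt (1-σ) := Real.sqrt_lt_sqrt (by positivity) k1
      have k3 : Real.sqrt (1/T^2) = 1/T := by
        rw [one_div, Real.sqrt_inv, Real.sqrt_sq hT0.le, one_div]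
      rw [k3] at k2
      rw [hA0def, div_lt_iff₀ hs1σ]
      calc (1:ℝ) = T * (1/T) := by field_simp
      _ < T * Real.sqrt (1-σ) := by exact mul_lt_mul_of_pos_left k2 hT0
    set c0 := Real.sqrt (1+1/σ) + 1 with hc0def
    have hc00 : 1 ≤ c0 := by
      rw [hc0def]; have := Real.sqrt_nonneg (1+1/σ); linarith
    have hc0pos : 0 < c0 := by linarith
    set q := (T - A0)/(2*(c0 + T)) with hqdef
    have hq0 : 0 < q := by rw [hqdef]; apply div_pos (by linarith) (by linarith)
    have hq1 : q < 1 := by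
      rw [hqdef, div_lt_one (by linarith)]; linarith
    clear_value T σ A0 c0 q
    have hκT : A0 + q*c0 < T*(1-q) := by
      have e : q*c0 + q*T = (T-A0)/2 := by rw [hqdef]; field_simp
      linarith [e, hA0T]
    set lam := μ/η with hlamdef
    have hlam : 0 < lam := by positivity
    have hsl : 0 < Real.sqrt lam := Real.sqrt_pos.mpr hlam
    have hηlam : η * Real.sqrt lam = T := by
      rw [hTdef, hlamdef, ← Real.sqrt_sq hη.le, ← Real.sqrt_mul (sq_nonneg η)]
      congr 1
      field_simp
      rw [Real.sq_sqrt (sq_nonneg η)]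
    have hμlam : T * Real.sqrt lam = μ := by
      rw [hTdef, hlamdef, ← Real.sqrt_mul (by positivity : (0:ℝ) ≤ η*μ)]
      rw [show η*μ*(μ/η) = μ^2 by field_simp]
      exact Real.sqrt_sq hμ.le
    set α : ℕ → ℝ := fun k => ε * q^(2*k) with hαdef
    have hα0 : ∀ k, 0 < α k := fun k => by rw [hαdef]; positivity
    have hsqα : ∀ k, Real.sqrt (α k) = Real.sqrt ε * q^k := by
      intro k
      rw [hαdef]
      simp only []
      rw [Real.sqrt_mul hεpos.le]
      congr 1
      rw [show 2*k = k*2 from Nat.mul_comm 2 k, pow_mul]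
      exact Real.sqrt_sq (pow_nonneg hq0.le k)
    set κ := A0 + q*c0 with hκdef
    have hκpos : 0 < κ := by
      have := mul_pos hq0 hc0pos; rw [hκdef]; linarith
    clear_value lam κ
    have stepEx : ∀ k : ℕ, ∀ w : X × StrongDual ℝ X, h w ≤ ((w.2 w.1 + α k : ℝ) : EReal) →
        ∃ w' : X × StrongDual ℝ X, h w' ≤ ((w'.2 w'.1 + α (k+1) : ℝ) : EReal) ∧
          ‖w'.1 - w.1‖ ≤ Real.sqrt ε * q^k * κ / Real.sqrt lam ∧
          ‖w'.2 - w.2‖ ≤ Real.sqrt ε * q^k * κ * Real.sqrt lam := by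
      intro k w hw
      obtain ⟨w', h1, h2, h3⟩ := stepLemma h hp hc hmaj hmaj' w lam (α (k+1)) (α k) σ
        hlam (hα0 _) (hα0 _).le hσ0 hσ1 hw
      have hbd : Real.sqrt (α k/(1-σ)) + Real.sqrt (α (k+1)) * (Real.sqrt (1+1/σ) + 1)
          = Real.sqrt ε * q^k * κ := by
        rw [show α k/(1-σ) = α k * (1-σ)⁻¹ by ring]
        rw [Real.sqrt_mul (hα0 k).le, Real.sqrt_inv]
        rw [hsqα k, hsqα (k+1)]
        rw [hκdef, hA0def, hc0def]
        rw [pow_succ]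
        field_simp
      refine ⟨w', h1, ?_, ?_⟩
      · rw [le_div_iff₀ hsl, ← hbd]
        linarith [h2]
      · rw [div_le_iff₀ hsl] at h3
        rw [← hbd]
        exact h3
    -- the recursive sequence
    let Fam : ℕ → Type _ := fun k => {w : X × StrongDual ℝ X // h w ≤ ((w.2 w.1 + α k : ℝ) : EReal)}
    have h00 : h (z, zs) ≤ ((((z,zs) : X × StrongDual ℝ X).2 ((z,zs) : X × StrongDual ℝ X).1 + α 0 : ℝ) : EReal) := by
      have hα00 : α 0 = ε := by rw [hαdef]; norm_num
      rw [hα00]; exact hε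
    let next : ∀ k, Fam k → Fam (k+1) := fun k w =>
      ⟨(stepEx k w.1 w.2).choose, (stepEx k w.1 w.2).choose_spec.1⟩
    let seq : ∀ k, Fam k := fun k => Nat.rec ⟨(z, zs), h00⟩ next k
    let g : ℕ → X × StrongDual ℝ X := fun k => (seq k).1
    have hg0 : g 0 = (z, zs) := rfl
    have hgd1 : ∀ k, ‖(g (k+1)).1 - (g k).1‖ ≤ Real.sqrt ε * q^k * κ / Real.sqrt lam :=
      fun k => (stepEx k (seq k).1 (seq k).2).choose_spec.2.1
    have hgd2 : ∀ k, ‖(g (k+1)).2 - (g k).2‖ ≤ Real.sqrt ε * q^k * κ * Real.sqrt lam :=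
      fun k => (stepEx k (seq k).1 (seq k).2).choose_spec.2.2
    have hInv : ∀ k, h (g k) ≤ (((g k).2 (g k).1 + α k : ℝ) : EReal) := fun k => (seq k).2
    -- Cauchy
    set C := Real.sqrt ε * κ * (Real.sqrt lam + 1/Real.sqrt lam) with hCdef
    have hC0 : 0 ≤ C := by
      rw [hCdef]
      apply mul_nonneg (mul_nonneg (Real.sqrt_nonneg ε) hκpos.le)
      positivity
    have hdistg : ∀ n, dist (g n) (g (n+1)) ≤ C * q^n := by
      intro n
      rw [Prod.dist_eq]
      apply max_le
      · rw [dist_comm, dist_eq_norm]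
        have e : Real.sqrt ε * q^n * κ / Real.sqrt lam
            = (Real.sqrt ε * κ * (1/Real.sqrt lam)) * q^n := by field_simp
        calc ‖(g (n+1)).1 - (g n).1‖ ≤ Real.sqrt ε * q^n * κ / Real.sqrt lam := hgd1 n
        _ = (Real.sqrt ε * κ * (1/Real.sqrt lam)) * q^n := e
        _ ≤ C * q^n := by
            apply mul_le_mul_of_nonneg_right ?_ (pow_nonneg hq0.le n)
            rw [hCdef]
            apply mul_le_mul_of_nonneg_left ?_ (mul_nonneg (Real.sqrt_nonneg ε) hκpos.le)
            linarith [hsl]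
      · rw [dist_comm, dist_eq_norm]
        have e : Real.sqrt ε * q^n * κ * Real.sqrt lam
            = (Real.sqrt ε * κ * Real.sqrt lam) * q^n := by ring
        calc ‖(g (n+1)).2 - (g n).2‖ ≤ Real.sqrt ε * q^n * κ * Real.sqrt lam := hgd2 n
        _ = (Real.sqrt ε * κ * Real.sqrt lam) * q^n := e
        _ ≤ C * q^n := by
            apply mul_le_mul_of_nonneg_right ?_ (pow_nonneg hq0.le n)
            rw [hCdef]
            apply mul_le_mul_of_nonneg_left ?_ (mul_nonneg (Real.sqrt_nonneg ε) hκpos.le)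
            have : 0 < 1/Real.sqrt lam := by positivity
            linarith
    have hcauchy : CauchySeq g := cauchySeq_of_le_geometric q C hq1 hdistg
    obtain ⟨a, ha⟩ := cauchySeq_tendsto_of_complete hcauchy
    -- geometric sums
    have hgeom : ∀ N : ℕ, (∑ i ∈ Finset.range N, q^i) ≤ 1/(1-q) := by
      intro N
      have hne : q ≠ 1 := ne_of_lt hq1
      have h1q : (0:ℝ) < 1 - q := by linarith
      rw [geom_sum_eq hne]
      have e : (q^N - 1)/(q - 1) = (1 - q^N)/(1-q) := by
        rw [div_eq_div_iff (sub_ne_zero.mpr hne) (ne_of_gt h1q)]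
        ring
      rw [e]
      gcongr <;> linarith [pow_nonneg hq0.le N]
    set D1 := Real.sqrt ε * κ / Real.sqrt lam with hD1def
    set D2 := Real.sqrt ε * κ * Real.sqrt lam with hD2def
    have hD10 : 0 ≤ D1 := by
      rw [hD1def]; positivity
    have hD20 : 0 ≤ D2 := by
      rw [hD2def]; positivity
    have hsum1 : ∀ N, ‖(g N).1 - z‖ ≤ D1 * (1/(1-q)) := by
      intro N
      have h1 : dist ((g 0).1) ((g N).1)
          ≤ ∑ i ∈ Finset.range N, dist ((g i).1) ((g (i+1)).1) :=
        dist_le_range_sum_dist (fun k => (g k).1) N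
      have h2 : ∀ i ∈ Finset.range N, dist ((g i).1) ((g (i+1)).1) ≤ D1 * q^i := by
        intro i _
        rw [dist_comm, dist_eq_norm]
        calc ‖(g (i+1)).1 - (g i).1‖ ≤ Real.sqrt ε * q^i * κ / Real.sqrt lam := hgd1 i
        _ = D1 * q^i := by rw [hD1def]; field_simp
      have h3 := Finset.sum_le_sum h2
      have h4 : ∑ i ∈ Finset.range N, D1 * q^i = D1 * ∑ i ∈ Finset.range N, q^i := by
        rw [Finset.mul_sum]
      have h5 : D1 * (∑ i ∈ Finset.range N, q^i) ≤ D1 * (1/(1-q)) :=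
        mul_le_mul_of_nonneg_left (hgeom N) hD10
      have h6 : ‖(g N).1 - z‖ = dist ((g 0).1) ((g N).1) := by
        rw [dist_comm, dist_eq_norm, hg0]
      rw [h6]
      calc dist ((g 0).1) ((g N).1) ≤ _ := h1
      _ ≤ ∑ i ∈ Finset.range N, D1 * q^i := h3
      _ = D1 * ∑ i ∈ Finset.range N, q^i := h4
      _ ≤ D1 * (1/(1-q)) := h5
    have hsum2 : ∀ N, ‖(g N).2 - zs‖ ≤ D2 * (1/(1-q)) := by
      intro N
      have h1 : dist ((g 0).2) ((g N).2)
          ≤ ∑ i ∈ Finset.range N, dist ((g i).2) ((g (i+1)).2) :=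
        dist_le_range_sum_dist (fun k => (g k).2) N
      have h2 : ∀ i ∈ Finset.range N, dist ((g i).2) ((g (i+1)).2) ≤ D2 * q^i := by
        intro i _
        rw [dist_comm, dist_eq_norm]
        calc ‖(g (i+1)).2 - (g i).2‖ ≤ Real.sqrt ε * q^i * κ * Real.sqrt lam := hgd2 i
        _ = D2 * q^i := by rw [hD2def]; ring
      have h3 := Finset.sum_le_sum h2
      have h4 : ∑ i ∈ Finset.range N, D2 * q^i = D2 * ∑ i ∈ Finset.range N, q^i := by
        rw [Finset.mul_sum]
      have h5 : D2 * (∑ i ∈ Finset.range N, q^i) ≤ D2 * (1/(1-q)) :=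
        mul_le_mul_of_nonneg_left (hgeom N) hD20
      have h6 : ‖(g N).2 - zs‖ = dist ((g 0).2) ((g N).2) := by
        rw [dist_comm, dist_eq_norm, hg0]
      rw [h6]
      calc dist ((g 0).2) ((g N).2) ≤ _ := h1
      _ ≤ ∑ i ∈ Finset.range N, D2 * q^i := h3
      _ = D2 * ∑ i ∈ Finset.range N, q^i := h4
      _ ≤ D2 * (1/(1-q)) := h5
    have ha1 : Filter.Tendsto (fun N => (g N).1) atTop (nhds a.1) :=
      (continuous_fst.tendsto a).comp ha
    have ha2 : Filter.Tendsto (fun N => (g N).2) atTop (nhds a.2) :=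
      (continuous_snd.tendsto a).comp ha
    have hlim1 : ‖a.1 - z‖ ≤ D1 * (1/(1-q)) := by
      have hten : Filter.Tendsto (fun N => ‖(g N).1 - z‖) atTop (nhds ‖a.1 - z‖) :=
        (ha1.sub tendsto_const_nhds).norm
      exact le_of_tendsto hten (Filter.Eventually.of_forall hsum1)
    have hlim2 : ‖a.2 - zs‖ ≤ D2 * (1/(1-q)) := by
      have hten : Filter.Tendsto (fun N => ‖(g N).2 - zs‖) atTop (nhds ‖a.2 - zs‖) :=
        (ha2.sub tendsto_const_nhds).norm
      exact le_of_tendsto hten (Filter.Eventually.of_forall hsum2)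
    have h1q : (0:ℝ) < 1 - q := by linarith
    have keyκ : κ < T*(1-q) := hκT
    have hbound1 : D1 * (1/(1-q)) < η * Real.sqrt ε := by
      have e1 : D1 * (1/(1-q)) = Real.sqrt ε * κ / (Real.sqrt lam * (1-q)) := by
        rw [hD1def]; field_simp
      rw [e1, div_lt_iff₀ (mul_pos hsl h1q)]
      calc Real.sqrt ε * κ < Real.sqrt ε * (T*(1-q)) := mul_lt_mul_of_pos_left keyκ hsε
      _ = η * Real.sqrt ε * (Real.sqrt lam * (1-q)) := by rw [← hηlam]; ring
    have hbound2 : D2 * (1/(1-q)) < μ * Real.sqrt ε := by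
      have e1 : D2 * (1/(1-q)) = Real.sqrt ε * (κ * Real.sqrt lam) / (1-q) := by
        rw [hD2def]; field_simp
      rw [e1, div_lt_iff₀ h1q]
      have k2 : κ * Real.sqrt lam < T*(1-q) * Real.sqrt lam :=
        mul_lt_mul_of_pos_right keyκ hsl
      calc Real.sqrt ε * (κ * Real.sqrt lam)
          < Real.sqrt ε * (T*(1-q) * Real.sqrt lam) := mul_lt_mul_of_pos_left k2 hsε
      _ = μ * Real.sqrt ε * (1-q) := by rw [show T*(1-q)*Real.sqrt lam = (T*Real.sqrt lam)*(1-q) by ring, hμlam]; ring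
    -- value equality at the limit
    have hπc : Continuous (fun p : X × StrongDual ℝ X => p.2 p.1) :=
      isBoundedBilinearMap_apply.continuous.comp (continuous_snd.prodMk continuous_fst)
    have hαlim : Filter.Tendsto α atTop (nhds 0) := by
      have e : α = fun k => ε * (q^2)^k := by
        funext k; rw [hαdef]; simp [pow_mul]
      rw [e]
      have := (tendsto_pow_atTop_nhds_zero_of_lt_one (by positivity : (0:ℝ) ≤ q^2)
        (by nlinarith : q^2 < 1)).const_mul ε
      simpa using this
    have hfa : h a ≤ ((a.2 a.1 : ℝ) : EReal) := by
      by_contra hcon2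
      push_neg at hcon2
      obtain ⟨M, hM1, hM2⟩ := exists_between hcon2
      have hMbot : M ≠ ⊥ := by
        intro hbot; rw [hbot] at hM1; exact absurd hM1 (by simp)
      have hMtop : M ≠ ⊤ := (hM2.trans_le le_top).ne
      obtain ⟨m, hm⟩ := erealReal M hMbot hMtop
      rw [hm] at hM1 hM2
      have hm1 : a.2 a.1 < m := by exact_mod_cast hM1
      have hev1 : ∀ᶠ k in atTop, ((m:ℝ):EReal) < h (g k) := ha.eventually (hl a _ hM2)
      have htend : Filter.Tendsto (fun k => (g k).2 (g k).1 + α k) atTop (nhds (a.2 a.1 + 0)) :=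
        Filter.Tendsto.add ((hπc.tendsto a).comp ha) hαlim
      rw [add_zero] at htend
      have hev2 : ∀ᶠ k in atTop, (g k).2 (g k).1 + α k < m :=
        (tendsto_order.1 htend).2 m hm1
      obtain ⟨k, h1k, h2k⟩ := (hev1.and hev2).exists
      have h3 := hInv k
      have h4 : h (g k) < ((m:ℝ):EReal) :=
        lt_of_le_of_lt h3 (by exact_mod_cast h2k)
      exact absurd (h1k.trans h4) (lt_irrefl _)
    have hfeq : h a = ((a.2 a.1 : ℝ) : EReal) := le_antisymm hfa (hmaj a)
    refine ⟨a.1, a.2, hfeq, ?_, ?_, ?_⟩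
    · exact le_of_lt (lt_of_le_of_lt hlim1 hbound1)
    · exact le_of_lt (lt_of_le_of_lt hlim2 hbound2)
    · intro _
      exact ⟨lt_of_le_of_lt hlim1 hbound1, lt_of_le_of_lt hlim2 hbound2⟩
end
end

section
/- Let X be a real Banach space and T : X ⇉ X* a maximal monotone operator. Then the Fitzpatrick function φ_T is the smallest element of the Fitzpatrick family F_T, and for any h ∈ F_T and (x, x*) ∈ X × X*: (x, x*) ∈ T if and only if h(x, x*) = ⟨x, x*⟩. -/
open Filter Topology NormedSpace

noncomputable section

variable {X : Type*} [NormedAddCommGroup X] [NormedSpace ℝ X]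

/-- Monotonicity of a point-to-set operator `T : X ⇉ X*`, viewed as its graph. -/
def IsMonotoneOp (T : Set (X × StrongDual ℝ X)) : Prop :=
  ∀ p ∈ T, ∀ q ∈ T, 0 ≤ (p.2 - q.2) (p.1 - q.1)

/-- Maximal monotonicity of `T : X ⇉ X*`. -/
def IsMaxMonotoneOp (T : Set (X × StrongDual ℝ X)) : Prop :=
  IsMonotoneOp T ∧ ∀ S : Set (X × StrongDual ℝ X), IsMonotoneOp S → T ⊆ S → S = T

/-- The Fitzpatrick function of `T`. -/
def fitz (T : Set (X × StrongDual ℝ X)) : X × StrongDual ℝ X → EReal :=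
  fun p => ⨆ q : T, ((p.2 q.1.1 + q.1.2 p.1 - q.1.2 q.1.1 : ℝ) : EReal)

/-- Membership in the Fitzpatrick family of `T`. -/
def InFitzFam (T : Set (X × StrongDual ℝ X)) (h : X × StrongDual ℝ X → EReal) : Prop :=
  ConvexFn h ∧ LowerSemicontinuous h ∧
    (∀ p : X × StrongDual ℝ X, ((p.2 p.1 : ℝ) : EReal) ≤ h p) ∧
    ∀ p ∈ T, h p = ((p.2 p.1 : ℝ) : EReal)

/-- Simons' condition (NI): `inf_{(y,y*)∈T} ⟨y* − x*, y − x**⟩ ≤ 0` for all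
`(x*, x**) ∈ X* × X**`. -/
def IsNI (T : Set (X × StrongDual ℝ X)) : Prop :=
  ∀ (xs : StrongDual ℝ X) (xss : StrongDual ℝ (StrongDual ℝ X)),
    (⨅ q : T, ((q.1.2 q.1.1 - xs q.1.1 - xss q.1.2 + xss xs : ℝ) : EReal)) ≤ 0

/-- Gossez's monotone closure of `T` in `X** × X*`. -/
def gossezClosure (T : Set (X × StrongDual ℝ X)) : Set (StrongDual ℝ (StrongDual ℝ X) × StrongDual ℝ X) :=
  {p | ∀ q ∈ T, 0 ≤ p.1 (p.2 - q.2) - (p.2 - q.2) q.1}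

theorem limlem (A B c : ℝ) (h : ∀ t : ℝ, 0 < t → t < 1 → (1-t)*A + t*B ≤ c) : B ≤ c := by
  by_contra hc
  push_neg at hc
  rcases le_or_gt B A with hAB | hAB
  · have := h (1/2) (by norm_num) (by norm_num); linarith
  · set ε : ℝ := min (1/2) ((B - c)/(2*(B - A))) with hε
    have hd : (0:ℝ) < (B - c)/(2*(B - A)) := div_pos (by linarith) (by linarith)
    have hε0 : 0 < ε := lt_min (by norm_num) hd
    have hε2 : ε ≤ (B - c)/(2*(B - A)) := min_le_right _ _
    have hε1 : ε ≤ 1/2 := min_le_left _ _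
    have := h (1 - ε) (by linarith) (by linarith)
    have h2 : ε * (B - A) ≤ (B - c)/2 := by
      rw [le_div_iff₀ (by linarith : (0:ℝ) < 2*(B-A))] at hε2
      linarith
    nlinarith

theorem term_le_of_fam {X : Type*} [NormedAddCommGroup X] [NormedSpace ℝ X]
    (T : Set (X × StrongDual ℝ X)) (h : X × StrongDual ℝ X → EReal) (hfam : InFitzFam T h)
    (p : X × StrongDual ℝ X) (q : X × StrongDual ℝ X) (hq : q ∈ T) :
    ((p.2 q.1 + q.2 p.1 - q.2 q.1 : ℝ) : EReal) ≤ h p := by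
  obtain ⟨hconv, _, hlow, heq⟩ := hfam
  rcases eq_top_or_lt_top (h p) with htop | hlt
  · rw [htop]; exact le_top
  have hbot : h p ≠ ⊥ := by
    intro hb
    have := hlow p
    rw [hb, le_bot_iff] at this
    exact EReal.coe_ne_bot _ this
  set c : ℝ := (h p).toReal with hcdef
  have hc : h p = (c : EReal) := (EReal.coe_toReal (ne_of_lt hlt) hbot).symm
  rw [hc]
  rw [EReal.coe_le_coe_iff]
  apply limlem (p.2 p.1)
  intro t ht0 ht1
  have hcv := hconv p q (1 - t) t (by linarith) (le_of_lt ht0) (by ring)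
  rw [hc, heq q hq] at hcv
  have hco : ((1 - t : ℝ) : EReal) * (c : EReal) + ((t : ℝ) : EReal) * ((q.2 q.1 : ℝ) : EReal)
      = (((1-t)*c + t * (q.2 q.1) : ℝ) : EReal) := by
    push_cast
    ring
  rw [hco] at hcv
  have hlo := (hlow ((1 - t) • p + t • q)).trans hcv
  rw [EReal.coe_le_coe_iff] at hlo
  have hexp : (((1 - t) • p + t • q).2) (((1 - t) • p + t • q).1)
      = (1-t)*(1-t)*(p.2 p.1) + t*(1-t)*(p.2 q.1) + (1-t)*t*(q.2 p.1) + t*t*(q.2 q.1) := by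
    simp [Prod.smul_fst, Prod.smul_snd, map_add, map_smul, ContinuousLinearMap.add_apply,
      ContinuousLinearMap.smul_apply, smul_eq_mul]
    ring
  rw [hexp] at hlo
  have h1t : (0:ℝ) < 1 - t := by linarith
  rw [← mul_le_mul_iff_of_pos_left h1t]
  nlinarith [hlo]

theorem mem_of_forall_term {X : Type*} [NormedAddCommGroup X] [NormedSpace ℝ X]
    (T : Set (X × StrongDual ℝ X)) (hT : IsMaxMonotoneOp T) (p : X × StrongDual ℝ X)
    (hp : ∀ q ∈ T, p.2 q.1 + q.2 p.1 - q.2 q.1 ≤ p.2 p.1) : p ∈ T := by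
  have hmono : IsMonotoneOp (insert p T) := by
    intro r hr s hs
    rcases hr with hr | hr <;> rcases hs with hs | hs
    · subst hr; subst hs; simp
    · subst hr
      have := hp s hs
      simp only [ContinuousLinearMap.sub_apply, map_sub]
      linarith
    · subst hs
      have := hp r hr
      simp only [ContinuousLinearMap.sub_apply, map_sub]
      linarith
    · exact hT.1 r hr s hs
  have := hT.2 _ hmono (Set.subset_insert p T)
  rw [← this]
  exact Set.mem_insert p T


theorem statement9 {X : Type*} [NormedAddCommGroup X] [NormedSpace ℝ X] [CompleteSpace X]
    (T : Set (X × StrongDual ℝ X)) (hT : IsMaxMonotoneOp T) :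
    InFitzFam T (fitz T) ∧
    (∀ h, InFitzFam T h → ∀ p, fitz T p ≤ h p) ∧
    (∀ h, InFitzFam T h → ∀ p : X × StrongDual ℝ X,
      (p ∈ T ↔ h p = ((p.2 p.1 : ℝ) : EReal))) := by
  -- fitz dominates the pairing
  have hge : ∀ p : X × StrongDual ℝ X, ((p.2 p.1 : ℝ) : EReal) ≤ fitz T p := by
    intro p
    by_contra hcon
    push_neg at hcon
    have hmem : p ∈ T := by
      apply mem_of_forall_term T hT p
      intro q hq
      have h1 : ((p.2 q.1 + q.2 p.1 - q.2 q.1 : ℝ) : EReal) ≤ fitz T p :=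
        le_iSup (fun r : T => ((p.2 r.1.1 + r.1.2 p.1 - r.1.2 r.1.1 : ℝ) : EReal)) ⟨q, hq⟩
      have := h1.trans_lt hcon
      rw [EReal.coe_lt_coe_iff] at this
      linarith
    have h1 : ((p.2 p.1 + p.2 p.1 - p.2 p.1 : ℝ) : EReal) ≤ fitz T p :=
      le_iSup (fun r : T => ((p.2 r.1.1 + r.1.2 p.1 - r.1.2 r.1.1 : ℝ) : EReal)) ⟨p, hmem⟩
    have := h1.trans_lt hcon
    rw [EReal.coe_lt_coe_iff] at this
    linarith
  -- fitz equals pairing on T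
  have heqT : ∀ p ∈ T, fitz T p = ((p.2 p.1 : ℝ) : EReal) := by
    intro p hp
    refine le_antisymm (iSup_le fun q => ?_) (hge p)
    rw [EReal.coe_le_coe_iff]
    have := hT.1 p hp q.1 q.2
    simp only [ContinuousLinearMap.sub_apply, map_sub] at this
    linarith
  -- fitz is convex
  have hcvx : ConvexFn (fitz T) := by
    intro p q a b ha hb hab
    apply iSup_le
    intro r
    have hterm : (((a • p + b • q).2) r.1.1 + r.1.2 ((a • p + b • q).1) - r.1.2 r.1.1 : ℝ)
        = a * (p.2 r.1.1 + r.1.2 p.1 - r.1.2 r.1.1) + b * (q.2 r.1.1 + r.1.2 q.1 - r.1.2 r.1.1) := by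
      simp only [Prod.fst_add, Prod.snd_add, Prod.smul_fst, Prod.smul_snd, map_add, map_smul,
        ContinuousLinearMap.add_apply, ContinuousLinearMap.smul_apply, smul_eq_mul]
      have : a * (r.1.2 r.1.1) + b * (r.1.2 r.1.1) = r.1.2 r.1.1 := by
        rw [← add_mul, hab, one_mul]
      linarith
    rw [hterm]
    have hcast : ((a * (p.2 r.1.1 + r.1.2 p.1 - r.1.2 r.1.1)
          + b * (q.2 r.1.1 + r.1.2 q.1 - r.1.2 r.1.1) : ℝ) : EReal)
        = (a : EReal) * ((p.2 r.1.1 + r.1.2 p.1 - r.1.2 r.1.1 : ℝ) : EReal)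
          + (b : EReal) * ((q.2 r.1.1 + r.1.2 q.1 - r.1.2 r.1.1 : ℝ) : EReal) := by
      push_cast
      ring
    rw [hcast]
    apply add_le_add
    · exact mul_le_mul_of_nonneg_left
        (le_iSup (fun s : T => ((p.2 s.1.1 + s.1.2 p.1 - s.1.2 s.1.1 : ℝ) : EReal)) r)
        (EReal.coe_nonneg.2 ha)
    · exact mul_le_mul_of_nonneg_left
        (le_iSup (fun s : T => ((q.2 s.1.1 + s.1.2 q.1 - s.1.2 s.1.1 : ℝ) : EReal)) r)
        (EReal.coe_nonneg.2 hb)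
  -- fitz is lower semicontinuous
  have hlsc : LowerSemicontinuous (fitz T) := by
    apply lowerSemicontinuous_iSup
    intro q
    apply Continuous.lowerSemicontinuous
    apply continuous_coe_real_ereal.comp
    have h1 : Continuous fun p : X × StrongDual ℝ X => p.2 q.1.1 :=
      ((ContinuousLinearMap.apply ℝ ℝ q.1.1).continuous).comp continuous_snd
    have h2 : Continuous fun p : X × StrongDual ℝ X => q.1.2 p.1 :=
      q.1.2.continuous.comp continuous_fst
    exact (h1.add h2).sub continuous_const
  have hfam : InFitzFam T (fitz T) := ⟨hcvx, hlsc, hge, heqT⟩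
  refine ⟨hfam, ?_, ?_⟩
  · intro h hh p
    exact iSup_le fun q => term_le_of_fam T h hh p q.1 q.2
  · intro h hh p
    constructor
    · exact hh.2.2.2 p
    · intro hp
      apply mem_of_forall_term T hT p
      intro q hq
      have := (term_le_of_fam T h hh p q hq).trans_eq hp
      rwa [EReal.coe_le_coe_iff] at this
end
end

section
/- Let X be a real Banach space, f, g : X → ℝ ∪ {+∞} proper convex lower semicontinuous functions, and suppose g is continuous at some point x̂ ∈ dom f ∩ dom g. Then inf_{x ∈ X} ( f(x) + g(x) ) = max_{x* ∈ X*} ( −f*(x*) − g*(−x*) ), where the maximum on the right-hand side is attained. -/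
open Filter Topology NormedSpace

noncomputable section

lemma weak_pt {X : Type*} [NormedAddCommGroup X] [NormedSpace ℝ X]
    (f g : X → EReal) (hpf : ∀ x, f x ≠ ⊥) (hpg : ∀ x, g x ≠ ⊥)
    (ys : StrongDual ℝ X) (x : X) :
    -fconj f ys - fconj g (-ys) ≤ f x + g x := by
  by_cases hfx : f x = ⊤
  · rw [hfx, EReal.top_add_of_ne_bot (hpg x)]; exact le_top
  by_cases hgx : g x = ⊤
  · rw [hgx, EReal.add_top_of_ne_bot (hpf x)]; exact le_top
  obtain ⟨a, ha⟩ : ∃ r : ℝ, f x = (r : EReal) := ⟨(f x).toReal, (EReal.coe_toReal hfx (hpf x)).symm⟩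
  obtain ⟨b, hb⟩ : ∃ r : ℝ, g x = (r : EReal) := ⟨(g x).toReal, (EReal.coe_toReal hgx (hpg x)).symm⟩
  have h1 : ((ys x : ℝ) : EReal) - f x ≤ fconj f ys := le_iSup (fun x => ((ys x : ℝ) : EReal) - f x) x
  have h2 : (((-ys) x : ℝ) : EReal) - g x ≤ fconj g (-ys) :=
    le_iSup (fun x => (((-ys) x : ℝ) : EReal) - g x) x
  rw [ha] at h1
  rw [hb, ContinuousLinearMap.neg_apply] at h2
  have e1 : -fconj f ys ≤ ((a - ys x : ℝ) : EReal) := by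
    rw [← EReal.neg_le_neg_iff]; rw [neg_neg]
    calc ((-(a - ys x) : ℝ) : EReal) = ((ys x : ℝ) : EReal) - (a : EReal) := by norm_cast; ring
    _ ≤ _ := h1
  have e2 : -fconj g (-ys) ≤ ((b + ys x : ℝ) : EReal) := by
    rw [← EReal.neg_le_neg_iff]; rw [neg_neg]
    calc ((-(b + ys x) : ℝ) : EReal) = ((-(ys x) : ℝ) : EReal) - (b : EReal) := by norm_cast; ring
    _ ≤ _ := h2
  calc -fconj f ys - fconj g (-ys) ≤ ((a - ys x : ℝ) : EReal) + ((b + ys x : ℝ) : EReal) :=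
        add_le_add e1 e2
    _ = f x + g x := by rw [ha, hb]; norm_cast; ring

-- convexity of the epigraph
lemma epi_convex_s16 {X : Type*} [NormedAddCommGroup X] [NormedSpace ℝ X]
    (f : X → EReal) (hcf : ConvexFn f) :
    Convex ℝ {p : X × ℝ | f p.1 ≤ (p.2 : EReal)} := by
  intro p hp q hq a b ha hb hab
  simp only [Set.mem_setOf_eq, Prod.smul_fst, Prod.smul_snd, Prod.fst_add, Prod.snd_add] at *
  calc f (a • p.1 + b • q.1) ≤ (a : EReal) * f p.1 + (b : EReal) * f q.1 := hcf _ _ a b ha hb hab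
    _ ≤ (a : EReal) * (p.2 : EReal) + (b : EReal) * (q.2 : EReal) :=
        add_le_add (mul_le_mul_of_nonneg_left hp (by exact_mod_cast ha))
          (mul_le_mul_of_nonneg_left hq (by exact_mod_cast hb))
    _ = ((a • p.2 + b • q.2 : ℝ) : EReal) := by
        rw [← EReal.coe_mul, ← EReal.coe_mul, ← EReal.coe_add]; simp [smul_eq_mul]

-- convexity of the strict "hypograph-type" set B
lemma B_convex {X : Type*} [NormedAddCommGroup X] [NormedSpace ℝ X]
    (g : X → EReal) (hcg : ConvexFn g) (hpg : ∀ x, g x ≠ ⊥) (m₀ : ℝ) :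
    Convex ℝ {p : X × ℝ | g p.1 + (p.2 : EReal) < (m₀ : EReal)} := by
  intro p hp q hq a b ha hb hab
  simp only [Set.mem_setOf_eq, Prod.smul_fst, Prod.smul_snd, Prod.fst_add, Prod.snd_add] at *
  -- g p.1 and g q.1 are real
  have hpt : g p.1 ≠ ⊤ := by
    intro h; rw [h, EReal.top_add_of_ne_bot (by exact EReal.coe_ne_bot _)] at hp
    exact (not_top_lt hp)
  have hqt : g q.1 ≠ ⊤ := by
    intro h; rw [h, EReal.top_add_of_ne_bot (by exact EReal.coe_ne_bot _)] at hq
    exact (not_top_lt hq)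
  obtain ⟨s, hs⟩ : ∃ r : ℝ, g p.1 = (r : EReal) := ⟨_, (EReal.coe_toReal hpt (hpg _)).symm⟩
  obtain ⟨t, ht⟩ : ∃ r : ℝ, g q.1 = (r : EReal) := ⟨_, (EReal.coe_toReal hqt (hpg _)).symm⟩
  rw [hs] at hp; rw [ht] at hq
  have hs' : s + p.2 < m₀ := by exact_mod_cast hp
  have ht' : t + q.2 < m₀ := by exact_mod_cast hq
  have key : g (a • p.1 + b • q.1) ≤ ((a * s + b * t : ℝ) : EReal) := by
    calc g (a • p.1 + b • q.1) ≤ (a : EReal) * g p.1 + (b : EReal) * g q.1 := hcg _ _ a b ha hb hab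
      _ = ((a * s + b * t : ℝ) : EReal) := by rw [hs, ht]; norm_cast
  calc g (a • p.1 + b • q.1) + ((a • p.2 + b • q.2 : ℝ) : EReal)
      ≤ ((a * s + b * t : ℝ) : EReal) + ((a • p.2 + b • q.2 : ℝ) : EReal) := add_le_add key le_rfl
    _ = (((a * (s + p.2) + b * (t + q.2)) : ℝ) : EReal) := by norm_cast; simp [smul_eq_mul]; ring
    _ < (m₀ : EReal) := by
        apply EReal.coe_lt_coe_iff.mpr
        rcases ha.lt_or_eq with hapos | haz
        · have hmm : a*m₀ + b*m₀ = m₀ := by rw [← add_mul, hab, one_mul]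
          linarith [mul_lt_mul_of_pos_left hs' hapos, mul_le_mul_of_nonneg_left ht'.le hb]
        · have hb1 : b = 1 := by linarith
          rw [← haz, hb1]; linarith

set_option maxHeartbeats 1000000 in
theorem statement16 {X : Type*} [NormedAddCommGroup X] [NormedSpace ℝ X] [CompleteSpace X]
    (f g : X → EReal)
    (hpf : ProperFn f) (hcf : ConvexFn f) (hlf : LowerSemicontinuous f)
    (hpg : ProperFn g) (hcg : ConvexFn g) (hlg : LowerSemicontinuous g)
    (x₀ : X) (hx₀f : f x₀ ≠ ⊤) (hx₀g : g x₀ ≠ ⊤) (hcont : ContinuousAt g x₀) :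
    ∃ xs : StrongDual ℝ X,
      (⨅ x : X, f x + g x) = -fconj f xs - fconj g (-xs) ∧
      ∀ ys : StrongDual ℝ X, -fconj f ys - fconj g (-ys) ≤ -fconj f xs - fconj g (-xs) := by
  set m : EReal := ⨅ x : X, f x + g x with hm
  have weak : ∀ ys : StrongDual ℝ X, -fconj f ys - fconj g (-ys) ≤ m :=
    fun ys => le_iInf (fun x => weak_pt f g hpf.2 hpg.2 ys x)
  obtain ⟨a₀, ha₀⟩ : ∃ r : ℝ, f x₀ = (r : EReal) := ⟨_, (EReal.coe_toReal hx₀f (hpf.2 x₀)).symm⟩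
  obtain ⟨b₀, hb₀⟩ : ∃ r : ℝ, g x₀ = (r : EReal) := ⟨_, (EReal.coe_toReal hx₀g (hpg.2 x₀)).symm⟩
  have hmle : m ≤ ((a₀ + b₀ : ℝ) : EReal) := by
    rw [EReal.coe_add, ← ha₀, ← hb₀]; exact iInf_le _ x₀
  have hmtop : m ≠ ⊤ := by
    intro h; rw [h, top_le_iff] at hmle; exact EReal.coe_ne_top _ hmle
  by_cases hmbot : m = ⊥
  · refine ⟨0, ?_, ?_⟩
    · refine le_antisymm ?_ ?_
      · rw [hmbot]; exact bot_le
      · exact weak 0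
    · intro ys
      have h2 : -fconj f ys - fconj g (-ys) = ⊥ := le_bot_iff.mp ((weak ys).trans_eq hmbot)
      rw [h2]; exact bot_le
  -- main case: m is a real number
  obtain ⟨m₀, hm₀⟩ : ∃ r : ℝ, m = (r : EReal) := ⟨_, (EReal.coe_toReal hmtop hmbot).symm⟩
  set C : Set (X × ℝ) := {p | f p.1 ≤ (p.2 : EReal)} with hC
  set B : Set (X × ℝ) := {p | g p.1 + (p.2 : EReal) < (m₀ : EReal)} with hB
  have hCconv : Convex ℝ C := epi_convex_s16 f hcf
  have hBconv : Convex ℝ B := B_convex g hcg hpg.2 m₀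
  have hm₀le : ∀ x : X, (m₀ : EReal) ≤ f x + g x := fun x => hm₀ ▸ iInf_le _ x
  -- interior point of B
  have hw : ((x₀, m₀ - b₀ - 1) : X × ℝ) ∈ interior B := by
    rw [mem_interior_iff_mem_nhds]
    have hU : {y : X | g y < ((b₀ + 1/2 : ℝ) : EReal)} ∈ 𝓝 x₀ := by
      show g ⁻¹' (Set.Iio ((b₀ + 1/2 : ℝ) : EReal)) ∈ 𝓝 x₀
      apply hcont.preimage_mem_nhds
      apply isOpen_Iio.mem_nhds
      rw [hb₀, Set.mem_Iio]; exact_mod_cast (by linarith : b₀ < b₀ + 1/2)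
    have hsub : {y : X | g y < ((b₀ + 1/2 : ℝ) : EReal)} ×ˢ Set.Iio (m₀ - b₀ - 1/2) ⊆ B := by
      rintro ⟨y, lam⟩ ⟨hy, hlam⟩
      simp only [hB, Set.mem_setOf_eq]
      calc g y + (lam : EReal) < ((b₀ + 1/2 : ℝ) : EReal) + ((m₀ - b₀ - 1/2 : ℝ) : EReal) :=
            EReal.add_lt_add hy (by exact_mod_cast hlam)
        _ = (m₀ : EReal) := by norm_cast; ring
    exact mem_of_superset (prod_mem_nhds hU (Iio_mem_nhds (by linarith))) hsub
  -- disjointness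
  have hdisj : Disjoint (interior B) C := by
    rw [Set.disjoint_left]
    intro p hpB hpC
    have hpB' : p ∈ B := interior_subset hpB
    simp only [hB, Set.mem_setOf_eq] at hpB'
    simp only [hC, Set.mem_setOf_eq] at hpC
    have : f p.1 + g p.1 ≤ g p.1 + (p.2 : EReal) := by
      rw [add_comm (g p.1)]; exact add_le_add hpC le_rfl
    exact lt_irrefl _ (lt_of_le_of_lt (hm₀le p.1) (lt_of_le_of_lt this hpB'))
  obtain ⟨φ, u, hφB, hφC⟩ :=
    geometric_hahn_banach_open (hBconv.interior) isOpen_interior hCconv hdisj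
  -- φ ≤ u on all of B
  have hBle : ∀ p ∈ B, φ p ≤ u := by
    intro p hp
    have hseg : ∀ t : ℝ, 0 < t → t ≤ 1 →
        ((1 - t) • p + t • ((x₀, m₀ - b₀ - 1) : X × ℝ)) ∈ interior B :=
      fun t ht ht1 => hBconv.combo_self_interior_mem_interior hp hw (by linarith) ht (by ring)
    have hval : ∀ t : ℝ, 0 < t → t ≤ 1 →
        (1 - t) * φ p + t * φ ((x₀, m₀ - b₀ - 1) : X × ℝ) < u := by
      intro t ht ht1
      have := hφB _ (hseg t ht ht1)
      rwa [map_add, map_smul, map_smul, smul_eq_mul, smul_eq_mul] at this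
    have htend : Tendsto (fun t : ℝ => (1 - t) * φ p + t * φ ((x₀, m₀ - b₀ - 1) : X × ℝ))
        (𝓝[>] 0) (𝓝 (φ p)) := by
      have hc : Continuous fun t : ℝ => (1 - t) * φ p + t * φ ((x₀, m₀ - b₀ - 1) : X × ℝ) := by
        fun_prop
      have := (hc.tendsto 0).mono_left (nhdsWithin_le_nhds (s := Set.Ioi (0:ℝ)))
      simpa using this
    refine le_of_tendsto htend ?_
    filter_upwards [Ioc_mem_nhdsGT_of_mem (Set.left_mem_Ico.mpr one_pos)] with t ht
    exact (hval t ht.1 ht.2).le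
  -- decompose φ as xs' + c * (second coordinate)
  set xs' : StrongDual ℝ X := φ.comp (ContinuousLinearMap.inl ℝ X ℝ) with hxs'
  set c : ℝ := φ ((0 : X), (1 : ℝ)) with hcdef
  have hφeq : ∀ (x : X) (lam : ℝ), φ (x, lam) = xs' x + lam * c := by
    intro x lam
    have hxy : ((x, lam) : X × ℝ) = ((x, (0:ℝ)) : X × ℝ) + lam • (((0:X), (1:ℝ)) : X × ℝ) := by
      simp [Prod.ext_iff]
    rw [hxy, map_add, map_smul, smul_eq_mul]
    rfl
  have hCmem : ∀ (x : X) (a : ℝ), f x ≤ (a : EReal) → u ≤ xs' x + a * c := by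
    intro x a hxa
    have := hφC ((x, a) : X × ℝ) hxa
    rwa [hφeq] at this
  have hwlt : xs' x₀ + (m₀ - b₀ - 1) * c < u := by
    have := hφB _ hw
    rwa [hφeq] at this
  have hux₀ : u ≤ xs' x₀ + a₀ * c := hCmem x₀ a₀ (le_of_eq ha₀)
  have hm₀ab : m₀ ≤ a₀ + b₀ := by exact_mod_cast hm₀ ▸ hmle
  have hcpos : 0 < c := by nlinarith
  have hci : c * c⁻¹ = 1 := mul_inv_cancel₀ hcpos.ne'
  set xs : StrongDual ℝ X := (-(c⁻¹)) • xs' with hxsdef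
  have hxsapp : ∀ x : X, xs x = -(c⁻¹) * xs' x := by
    intro x; rw [hxsdef]; simp [smul_eq_mul]
  -- bound on fconj f xs
  have hfb : fconj f xs ≤ ((-(u/c) : ℝ) : EReal) := by
    apply iSup_le; intro x
    by_cases hfx : f x = ⊤
    · rw [hfx, EReal.sub_top]; exact bot_le
    obtain ⟨a, ha⟩ : ∃ r : ℝ, f x = (r : EReal) := ⟨_, (EReal.coe_toReal hfx (hpf.2 x)).symm⟩
    have hu := hCmem x a (le_of_eq ha)
    have hreal : xs x - a ≤ -(u/c) := by
      rw [hxsapp]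
      have h2 := mul_le_mul_of_nonneg_right hu (inv_nonneg.mpr hcpos.le)
      have h3 : (xs' x + a * c) * c⁻¹ = c⁻¹ * xs' x + a := by
        field_simp
      rw [h3] at h2
      rw [div_eq_mul_inv]
      linarith
    rw [ha]
    exact_mod_cast hreal
  -- bound on fconj g (-xs)
  have hgb : fconj g (-xs) ≤ ((u/c - m₀ : ℝ) : EReal) := by
    apply iSup_le; intro y
    by_cases hgy : g y = ⊤
    · rw [hgy, EReal.sub_top]; exact bot_le
    obtain ⟨b, hb⟩ : ∃ r : ℝ, g y = (r : EReal) := ⟨_, (EReal.coe_toReal hgy (hpg.2 y)).symm⟩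
    have key : ∀ μ : ℝ, μ < m₀ - b → xs' y + μ * c ≤ u := by
      intro μ hμ
      have hmem : ((y, μ) : X × ℝ) ∈ B := by
        simp only [hB, Set.mem_setOf_eq, hb]
        exact_mod_cast (by linarith : b + μ < m₀)
      have := hBle _ hmem
      rwa [hφeq] at this
    have key2 : m₀ - b ≤ (u - xs' y) / c := by
      by_contra hk
      push_neg at hk
      have hμ := key (((u - xs' y) / c + (m₀ - b)) / 2) (by linarith)
      have hKc : (u - xs' y) / c * c = u - xs' y := div_mul_cancel₀ _ hcpos.ne'
      have hlt := mul_lt_mul_of_pos_right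
        (show (u - xs' y) / c < ((u - xs' y) / c + (m₀ - b)) / 2 by linarith) hcpos
      linarith
    have hreal : (-xs) y - b ≤ u/c - m₀ := by
      have hxy : (-xs) y = c⁻¹ * xs' y := by
        rw [ContinuousLinearMap.neg_apply, hxsapp]; ring
      rw [hxy]
      have h4 : (m₀ - b) * c ≤ u - xs' y := by
        have := mul_le_mul_of_nonneg_right key2 hcpos.le
        rwa [div_mul_cancel₀ _ hcpos.ne'] at this
      have h5 := mul_le_mul_of_nonneg_right h4 (inv_nonneg.mpr hcpos.le)
      have h6 : (m₀ - b) * c * c⁻¹ = m₀ - b := by field_simp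
      have h7 : (u - xs' y) * c⁻¹ = u * c⁻¹ - c⁻¹ * xs' y := by ring
      rw [h6, h7] at h5
      rw [div_eq_mul_inv]
      linarith
    rw [hb]
    exact_mod_cast hreal
  -- fconj values are not ⊥
  have hfnb : fconj f xs ≠ ⊥ := by
    have hle : ((xs x₀ - a₀ : ℝ) : EReal) ≤ fconj f xs := by
      have := le_iSup (fun x => ((xs x : ℝ) : EReal) - f x) x₀
      rw [ha₀] at this
      exact_mod_cast this
    intro h; rw [h, le_bot_iff] at hle; exact EReal.coe_ne_bot _ hle
  have hgnb : fconj g (-xs) ≠ ⊥ := by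
    have hle : (((-xs) x₀ - b₀ : ℝ) : EReal) ≤ fconj g (-xs) := by
      have := le_iSup (fun x => (((-xs) x : ℝ) : EReal) - g x) x₀
      rw [hb₀] at this
      exact_mod_cast this
    intro h; rw [h, le_bot_iff] at hle; exact EReal.coe_ne_bot _ hle
  obtain ⟨A, hA⟩ : ∃ r : ℝ, fconj f xs = (r : EReal) :=
    ⟨_, (EReal.coe_toReal (fun h => by rw [h, top_le_iff] at hfb; exact EReal.coe_ne_top _ hfb) hfnb).symm⟩
  obtain ⟨G, hG⟩ : ∃ r : ℝ, fconj g (-xs) = (r : EReal) :=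
    ⟨_, (EReal.coe_toReal (fun h => by rw [h, top_le_iff] at hgb; exact EReal.coe_ne_top _ hgb) hgnb).symm⟩
  have hA' : A ≤ -(u/c) := by rw [hA] at hfb; exact_mod_cast hfb
  have hG' : G ≤ u/c - m₀ := by rw [hG] at hgb; exact_mod_cast hgb
  have heq : m = -fconj f xs - fconj g (-xs) := by
    refine le_antisymm ?_ (weak xs)
    rw [hm₀, hA, hG]
    have : ((m₀ : ℝ) : EReal) ≤ ((-A - G : ℝ) : EReal) := by exact_mod_cast (by linarith : m₀ ≤ -A - G)
    calc ((m₀ : ℝ) : EReal) ≤ ((-A - G : ℝ) : EReal) := this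
      _ = -((A : ℝ) : EReal) - ((G : ℝ) : EReal) := by norm_cast
  exact ⟨xs, heq, fun ys => (weak ys).trans_eq heq⟩
end
end

section
/- Let X be a real Banach space and T : X** ⇉ X* a maximal monotone operator (in X** × X*). Then the generalized conjugation J_* maps the Fitzpatrick family of ΛT into itself: for every h ∈ F_{ΛT}, the function (x*, x**) ↦ h*(x**, x*) also belongs to F_{ΛT}, where Λ(x**, x*) = (x*, x**). -/
open Filter Topology NormedSpace

noncomputable section

variable {X : Type*} [NormedAddCommGroup X] [NormedSpace ℝ X]

/-- Monotonicity of an operator from the bidual to the dual, viewed as its graph. -/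
def IsMonotoneBid (S : Set (StrongDual ℝ (StrongDual ℝ X) × StrongDual ℝ X)) : Prop :=
  ∀ p ∈ S, ∀ q ∈ S, 0 ≤ (p.1 - q.1) (p.2 - q.2)

/-- Maximal monotonicity in the bidual-times-dual product. -/
def IsMaxMonotoneBid (S : Set (StrongDual ℝ (StrongDual ℝ X) × StrongDual ℝ X)) : Prop :=
  IsMonotoneBid S ∧
    ∀ S' : Set (StrongDual ℝ (StrongDual ℝ X) × StrongDual ℝ X), IsMonotoneBid S' → S ⊆ S' → S' = S

/-- Membership in the Fitzpatrick family of a (swapped) set `S ⊆ X* × X**`. -/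
def InFitzFamSwap (S : Set (StrongDual ℝ X × StrongDual ℝ (StrongDual ℝ X)))
    (h : StrongDual ℝ X × StrongDual ℝ (StrongDual ℝ X) → EReal) : Prop :=
  ConvexFn h ∧ LowerSemicontinuous h ∧
    (∀ p : StrongDual ℝ X × StrongDual ℝ (StrongDual ℝ X), ((p.2 p.1 : ℝ) : EReal) ≤ h p) ∧
    ∀ p ∈ S, h p = ((p.2 p.1 : ℝ) : EReal)

/-- The generalized conjugation `J_*`: for `h : X* × X** → EReal`,
`J_* h (x*, x**) = h*(x**, ι(x*))` where `ι : X* → X***` is the canonical embedding,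
i.e. the restriction of the Fenchel conjugate of `h` to `X** × X*`. -/
def Jstar (h : StrongDual ℝ X × StrongDual ℝ (StrongDual ℝ X) → EReal) :
    StrongDual ℝ X × StrongDual ℝ (StrongDual ℝ X) → EReal :=
  fun p => ⨆ q : StrongDual ℝ X × StrongDual ℝ (StrongDual ℝ X),
    ((p.2 q.1 + q.2 p.1 : ℝ) : EReal) - h q

/-- Every member of the Fitzpatrick family lies above each affine minorant coming
from a point of the graph. -/
lemma fitz_affine_minorant {S : Set (StrongDual ℝ X × StrongDual ℝ (StrongDual ℝ X))}
    {h : StrongDual ℝ X × StrongDual ℝ (StrongDual ℝ X) → EReal} (hh : InFitzFamSwap S h)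
    {p : StrongDual ℝ X × StrongDual ℝ (StrongDual ℝ X)} (hp : p ∈ S) (q : StrongDual ℝ X × StrongDual ℝ (StrongDual ℝ X)) :
    ((p.2 q.1 + q.2 p.1 - p.2 p.1 : ℝ) : EReal) ≤ h q := by
  obtain ⟨hconv, _, hge, heq⟩ := hh
  rcases eq_or_ne (h q) ⊤ with ht | ht
  · simp [ht]
  · have hbot : h q ≠ ⊥ := by
      intro hb
      simpa [hb] using hge q
    have hv : ((h q).toReal : EReal) = h q := EReal.coe_toReal ht hbot
    set v : ℝ := (h q).toReal with hvdef
    set A : ℝ := p.2 q.1 with hA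
    set B : ℝ := q.2 p.1 with hB
    set P : ℝ := p.2 p.1 with hP
    set Q : ℝ := q.2 q.1 with hQ
    have hQv : Q ≤ v := by
      have := hge q
      rw [← hv] at this
      exact_mod_cast this
    have claim : ∀ t : ℝ, 0 < t → t ≤ 1 → (1 - t) * (A + B - P) + t * Q ≤ v := by
      intro t ht0 ht1
      have hconv' := hconv p q (1 - t) t (by linarith) (le_of_lt ht0) (by ring)
      have hhp : h p = ((P : ℝ) : EReal) := heq p hp
      have hrhs : ((1 - t : ℝ) : EReal) * h p + ((t : ℝ) : EReal) * h q
          = (((1 - t) * P + t * v : ℝ) : EReal) := by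
        rw [hhp, ← hv]
        push_cast
        ring
      have hz : (((1 - t) • p + t • q).2) (((1 - t) • p + t • q).1)
          = (1 - t) * ((1 - t) * P + t * A) + t * ((1 - t) * B + t * Q) := by
        simp [Prod.smul_fst, Prod.smul_snd, ContinuousLinearMap.add_apply,
          ContinuousLinearMap.smul_apply, map_add, map_smul, smul_eq_mul, hA, hB, hP, hQ]
        ring
      have hlow := hge ((1 - t) • p + t • q)
      rw [hz] at hlow
      have : (((1 - t) * ((1 - t) * P + t * A) + t * ((1 - t) * B + t * Q) : ℝ) : EReal)
          ≤ (((1 - t) * P + t * v : ℝ) : EReal) := le_trans hlow (by rw [← hrhs]; exact hconv')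
      have hreal : (1 - t) * ((1 - t) * P + t * A) + t * ((1 - t) * B + t * Q)
          ≤ (1 - t) * P + t * v := by exact_mod_cast this
      nlinarith [hreal, ht0]
    have hLv : A + B - P ≤ v := by
      rcases le_or_gt (A + B - P) Q with hLQ | hQL
      · have := claim 1 one_pos le_rfl
        linarith
      · refine le_of_forall_pos_le_add ?_
        intro ε hε
        set t : ℝ := min 1 (ε / (A + B - P - Q)) with htdef
        have hden : 0 < A + B - P - Q := by linarith
        have ht0 : 0 < t := lt_min one_pos (div_pos hε hden)
        have ht1 : t ≤ 1 := min_le_left _ _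
        have hc := claim t ht0 ht1
        have htle : t * (A + B - P - Q) ≤ ε := by
          have : t ≤ ε / (A + B - P - Q) := min_le_right _ _
          calc t * (A + B - P - Q) ≤ (ε / (A + B - P - Q)) * (A + B - P - Q) := by
                exact mul_le_mul_of_nonneg_right this (le_of_lt hden)
            _ = ε := by field_simp
        nlinarith
    rw [← hv]
    exact_mod_cast hLv

/-- The lower bound `J_* h ≥ π` everywhere, via maximal monotonicity. -/
lemma jstar_ge {T : Set (StrongDual ℝ (StrongDual ℝ X) × StrongDual ℝ X)} (hT : IsMaxMonotoneBid T)
    {h : StrongDual ℝ X × StrongDual ℝ (StrongDual ℝ X) → EReal} (hh : InFitzFamSwap (Prod.swap '' T) h)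
    (p : StrongDual ℝ X × StrongDual ℝ (StrongDual ℝ X)) :
    ((p.2 p.1 : ℝ) : EReal) ≤ Jstar h p := by
  have hkey : ∃ q ∈ Prod.swap '' T, (p.2 - q.2) (p.1 - q.1) ≤ 0 := by
    by_contra hc
    push_neg at hc
    -- then inserting (p.2, p.1) keeps monotonicity
    have hmono : IsMonotoneBid (insert (p.2, p.1) T) := by
      intro r hr s hs
      rcases hr with hr | hr <;> rcases hs with hs | hs
      · subst hr; subst hs; simp
      · subst hr
        have := hc (Prod.swap s) ⟨s, hs, rfl⟩
        simpa [Prod.swap] using le_of_lt this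
      · subst hs
        have := hc (Prod.swap r) ⟨r, hr, rfl⟩
        have h2 : (0 : ℝ) < (p.2 - r.1) (p.1 - r.2) := by simpa [Prod.swap] using this
        have h3 : (r.1 - p.2) (r.2 - p.1) = (p.2 - r.1) (p.1 - r.2) := by
          simp [ContinuousLinearMap.sub_apply, map_sub]; ring
        rw [h3]
        exact le_of_lt h2
      · exact hT.1 r hr s hs
    have heqT : insert (p.2, p.1) T = T := hT.2 _ hmono (Set.subset_insert _ _)
    have hpT : (p.2, p.1) ∈ T := heqT ▸ Set.mem_insert _ _
    have hpS : p ∈ Prod.swap '' T := ⟨(p.2, p.1), hpT, rfl⟩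
    have := hc p hpS
    simp at this
  obtain ⟨q, hqS, hq0⟩ := hkey
  have hhq : h q = ((q.2 q.1 : ℝ) : EReal) := hh.2.2.2 q hqS
  have hterm : ((p.2 q.1 + q.2 p.1 : ℝ) : EReal) - h q ≤ Jstar h p := by
    simp only [Jstar]
    exact le_iSup (fun q : StrongDual ℝ X × StrongDual ℝ (StrongDual ℝ X) =>
      ((p.2 q.1 + q.2 p.1 : ℝ) : EReal) - h q) q
  refine le_trans ?_ hterm
  rw [hhq, ← EReal.coe_sub]
  apply EReal.coe_le_coe_iff.2
  have hexp : (p.2 - q.2) (p.1 - q.1) = p.2 p.1 - p.2 q.1 - q.2 p.1 + q.2 q.1 := by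
    simp [ContinuousLinearMap.sub_apply, map_sub]; ring
  rw [hexp] at hq0
  linarith

theorem statement18 {X : Type*} [NormedAddCommGroup X] [NormedSpace ℝ X] [CompleteSpace X]
    (T : Set (StrongDual ℝ (StrongDual ℝ X) × StrongDual ℝ X)) (hT : IsMaxMonotoneBid T) :
    ∀ h, InFitzFamSwap (Prod.swap '' T) h → InFitzFamSwap (Prod.swap '' T) (Jstar h) := by
  intro h hh
  have hnotbot : ∀ q, h q ≠ ⊥ := by
    intro q hb
    simpa [hb] using hh.2.2.1 q
  refine ⟨?_, ?_, fun p => jstar_ge hT hh p, ?_⟩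
  · -- convexity
    intro x y a b ha hb hab
    apply iSup_le
    intro q
    rcases eq_or_ne (h q) ⊤ with ht | ht
    · simp [ht, EReal.sub_top]
    · have hv : ((h q).toReal : EReal) = h q := EReal.coe_toReal ht (hnotbot q)
      set v : ℝ := (h q).toReal with hvdef
      have hcomb : ((a • x + b • y).2 q.1 + q.2 (a • x + b • y).1 : ℝ)
          = a * (x.2 q.1 + q.2 x.1) + b * (y.2 q.1 + q.2 y.1) := by
        simp [Prod.smul_fst, Prod.smul_snd, ContinuousLinearMap.add_apply,
          ContinuousLinearMap.smul_apply, map_add, map_smul, smul_eq_mul]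
        ring
      rw [hcomb, ← hv]
      have hreal : (a * (x.2 q.1 + q.2 x.1) + b * (y.2 q.1 + q.2 y.1) - v : ℝ)
          = a * (x.2 q.1 + q.2 x.1 - v) + b * (y.2 q.1 + q.2 y.1 - v) := by
        linear_combination v * hab
      have hsplit : ((a * (x.2 q.1 + q.2 x.1) + b * (y.2 q.1 + q.2 y.1) : ℝ) : EReal)
          - ((v : ℝ) : EReal)
          = ((a : ℝ) : EReal) * (((x.2 q.1 + q.2 x.1 - v : ℝ)) : EReal)
            + ((b : ℝ) : EReal) * (((y.2 q.1 + q.2 y.1 - v : ℝ)) : EReal) := by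
        rw [← EReal.coe_sub, hreal, EReal.coe_add, EReal.coe_mul, EReal.coe_mul]
      rw [hsplit]
      apply add_le_add
      · apply mul_le_mul_of_nonneg_left _ (by exact_mod_cast ha : (0 : EReal) ≤ (a : ℝ))
        have : ((x.2 q.1 + q.2 x.1 - v : ℝ) : EReal)
            = ((x.2 q.1 + q.2 x.1 : ℝ) : EReal) - h q := by
          rw [← hv, ← EReal.coe_sub]
        rw [this]
        simp only [Jstar]
        exact le_iSup (fun q : StrongDual ℝ X × StrongDual ℝ (StrongDual ℝ X) =>
          ((x.2 q.1 + q.2 x.1 : ℝ) : EReal) - h q) q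
      · apply mul_le_mul_of_nonneg_left _ (by exact_mod_cast hb : (0 : EReal) ≤ (b : ℝ))
        have : ((y.2 q.1 + q.2 y.1 - v : ℝ) : EReal)
            = ((y.2 q.1 + q.2 y.1 : ℝ) : EReal) - h q := by
          rw [← hv, ← EReal.coe_sub]
        rw [this]
        simp only [Jstar]
        exact le_iSup (fun q : StrongDual ℝ X × StrongDual ℝ (StrongDual ℝ X) =>
          ((y.2 q.1 + q.2 y.1 : ℝ) : EReal) - h q) q
  · -- lower semicontinuity
    apply lowerSemicontinuous_iSup
    intro q
    rcases eq_or_ne (h q) ⊤ with ht | ht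
    · simp only [ht, EReal.sub_top]
      exact lowerSemicontinuous_const
    · have hv : ((h q).toReal : EReal) = h q := EReal.coe_toReal ht (hnotbot q)
      have hfun : (fun p : StrongDual ℝ X × StrongDual ℝ (StrongDual ℝ X) =>
          ((p.2 q.1 + q.2 p.1 : ℝ) : EReal) - h q)
          = fun p => ((p.2 q.1 + q.2 p.1 - (h q).toReal : ℝ) : EReal) := by
        funext p
        rw [EReal.coe_sub, hv]
      rw [hfun]
      apply Continuous.lowerSemicontinuous
      apply continuous_coe_real_ereal.comp
      apply Continuous.sub _ continuous_const
      apply Continuous.add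
      · exact (ContinuousLinearMap.apply ℝ ℝ q.1).continuous.comp continuous_snd
      · exact q.2.continuous.comp continuous_fst
  · -- equality on the graph
    intro p hp
    refine le_antisymm ?_ (jstar_ge hT hh p)
    apply iSup_le
    intro q
    rcases eq_or_ne (h q) ⊤ with ht | ht
    · simp [ht, EReal.sub_top]
    · have hv : ((h q).toReal : EReal) = h q := EReal.coe_toReal ht (hnotbot q)
      have hmin := fitz_affine_minorant hh hp q
      rw [← hv] at hmin ⊢
      rw [← EReal.coe_sub]
      apply EReal.coe_le_coe_iff.2
      have : (p.2 q.1 + q.2 p.1 - p.2 p.1 : ℝ) ≤ (h q).toReal := by exact_mod_cast hmin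
      linarith
end
end
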